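/- arXiv:2002.01670 — 4 statements merged into one kernel-verified Lean document; each statement's English description precedes it below -/
import Mathlib

section
/- In a quasi-median graph X, let x, y be vertices, let a geodesic from x to y cross the hyperplanes J₁, …, Jₙ in that order, and suppose Jᵢ and Jᵢ₊₁ are transverse for some 1 ≤ i ≤ n−1. Then there exists a geodesic from x to y crossing the hyperplanes in the order J₁, …, Jᵢ₋₁, Jᵢ₊₁, Jᵢ, Jᵢ₊₂, …, Jₙ. -/
namespace QM

variable {V : Type*}

/-- Triangle condition. -/
def TriangleCondition (X : SimpleGraph V) : Prop :=
  ∀ a x y : V, X.Adj x y → X.dist a x = X.dist a y →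
    ∃ z : V, X.Adj x z ∧ X.Adj y z ∧ X.dist a z + 1 = X.dist a x

/-- Quadrangle condition. -/
def QuadrangleCondition (X : SimpleGraph V) : Prop :=
  ∀ a x y z : V, X.Adj x z → X.Adj y z → x ≠ y →
    X.dist a x = X.dist a y → X.dist a x + 1 = X.dist a z →
    ∃ w : V, X.Adj x w ∧ X.Adj y w ∧ X.dist a w + 2 = X.dist a z

/-- No induced copy of K₄ minus an edge. -/
def NoK4Minus (X : SimpleGraph V) : Prop :=
  ¬ ∃ a b c d : V, X.Adj a b ∧ X.Adj a c ∧ X.Adj a d ∧ X.Adj b c ∧ X.Adj b d ∧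
      ¬ X.Adj c d ∧ c ≠ d

/-- No induced copy of K₃,₂. -/
def NoK32 (X : SimpleGraph V) : Prop :=
  ¬ ∃ a b c d e : V, a ≠ b ∧ b ≠ c ∧ a ≠ c ∧ d ≠ e ∧
      ¬ X.Adj a b ∧ ¬ X.Adj b c ∧ ¬ X.Adj a c ∧ ¬ X.Adj d e ∧
      X.Adj a d ∧ X.Adj a e ∧ X.Adj b d ∧ X.Adj b e ∧ X.Adj c d ∧ X.Adj c e

/-- Quasi-median graph. -/
def QuasiMedian (X : SimpleGraph V) : Prop :=
  X.Connected ∧ NoK4Minus X ∧ NoK32 X ∧ TriangleCondition X ∧ QuadrangleCondition X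

/-- Two edges lie in a common triangle or are opposite sides of a square. -/
def EdgeRel (X : SimpleGraph V) (e f : Sym2 V) : Prop :=
  (∃ a b c : V, X.Adj a b ∧ X.Adj b c ∧ X.Adj a c ∧
      e ∈ ({s(a, b), s(b, c), s(a, c)} : Set (Sym2 V)) ∧
      f ∈ ({s(a, b), s(b, c), s(a, c)} : Set (Sym2 V))) ∨
  (∃ a b c d : V, X.Adj a b ∧ X.Adj b c ∧ X.Adj c d ∧ X.Adj d a ∧ a ≠ c ∧ b ≠ d ∧
      ((e = s(a, b) ∧ f = s(d, c)) ∨ (f = s(a, b) ∧ e = s(d, c))))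

/-- Two edges are dual to the same hyperplane. -/
def SameHyp (X : SimpleGraph V) (e f : Sym2 V) : Prop :=
  Relation.EqvGen (EdgeRel X) e f

/-- Two edges sharing an endpoint span a square. -/
def SpanSquare (X : SimpleGraph V) (e f : Sym2 V) : Prop :=
  ∃ a b c d : V, X.Adj a b ∧ X.Adj a c ∧ X.Adj b d ∧ X.Adj c d ∧ b ≠ c ∧ a ≠ d ∧
    e = s(a, b) ∧ f = s(a, c)

/-- The hyperplanes dual to `e` and `f` are transverse. -/
def Transverse (X : SimpleGraph V) (e f : Sym2 V) : Prop :=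
  ∃ e' f' : Sym2 V, SameHyp X e e' ∧ SameHyp X f f' ∧ SpanSquare X e' f'

/-- `v` belongs to the carrier of the hyperplane dual to `e`. -/
def InCarrier (X : SimpleGraph V) (e : Sym2 V) (v : V) : Prop :=
  ∃ f : Sym2 V, SameHyp X e f ∧ f ∈ X.edgeSet ∧ v ∈ f

/-- The hyperplanes dual to `e` and `f` are tangent. -/
def Tangent (X : SimpleGraph V) (e f : Sym2 V) : Prop :=
  ¬ SameHyp X e f ∧ ¬ Transverse X e f ∧ ∃ v : V, InCarrier X e v ∧ InCarrier X f v

/-- The graph obtained from `X` by removing (the interiors of) all edges dual to the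
hyperplane of `e₀`; its connected components are the sectors delimited by this hyperplane. -/
def delGraph (X : SimpleGraph V) (e₀ : Sym2 V) : SimpleGraph V :=
  SimpleGraph.fromRel (fun a b => X.Adj a b ∧ ¬ SameHyp X s(a, b) e₀)


-- ============ basic helpers ============

section Basics

variable {X : SimpleGraph V} (hc : X.Connected)

lemma adj_dist_eq_one {a b : V} (h : X.Adj a b) : X.dist a b = 1 :=
  SimpleGraph.dist_eq_one_iff_adj.2 h

include hc in
lemma dist_le_adj_right {a b c : V} (h : X.Adj b c) : X.dist a c ≤ X.dist a b + 1 := by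
  have := hc.dist_triangle (u := a) (v := b) (w := c)
  simpa [adj_dist_eq_one h] using this

include hc in
lemma dist_lower_adj {a b c : V} (h : X.Adj b c) : X.dist a b ≤ X.dist a c + 1 :=
  dist_le_adj_right hc h.symm

include hc in
lemma exists_adj_dist_pred {a p : V} (h : X.dist a p ≠ 0) :
    ∃ p₁ : V, X.Adj p p₁ ∧ X.dist a p₁ + 1 = X.dist a p := by
  obtain ⟨w, hw⟩ := (hc a p).exists_walk_length_eq_dist
  cases hw' : w.reverse with
  | nil =>
      exfalso
      have : w.length = 0 := by
        have := congrArg SimpleGraph.Walk.length hw'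
        simpa using this
      exact h (by rw [← hw, this])
  | cons hadj w' =>
      rename_i b
      refine ⟨b, hadj, ?_⟩
      have hlen : w'.length + 1 = X.dist a p := by
        have := congrArg SimpleGraph.Walk.length hw'
        simp at this
        omega
      have h1 : X.dist b a ≤ w'.length := SimpleGraph.dist_le w'
      have h2 : X.dist a p ≤ X.dist a b + 1 := dist_le_adj_right hc hadj.symm
      have h3 : X.dist a b = X.dist b a := SimpleGraph.dist_comm
      omega

end Basics

-- ============ EdgeRel / SameHyp helpers ============

section Rels

variable {X : SimpleGraph V}

lemma edgeRel_symm {e f : Sym2 V} (h : EdgeRel X e f) : EdgeRel X f e := by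
  rcases h with ⟨a,b,c,h1,h2,h3,h4,h5⟩ | ⟨a,b,c,d,h1,h2,h3,h4,h5,h6,h7⟩
  · exact Or.inl ⟨a,b,c,h1,h2,h3,h5,h4⟩
  · exact Or.inr ⟨a,b,c,d,h1,h2,h3,h4,h5,h6,h7.symm⟩

lemma SameHyp.refl (e : Sym2 V) : SameHyp X e e := Relation.EqvGen.refl e

lemma SameHyp.symm {e f : Sym2 V} (h : SameHyp X e f) : SameHyp X f e :=
  Relation.EqvGen.symm _ _ h

lemma SameHyp.trans {e f g : Sym2 V} (h : SameHyp X e f) (h' : SameHyp X f g) :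
    SameHyp X e g := Relation.EqvGen.trans _ _ _ h h'

lemma SameHyp.of_rel {e f : Sym2 V} (h : EdgeRel X e f) : SameHyp X e f :=
  Relation.EqvGen.rel _ _ h

lemma edgeRel_tri {a b c : V} (hab : X.Adj a b) (hbc : X.Adj b c) (hac : X.Adj a c)
    {e f : Sym2 V} (he : e ∈ ({s(a, b), s(b, c), s(a, c)} : Set (Sym2 V)))
    (hf : f ∈ ({s(a, b), s(b, c), s(a, c)} : Set (Sym2 V))) : EdgeRel X e f :=
  Or.inl ⟨a, b, c, hab, hbc, hac, he, hf⟩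

/-- both edges at the apex `a` of a triangle `a b c` -/
lemma sameHyp_tri {a b c : V} (hab : X.Adj a b) (hbc : X.Adj b c) (hac : X.Adj a c) :
    SameHyp X s(a, b) s(a, c) :=
  SameHyp.of_rel (edgeRel_tri hab hbc hac (by left; rfl) (by right; right; rfl))

lemma edgeRel_square {a b c d : V} (hab : X.Adj a b) (hbc : X.Adj b c) (hcd : X.Adj c d)
    (hda : X.Adj d a) (hac : a ≠ c) (hbd : b ≠ d) : EdgeRel X s(a, b) s(d, c) :=
  Or.inr ⟨a, b, c, d, hab, hbc, hcd, hda, hac, hbd, Or.inl ⟨rfl, rfl⟩⟩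

-- ============ cliques and gates ============

def IsCliq (X : SimpleGraph V) (C : Set V) : Prop :=
  ∀ a ∈ C, ∀ b ∈ C, a ≠ b → X.Adj a b

def MaxCliq (X : SimpleGraph V) (C : Set V) : Prop :=
  IsCliq X C ∧ ∀ D : Set V, IsCliq X D → C ⊆ D → D ⊆ C

lemma exists_maxCliq {v w : V} (h : X.Adj v w) :
    ∃ C : Set V, MaxCliq X C ∧ v ∈ C ∧ w ∈ C := by
  obtain ⟨M, hsub, hmax⟩ := zorn_subset_nonempty {C : Set V | IsCliq X C}
    (fun c hc hchain hne => by
      refine ⟨⋃₀ c, ?_, fun s hs => Set.subset_sUnion_of_mem hs⟩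
      intro a ha b hb hne'
      obtain ⟨s, hs, has⟩ := ha
      obtain ⟨t, ht, hbt⟩ := hb
      rcases hchain.total hs ht with hst | hts
      · exact hc ht a (hst has) b hbt hne'
      · exact hc hs a has b (hts hbt) hne')
    {v, w} (by
      intro a ha b hb hne'
      rcases ha with rfl | ha <;> rcases hb with rfl | hb
      · exact absurd rfl hne'
      · cases hb; exact h
      · cases ha; exact h.symm
      · cases ha; cases hb; exact absurd rfl hne')
  refine ⟨M, ⟨hmax.1, fun D hD hMD => hmax.2 hD hMD⟩, hsub (by left; rfl), hsub (by right; rfl)⟩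

/-- all edges of a clique are dual to the same hyperplane -/
lemma sameHyp_cliq_edges {C : Set V} (hC : IsCliq X C) {a b a' b' : V}
    (ha : a ∈ C) (hb : b ∈ C) (ha' : a' ∈ C) (hb' : b' ∈ C)
    (hab : a ≠ b) (hab' : a' ≠ b') : SameHyp X s(a, b) s(a', b') := by
  have step : ∀ x ∈ C, ∀ y ∈ C, ∀ z ∈ C, x ≠ y → x ≠ z →
      SameHyp X s(x, y) s(x, z) := by
    intro x hx y hy z hz hxy hxz
    by_cases hyz : y = z
    · subst hyz; exact SameHyp.refl _
    · exact sameHyp_tri (hC x hx y hy hxy) (hC y hy z hz hyz) (hC x hx z hz hxz)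
  by_cases h1 : a' = a
  · rw [h1]
    exact step a ha b hb b' hb' hab (h1 ▸ hab')
  · by_cases h2 : a' = b
    · rw [h2, Sym2.eq_swap (a := a) (b := b)]
      exact step b hb a ha b' hb' (Ne.symm hab) (h2 ▸ hab')
    · -- a' ∉ {a, b}
      have s1 : SameHyp X s(a, b) s(a, a') := step a ha b hb a' ha' hab (fun h => h1 h.symm)
      by_cases h3 : b' = a
      · have : s(a', b') = s(a, a') := by rw [Sym2.eq_swap, h3]
        rw [this]; exact s1
      · have s2 : SameHyp X s(a', a) s(a', b') :=
          step a' ha' a ha b' hb' h1 hab'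
        rw [Sym2.eq_swap (a := a') (b := a)] at s2
        exact s1.trans s2

def IsGate (X : SimpleGraph V) (C : Set V) (x g : V) : Prop :=
  g ∈ C ∧ ∀ y ∈ C, y ≠ g → X.dist x y = X.dist x g + 1

lemma isGate_unique {C : Set V} {x g g' : V} (h : IsGate X C x g) (h' : IsGate X C x g') :
    g = g' := by
  by_contra hne
  have e1 := h.2 g' h'.1 (fun hh => hne hh.symm)
  have e2 := h'.2 g h.1 hne
  omega

lemma isGate_self {C : Set V} (hC : IsCliq X C) {x : V} (hx : x ∈ C) : IsGate X C x x := by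
  refine ⟨hx, fun y hy hne => ?_⟩
  have h1 := adj_dist_eq_one (hC x hx y hy (fun h => hne h.symm))
  rw [SimpleGraph.dist_self, h1]

lemma gate_exists (hc : X.Connected) (tc : TriangleCondition X) (k4 : NoK4Minus X)
    {C : Set V} (hC : MaxCliq X C) (hne : C.Nonempty) (x : V) :
    ∃ g : V, IsGate X C x g := by
  classical
  set S : Set ℕ := (fun c => X.dist x c) '' C with hS
  have hSne : S.Nonempty := hne.image _
  obtain ⟨g, hgC, hgD'⟩ := Nat.sInf_mem hSne
  have hgD : X.dist x g = sInf S := hgD'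
  refine ⟨g, hgC, fun y hy hyg => ?_⟩
  have hadjgy : X.Adj g y := hC.1 g hgC y hy (fun h => hyg h.symm)
  have hup : X.dist x y ≤ X.dist x g + 1 := dist_le_adj_right hc hadjgy
  have hlow : sInf S ≤ X.dist x y := Nat.sInf_le ⟨y, hy, rfl⟩
  rw [hgD] at hup ⊢
  rcases Nat.lt_or_ge (X.dist x y) (sInf S + 1) with hlt | hge
  · exfalso
    have heq : X.dist x y = sInf S := by omega
    -- two closest points: contradiction
    rcases Nat.eq_zero_or_pos (sInf S) with h0 | hpos
    · have h1 : x = g := hc.dist_eq_zero_iff.mp (by rw [hgD, h0])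
      have h2 : x = y := hc.dist_eq_zero_iff.mp (by rw [heq, h0])
      exact hyg (h2 ▸ h1 ▸ rfl)
    · obtain ⟨z, hgz, hyz, hzd⟩ := tc x g y hadjgy (by rw [hgD, heq])
      rw [hgD] at hzd
      have hzC : z ∉ C := by
        intro hzC
        have : sInf S ≤ X.dist x z := Nat.sInf_le ⟨z, hzC, rfl⟩
        omega
      have hzadj : ∀ c' ∈ C, X.Adj z c' := by
        intro c' hc'
        by_cases h1 : c' = g
        · exact h1 ▸ hgz.symm
        by_cases h2 : c' = y
        · exact h2 ▸ hyz.symm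
        by_contra hna
        exact k4 ⟨g, y, z, c', hadjgy, hgz, hC.1 g hgC c' hc' (fun h => h1 h.symm),
          hyz, hC.1 y hy c' hc' (fun h => h2 h.symm), hna,
          fun h => hzC (h ▸ hc')⟩
      have : IsCliq X (C ∪ {z}) := by
        intro a ha b hb hab
        rcases ha with ha | ha <;> rcases hb with hb | hb
        · exact hC.1 a ha b hb hab
        · cases hb; exact (hzadj a ha).symm
        · cases ha; exact hzadj b hb
        · cases ha; cases hb; exact absurd rfl hab
      exact hzC (hC.2 _ this Set.subset_union_left (Or.inr rfl))
  · omega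

end Rels

-- ============ gate geometry ============

section Gates

set_option linter.unusedSectionVars false

variable {X : SimpleGraph V} (hc : X.Connected) (tc : TriangleCondition X)
  (qc : QuadrangleCondition X) (k4 : NoK4Minus X) (k32 : NoK32 X)
  {C : Set V} {τ : V → V} (hg : ∀ x, IsGate X C x (τ x))

include hc in
lemma dist_adj_le {p q : V} (h : X.Adj p q) (r : V) : X.dist q r ≤ X.dist p r + 1 := by
  rw [SimpleGraph.dist_comm, SimpleGraph.dist_comm (u := p)]
  exact dist_le_adj_right hc h

include hc hg in
/-- equal levels across an edge whose endpoints have distinct gates -/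
lemma gate_EL {p q : V} (hpq : X.Adj p q) (hne : τ p ≠ τ q) :
    X.dist q (τ q) = X.dist p (τ p) ∧ X.dist p (τ q) = X.dist p (τ p) + 1 ∧
      X.dist q (τ p) = X.dist p (τ p) + 1 := by
  have d1 : X.dist p (τ q) = X.dist p (τ p) + 1 := (hg p).2 (τ q) (hg q).1 (Ne.symm hne)
  have d2 : X.dist q (τ p) = X.dist q (τ q) + 1 := (hg q).2 (τ p) (hg p).1 hne
  have b1 : X.dist q (τ p) ≤ X.dist p (τ p) + 1 := dist_adj_le hc hpq (τ p)
  have b2 : X.dist p (τ q) ≤ X.dist q (τ q) + 1 := dist_adj_le hc hpq.symm (τ q)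
  omega

include hc qc k4 hg in
/-- no triangle has exactly two vertices with the same gate -/
lemma gate_tri {x y z : V} (hxy : X.Adj x y) (hxz : X.Adj x z) (hyz : X.Adj y z)
    (heq : τ x = τ y) (hne : τ x ≠ τ z) : False := by
  obtain ⟨e1, e2, e3⟩ := gate_EL hc hg hxz hne
  have hyne : τ y ≠ τ z := heq ▸ hne
  obtain ⟨f1, f2, f3⟩ := gate_EL hc hg hyz hyne
  -- levels
  set n := X.dist z (τ z) with hn
  have hx : X.dist x (τ x) = n := by omega
  have hy : X.dist y (τ y) = n := by
    have := f1; omega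
  rcases Nat.eq_zero_or_pos n with h0 | hpos
  · have hxg : x = τ x := (hc.dist_eq_zero_iff).mp (by omega)
    have hyg : y = τ y := (hc.dist_eq_zero_iff).mp (by omega)
    exact hxy.ne (by rw [hxg, hyg, heq])
  · have hytx : X.dist y (τ x) = n := by rw [heq]; omega
    obtain ⟨w, hxw, hyw, hwd⟩ := qc (τ x) x y z hxz hyz hxy.ne
      (by rw [SimpleGraph.dist_comm (u := τ x) (v := x),
          SimpleGraph.dist_comm (u := τ x) (v := y)]; omega)
      (by rw [SimpleGraph.dist_comm (u := τ x) (v := x),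
          SimpleGraph.dist_comm (u := τ x) (v := z)]; omega)
    have hdz : X.dist (τ x) z = n + 1 := by rw [SimpleGraph.dist_comm]; omega
    have hdw : X.dist (τ x) w + 2 = n + 1 := by omega
    have hzw : z ≠ w := by
      intro h; rw [h] at hdz; omega
    have hadj : X.Adj z w := by
      by_contra hna
      exact k4 ⟨x, y, z, w, hxy, hxz, hxw, hyz, hyw, hna, hzw⟩
    have := dist_adj_le hc hadj.symm (τ x)
    rw [SimpleGraph.dist_comm (u := w), SimpleGraph.dist_comm (u := z)] at this
    omega

include hc tc qc k4 k32 hg in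
/-- no square with three vertices sharing a gate and the fourth with a different one -/
lemma gate_caseB {p q r s : V} (hpq : X.Adj p q) (hqr : X.Adj q r) (hrs : X.Adj r s)
    (hsp : X.Adj s p) (hpr : p ≠ r) (hqs : q ≠ s)
    (h1 : τ p ≠ τ q) (h2 : τ r = τ q) (h3 : τ s = τ q) : False := by
  obtain ⟨e1, e2, e3⟩ := gate_EL hc hg hpq h1
  have hsne : τ p ≠ τ s := h3 ▸ h1
  obtain ⟨f1, f2, f3⟩ := gate_EL hc hg hsp.symm hsne
  set k := X.dist p (τ p) with hk
  -- s has level k over τ q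
  have hsl : X.dist s (τ q) = k := by rw [← h3]; omega
  have hsa : X.dist s (τ p) = k + 1 := by omega
  have hql : X.dist q (τ q) = k := by omega
  have hqa : X.dist q (τ p) = k + 1 := by omega
  have hpb : X.dist p (τ q) = k + 1 := by omega
  have hrl' : X.dist r (τ p) = X.dist r (τ q) + 1 := by
    have hne' : τ p ≠ τ r := by rw [h2]; exact h1
    have := (hg r).2 (τ p) (hg p).1 hne'
    rwa [h2] at this
  rcases Nat.eq_zero_or_pos k with h0 | hpos
  · -- k = 0 : q = τ q = s, contradiction
    have hq0 : q = τ q := (hc.dist_eq_zero_iff).mp (by omega)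
    have hs0 : s = τ q := (hc.dist_eq_zero_iff).mp (by omega)
    exact hqs (hq0.trans hs0.symm)
  have hnqs : ¬ X.Adj q s := fun h =>
    gate_tri hc qc k4 hg h hpq.symm hsp h3.symm (Ne.symm h1)
  by_cases hl : X.dist r (τ q) + 1 = k
  · -- low case : use basepoint τ p and K32 on (q, s, w ; p, r)
    have hnpr : ¬ X.Adj p r := fun h =>
      gate_tri hc qc k4 hg hrs h.symm hsp (h2.trans h3.symm) (by rw [h2]; exact Ne.symm h1)
    obtain ⟨w, hpw, hrw, hwd⟩ := qc (τ p) p r q (hpq) (hqr.symm) hpr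
      (by rw [SimpleGraph.dist_comm (u := τ p) (v := p),
          SimpleGraph.dist_comm (u := τ p) (v := r)]; omega)
      (by rw [SimpleGraph.dist_comm (u := τ p) (v := p),
          SimpleGraph.dist_comm (u := τ p) (v := q)]; omega)
    have hwd' : X.dist w (τ p) + 2 = k + 1 := by
      rw [SimpleGraph.dist_comm (u := w)]
      rw [SimpleGraph.dist_comm (u := τ p) (v := q)] at hwd
      omega
    have hτw : τ w = τ p := by
      by_contra hne'
      have := (gate_EL hc hg hpw (fun hh => hne' hh.symm)).2.2
      omega
    have hqw : q ≠ w := by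
      intro h; rw [← h] at hwd'; omega
    have hsw : s ≠ w := by
      intro h; rw [← h] at hwd'; omega
    have hnqw : ¬ X.Adj q w := fun h =>
      gate_tri hc qc k4 hg hpw.symm h.symm hpq hτw (by rw [hτw]; exact h1)
    have hnsw : ¬ X.Adj s w := fun h =>
      gate_tri hc qc k4 hg hpw.symm h.symm hsp.symm hτw (by rw [hτw]; exact hsne)
    exact k32 ⟨q, s, w, p, r, hqs, hsw, hqw, hpr, hnqs, hnsw, hnqw, hnpr,
      hpq.symm, hqr, hsp, hrs.symm, hpw.symm, hrw.symm⟩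
  · -- generic case : use basepoint τ q and K32 on (p, r, t ; q, s)
    obtain ⟨t, hqt, hst, htd⟩ := qc (τ q) q s p hpq.symm hsp hqs
      (by rw [SimpleGraph.dist_comm (u := τ q) (v := q),
          SimpleGraph.dist_comm (u := τ q) (v := s)]; omega)
      (by rw [SimpleGraph.dist_comm (u := τ q) (v := q),
          SimpleGraph.dist_comm (u := τ q) (v := p)]; omega)
    have htd' : X.dist t (τ q) + 2 = k + 1 := by
      rw [SimpleGraph.dist_comm (u := t)]
      rw [SimpleGraph.dist_comm (u := τ q) (v := p)] at htd
      omega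
    have htr : t ≠ r := by
      intro h; rw [h] at htd'; omega
    have htp : t ≠ p := by
      intro h; rw [h] at htd'; omega
    have hnpr : ¬ X.Adj p r := fun h =>
      k4 ⟨p, r, q, s, h, hpq, hsp.symm, hqr.symm, hrs, hnqs, hqs⟩
    have hnpt : ¬ X.Adj p t := fun h =>
      k4 ⟨p, t, q, s, h, hpq, hsp.symm, hqt.symm, hst.symm, hnqs, hqs⟩
    have hnrt : ¬ X.Adj r t := fun h =>
      k4 ⟨r, t, q, s, h, hqr.symm, hrs, hqt.symm, hst.symm, hnqs, hqs⟩
    exact k32 ⟨p, r, t, q, s, hpr, Ne.symm htr, Ne.symm htp, hqs,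
      hnpr, hnrt, hnpt, hnqs,
      hpq, hsp.symm, hqr.symm, hrs, hqt.symm, hst.symm⟩

include hc tc qc k4 k32 hg in
/-- the gate-difference of the sides propagates to opposite sides of squares -/
lemma gate_sq {p q r s : V} (hpq : X.Adj p q) (hqr : X.Adj q r) (hrs : X.Adj r s)
    (hsp : X.Adj s p) (hpr : p ≠ r) (hqs : q ≠ s) (h1 : τ p ≠ τ q) : τ s ≠ τ r := by
  intro hsr
  by_cases hcq : τ s = τ q
  · exact gate_caseB hc tc qc k4 k32 hg hpq hqr hrs hsp hpr hqs h1 (hsr ▸ hcq) hcq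
  by_cases hcp : τ s = τ p
  · exact gate_caseB hc tc qc k4 k32 hg hpq.symm hsp.symm hrs.symm hqr.symm hqs hpr
      (Ne.symm h1) hcp (hsr.symm.trans hcp)
  -- generic color : reduce to caseB via a new square
  obtain ⟨e1, e2, e3⟩ := gate_EL hc hg hpq h1
  have hspne : τ s ≠ τ p := hcp
  obtain ⟨f1, f2, f3⟩ := gate_EL hc hg hsp hspne
  have hrqne : τ r ≠ τ q := hsr ▸ hcq
  obtain ⟨g1, g2, g3⟩ := gate_EL hc hg hqr.symm hrqne
  set k := X.dist p (τ p) with hk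
  have hrl : X.dist r (τ s) = k := by rw [hsr]; omega
  have hql : X.dist q (τ s) = k + 1 := by rw [hsr]; omega
  rcases Nat.eq_zero_or_pos k with h0 | hpos
  · have hs0 : s = τ s := (hc.dist_eq_zero_iff).mp (by omega)
    have hr0 : r = τ r := (hc.dist_eq_zero_iff).mp (by omega)
    exact hrs.ne (hr0.trans (hsr.symm.trans hs0.symm))
  obtain ⟨z, hpz, hqz, hzd⟩ := tc (τ s) p q hpq
    (by rw [SimpleGraph.dist_comm (u := τ s) (v := p),
        SimpleGraph.dist_comm (u := τ s) (v := q)]; omega)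
  have hzl : X.dist z (τ s) = k := by
    rw [SimpleGraph.dist_comm (u := τ s) (v := p)] at hzd
    rw [SimpleGraph.dist_comm (u := z)]
    omega
  have hτz : τ z = τ s := by
    by_contra hzne
    by_cases hzp : τ z = τ p
    · have el := gate_EL hc hg hqz (by rw [hzp]; exact Ne.symm h1)
      have := (hg z).2 (τ s) (hg s).1 (fun hh => hzne hh.symm)
      omega
    · have el' := gate_EL hc hg hpz (fun hh => hzp hh.symm)
      have := (hg z).2 (τ s) (hg s).1 (fun hh => hzne hh.symm)
      omega
  have hzs : z ≠ s := by
    intro h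
    exact gate_tri hc qc k4 hg hrs hqr.symm (h ▸ hqz).symm hsr.symm hrqne
  have hnzs : ¬ X.Adj z s := by
    intro h
    exact gate_tri hc qc k4 hg h hpz.symm hsp hτz (by rw [hτz]; exact hcp)
  obtain ⟨w, hsw, hzw, hwd⟩ := qc (τ s) s z p hsp hpz.symm (Ne.symm hzs)
    (by rw [SimpleGraph.dist_comm (u := τ s) (v := s),
        SimpleGraph.dist_comm (u := τ s) (v := z)]; omega)
    (by rw [SimpleGraph.dist_comm (u := τ s) (v := s),
        SimpleGraph.dist_comm (u := τ s) (v := p)]; omega)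
  have hwl : X.dist w (τ s) + 2 = k + 1 := by
    rw [SimpleGraph.dist_comm (u := τ s) (v := p)] at hwd
    rw [SimpleGraph.dist_comm (u := w)]
    omega
  have hτw : τ w = τ s := by
    by_contra hwne
    have el := gate_EL hc hg hsw (fun hh => hwne hh.symm)
    omega
  have hpw : p ≠ w := by
    intro h; rw [h] at f3; omega
  exact gate_caseB hc tc qc k4 k32 hg hpz hzw hsw.symm hsp hpw hzs
    (by rw [hτz]; exact Ne.symm hcp) (hτw.trans hτz.symm) hτz.symm

/-- the set of edges whose endpoints have distinct gates in `C` -/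
def GateCut (X : SimpleGraph V) (τ : V → V) (e : Sym2 V) : Prop :=
  ∃ p q : V, e = s(p, q) ∧ X.Adj p q ∧ τ p ≠ τ q

lemma gateCut_mk {p q : V} :
    GateCut X τ s(p, q) ↔ X.Adj p q ∧ τ p ≠ τ q := by
  constructor
  · rintro ⟨a, b, heq, hadj, hne⟩
    rcases Sym2.eq_iff.mp heq with ⟨rfl, rfl⟩ | ⟨rfl, rfl⟩
    · exact ⟨hadj, hne⟩
    · exact ⟨hadj.symm, hne.symm⟩
  · rintro ⟨hadj, hne⟩
    exact ⟨p, q, rfl, hadj, hne⟩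

include hc tc qc k4 k32 hg in
lemma gateCut_of_rel {e f : Sym2 V} (hrel : EdgeRel X e f) (he : GateCut X τ e) :
    GateCut X τ f := by
  rcases hrel with ⟨a, b, c', hab, hbc, hac, hee, hff⟩ | ⟨a, b, c', d, hab, hbc, hcd, hda, hac, hbd, hor⟩
  · -- triangle : if one pair of gates differs, all differ
    have tri3 : ∀ x y z : V, X.Adj x y → X.Adj y z → X.Adj x z → τ x ≠ τ y →
        τ y ≠ τ z ∧ τ x ≠ τ z := by
      intro x y z hxy hyz hxz hne
      constructor
      · intro hh
        exact gate_tri hc qc k4 hg hyz hxy.symm hxz.symm hh (Ne.symm hne)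
      · intro hh
        exact gate_tri hc qc k4 hg hxz hxy hyz.symm hh hne
    have hall : τ a ≠ τ b ∧ τ b ≠ τ c' ∧ τ a ≠ τ c' := by
      have key : τ a ≠ τ b ∨ τ b ≠ τ c' ∨ τ a ≠ τ c' := by
        rcases hee with h | h | h <;> rw [h] at he <;>
          rcases gateCut_mk.mp he with ⟨_, hne⟩
        · exact Or.inl hne
        · exact Or.inr (Or.inl hne)
        · exact Or.inr (Or.inr hne)
      rcases key with h | h | h
      · exact ⟨h, tri3 a b c' hab hbc hac h⟩
      · obtain ⟨x1, x2⟩ := tri3 b c' a hbc hac.symm hab.symm h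
        exact ⟨Ne.symm x2, h, Ne.symm x1⟩
      · obtain ⟨x1, x2⟩ := tri3 a c' b hac hbc.symm hab h
        exact ⟨x2, Ne.symm x1, h⟩
    rcases hff with h | h | h <;> rw [h]
    · exact gateCut_mk.mpr ⟨hab, hall.1⟩
    · exact gateCut_mk.mpr ⟨hbc, hall.2.1⟩
    · exact gateCut_mk.mpr ⟨hac, hall.2.2⟩
  · rcases hor with ⟨rfl, rfl⟩ | ⟨rfl, rfl⟩
    · rcases gateCut_mk.mp he with ⟨_, hne⟩
      exact gateCut_mk.mpr ⟨hcd.symm,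
        gate_sq hc tc qc k4 k32 hg hab hbc hcd hda hac hbd hne⟩
    · rcases gateCut_mk.mp he with ⟨_, hne⟩
      exact gateCut_mk.mpr ⟨hab,
        gate_sq hc tc qc k4 k32 hg hcd.symm hbc.symm hab.symm hda.symm hbd.symm hac.symm hne⟩

include hc tc qc k4 k32 hg in
lemma gateCut_iff_of_sameHyp {e f : Sym2 V} (h : SameHyp X e f) :
    GateCut X τ e ↔ GateCut X τ f := by
  induction h with
  | rel _ _ hrel => exact ⟨gateCut_of_rel hc tc qc k4 k32 hg hrel,
      gateCut_of_rel hc tc qc k4 k32 hg (edgeRel_symm hrel)⟩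
  | refl _ => exact Iff.rfl
  | symm _ _ _ ih => exact ih.symm
  | trans _ _ _ _ _ ih1 ih2 => exact ih1.trans ih2

include hc qc in
/-- the ladder lemma : an edge with distinct gates is dual to the same hyperplane as
the corresponding clique edge -/
lemma ladder : ∀ (k : ℕ) {p q a b : V}, X.Adj p q → X.Adj a b →
    X.dist p a = k → X.dist q b = k → X.dist p b = k + 1 → X.dist q a = k + 1 →
    SameHyp X s(p, q) s(a, b) := by
  intro k
  induction k with
  | zero =>
      intro p q a b hpq hab dpa dqb dpb dqa
      have h1 : p = a := hc.dist_eq_zero_iff.mp dpa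
      have h2 : q = b := hc.dist_eq_zero_iff.mp dqb
      rw [h1, h2]
      exact SameHyp.refl _
  | succ n ih =>
      intro p q a b hpq hab dpa dqb dpb dqa
      have dap : X.dist a p = n + 1 := by rw [SimpleGraph.dist_comm]; exact dpa
      obtain ⟨p₁, hpp₁, hp₁d⟩ := exists_adj_dist_pred hc
        (by omega : X.dist a p ≠ 0)
      have dp₁a : X.dist p₁ a = n := by
        rw [SimpleGraph.dist_comm]; omega
      have dab : X.dist a b = 1 := adj_dist_eq_one hab
      have dp₁b : X.dist p₁ b = n + 1 := by
        have hup : X.dist p₁ b ≤ X.dist p₁ a + X.dist a b := hc.dist_triangle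
        have hlow : X.dist p b ≤ X.dist p₁ b + 1 := by
          rw [SimpleGraph.dist_comm (u := p), SimpleGraph.dist_comm (u := p₁)]
          exact dist_le_adj_right hc hpp₁.symm
        omega
      have hp₁q : q ≠ p₁ := by
        intro h; rw [← h] at dp₁a; omega
      obtain ⟨w, hqw, hp₁w, hwd⟩ := qc b q p₁ p hpq.symm hpp₁.symm hp₁q
        (by rw [SimpleGraph.dist_comm (u := b) (v := q),
            SimpleGraph.dist_comm (u := b) (v := p₁)]; omega)
        (by rw [SimpleGraph.dist_comm (u := b) (v := q),
            SimpleGraph.dist_comm (u := b) (v := p)]; omega)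
      have dwb : X.dist w b = n := by
        rw [SimpleGraph.dist_comm (u := b) (v := p)] at hwd
        rw [SimpleGraph.dist_comm (u := w)]
        omega
      have dwa : X.dist w a = n + 1 := by
        have hup : X.dist w a ≤ X.dist w b + X.dist b a := hc.dist_triangle
        have h2 : X.dist b a = 1 := by rw [SimpleGraph.dist_comm]; exact dab
        have hlow : X.dist q a ≤ X.dist w a + 1 := by
          rw [SimpleGraph.dist_comm (u := q), SimpleGraph.dist_comm (u := w)]
          exact dist_le_adj_right hc hqw.symm
        omega
      have hrec := ih hp₁w hab dp₁a dwb dp₁b dwa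
      have hpw : p ≠ w := by
        intro h; rw [h] at dpb; omega
      have hsq : EdgeRel X s(p, q) s(p₁, w) :=
        Or.inr ⟨p, q, w, p₁, hpq, hqw, hp₁w.symm, hpp₁.symm, hpw, hp₁q.symm ∘ Eq.symm,
          Or.inl ⟨rfl, rfl⟩⟩
      exact (SameHyp.of_rel hsq).trans hrec

include hc qc hg in
lemma sameHyp_gate_edge (hCcl : IsCliq X C) {p q : V} (hpq : X.Adj p q) (hne : τ p ≠ τ q) :
    SameHyp X s(p, q) s(τ p, τ q) := by
  obtain ⟨e1, e2, e3⟩ := gate_EL hc hg hpq hne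
  exact ladder hc qc (X.dist p (τ p)) hpq
    (hCcl (τ p) (hg p).1 (τ q) (hg q).1 hne) rfl e1 e2 e3

end Gates

-- ============ the prism lemma ============

section Prism

set_option linter.unusedSectionVars false

variable {X : SimpleGraph V} (hc : X.Connected) (tc : TriangleCondition X)
  (k4 : NoK4Minus X)

include hc in
lemma dist_eq_two {x y z : V} (hnxy : ¬ X.Adj x y) (hne : x ≠ y)
    (hxz : X.Adj x z) (hzy : X.Adj z y) : X.dist x y = 2 := by
  have hub : X.dist x y ≤ X.dist x z + X.dist z y := hc.dist_triangle
  rw [adj_dist_eq_one hxz, adj_dist_eq_one hzy] at hub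
  have h0 : X.dist x y ≠ 0 := fun h => hne (hc.dist_eq_zero_iff.mp h)
  have h1 : X.dist x y ≠ 1 := by
    intro h; exact hnxy (SimpleGraph.dist_eq_one_iff_adj.mp h)
  omega

include hc tc k4 in
lemma prism {v b d c w : V} (hvb : X.Adj v b) (hvc : X.Adj v c) (hbd : X.Adj b d)
    (hcd : X.Adj c d) (hnbc : ¬ X.Adj b c) (hbc : b ≠ c) (hvd : v ≠ d)
    (hcw : X.Adj c w) (hvw : X.Adj v w) (hnbw : ¬ X.Adj b w) (hbw : b ≠ w) :
    ∃ z : V, X.Adj b z ∧ X.Adj w z ∧ z ≠ v := by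
  by_cases hwd : X.Adj w d
  · exact ⟨d, hbd, hwd, Ne.symm hvd⟩
  · have hdw : d ≠ w := fun h => hnbw (h ▸ hbd)
    have h2b : X.dist w b = 2 :=
      dist_eq_two hc (fun h => hnbw h.symm) (Ne.symm hbw) hvw.symm hvb
    have h2d : X.dist w d = 2 :=
      dist_eq_two hc (fun h => hwd h) (Ne.symm hdw) hcw.symm hcd
    obtain ⟨z, hbz, hdz, hzd⟩ := tc w b d hbd (h2b.trans h2d.symm)
    have hwz : X.Adj w z := by
      rw [h2b] at hzd
      exact SimpleGraph.dist_eq_one_iff_adj.mp (by omega)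
    refine ⟨z, hbz, hwz, fun h => ?_⟩
    exact k4 ⟨v, d, b, c, (h ▸ hdz).symm, hvb, hvc, hbd.symm, hcd.symm, hnbc, hbc⟩

end Prism

-- ============ the key lemma : transverse hyperplanes meeting at a vertex span a square ============

lemma key_square {X : SimpleGraph V} (hqm : QuasiMedian X) {v u w : V}
    (hvu : X.Adj v u) (hvw : X.Adj v w)
    (hns : ¬ SameHyp X s(v, u) s(v, w)) (htr : Transverse X s(v, u) s(v, w)) :
    ∃ z : V, X.Adj u z ∧ X.Adj w z ∧ z ≠ v := by
  obtain ⟨hc, k4, k32, tc, qc⟩ := hqm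
  have hnuw : ¬ X.Adj u w := fun h => hns (sameHyp_tri hvu h hvw)
  have huw : u ≠ w := fun h => hns (h ▸ SameHyp.refl _)
  -- gates for the two cliques
  obtain ⟨C₁, hC₁, hv1, hu1⟩ := exists_maxCliq hvu
  obtain ⟨C₂, hC₂, hv2, hw2⟩ := exists_maxCliq hvw
  choose τ hτ using gate_exists hc tc k4 hC₁ ⟨v, hv1⟩
  choose σ hσ using gate_exists hc tc k4 hC₂ ⟨v, hv2⟩
  have hτv : τ v = v := isGate_unique (hτ v) (isGate_self hC₁.1 hv1)
  have hτu : τ u = u := isGate_unique (hτ u) (isGate_self hC₁.1 hu1)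
  have hσv : σ v = v := isGate_unique (hσ v) (isGate_self hC₂.1 hv2)
  have hσw : σ w = w := isGate_unique (hσ w) (isGate_self hC₂.1 hw2)
  -- transfer lemmas
  have Lσ : ∀ p q : V, X.Adj p q → SameHyp X s(p, q) s(v, u) → σ p = σ q := by
    intro p q hpq hsh
    by_contra hne
    have hl := sameHyp_gate_edge hc qc hσ hC₂.1 hpq hne
    have hcl : SameHyp X s(σ p, σ q) s(v, w) :=
      sameHyp_cliq_edges hC₂.1 (hσ p).1 (hσ q).1 hv2 hw2 hne hvw.ne
    exact hns (hsh.symm.trans (hl.trans hcl))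
  have Lτ : ∀ p q : V, X.Adj p q → SameHyp X s(p, q) s(v, w) → τ p = τ q := by
    intro p q hpq hsh
    by_contra hne
    have hl := sameHyp_gate_edge hc qc hτ hC₁.1 hpq hne
    have hcl : SameHyp X s(τ p, τ q) s(v, u) :=
      sameHyp_cliq_edges hC₁.1 (hτ p).1 (hτ q).1 hv1 hu1 hne hvu.ne
    exact hns ((hl.trans hcl).symm.trans hsh)
  have Gσ : ∀ p q : V, X.Adj p q → SameHyp X s(p, q) s(v, w) → σ p ≠ σ q := by
    intro p q hpq hsh
    have hcut : GateCut X σ s(v, w) :=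
      gateCut_mk.mpr ⟨hvw, by rw [hσv, hσw]; exact hvw.ne⟩
    have := (gateCut_iff_of_sameHyp hc tc qc k4 k32 hσ hsh).mpr hcut
    exact (gateCut_mk.mp this).2
  have Gτ : ∀ p q : V, X.Adj p q → SameHyp X s(p, q) s(v, u) → τ p ≠ τ q := by
    intro p q hpq hsh
    have hcut : GateCut X τ s(v, u) :=
      gateCut_mk.mpr ⟨hvu, by rw [hτv, hτu]; exact hvu.ne⟩
    have := (gateCut_iff_of_sameHyp hc tc qc k4 k32 hτ hsh).mpr hcut
    exact (gateCut_mk.mp this).2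
  -- unpack the transversality witness square
  obtain ⟨e', f', he, hf, A, B, Cc, Dd, hAB, hACc, hBDd, hCcDd, hBCc, hADd, he', hf'⟩ := htr
  subst he' hf'
  have heAB : SameHyp X s(v, u) s(A, B) := he
  have hfACc : SameHyp X s(v, w) s(A, Cc) := hf
  have hBDd2 : SameHyp X s(v, w) s(B, Dd) :=
    hfACc.trans (SameHyp.of_rel
      (edgeRel_square hACc hCcDd hBDd.symm hAB.symm hADd (Ne.symm hBCc)))
  have hCcDd2 : SameHyp X s(v, u) s(Cc, Dd) :=
    heAB.trans (SameHyp.of_rel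
      (edgeRel_square hAB hBDd hCcDd.symm hACc.symm hADd hBCc))
  -- gate data on the corners
  have hσAB : σ A = σ B := Lσ A B hAB heAB.symm
  have hσCD : σ Cc = σ Dd := Lσ Cc Dd hCcDd hCcDd2.symm
  have hσAC : σ A ≠ σ Cc := Gσ A Cc hACc hfACc.symm
  have hσBD : σ B ≠ σ Dd := Gσ B Dd hBDd hBDd2.symm
  have hτAC : τ A = τ Cc := Lτ A Cc hACc hfACc.symm
  have hτBD : τ B = τ Dd := Lτ B Dd hBDd hBDd2.symm
  have hτAB : τ A ≠ τ B := Gτ A B hAB heAB.symm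
  -- choose a corner `a` with both gates different from `v`
  obtain ⟨a, haτ, haσ⟩ : ∃ a : V, τ a ≠ v ∧ σ a ≠ v := by
    by_cases h1 : τ A = v
    · by_cases h2 : σ A = v
      · refine ⟨Dd, ?_, ?_⟩
        · rw [← hτBD]; rw [h1] at hτAB; exact Ne.symm hτAB
        · rw [← hσCD]; rw [h2] at hσAC; exact Ne.symm hσAC
      · refine ⟨B, ?_, ?_⟩
        · rw [h1] at hτAB; exact Ne.symm hτAB
        · rw [← hσAB]; exact h2
    · by_cases h2 : σ A = v
      · refine ⟨Cc, ?_, ?_⟩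
        · rw [← hτAC]; exact h1
        · rw [h2] at hσAC; exact Ne.symm hσAC
      · exact ⟨A, h1, h2⟩
  -- a neighbour of `v` towards `a` on the `J₁` side
  have hz₁ : ∃ z₁ : V, X.Adj v z₁ ∧ X.dist a z₁ + 1 = X.dist a v ∧
      SameHyp X s(v, z₁) s(v, u) ∧ (z₁ = u ∨ X.Adj u z₁) := by
    have hdav : X.dist a v = X.dist a (τ a) + 1 := (hτ a).2 v hv1 (Ne.symm haτ)
    by_cases hτa : τ a = u
    · refine ⟨u, hvu, ?_, SameHyp.refl _, Or.inl rfl⟩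
      rw [← hτa]; exact hdav.symm
    · have hdau : X.dist a u = X.dist a (τ a) + 1 := (hτ a).2 u hu1 (fun h => hτa h.symm)
      obtain ⟨z₁, huz₁, hvz₁, hdz₁⟩ := tc a u v hvu.symm (hdau.trans hdav.symm)
      exact ⟨z₁, hvz₁, by omega, (sameHyp_tri hvu huz₁ hvz₁).symm, Or.inr huz₁⟩
  obtain ⟨z₁, h1a, h1d, h1H, h1u⟩ := hz₁
  -- a neighbour of `v` towards `a` on the `J₂` side
  have hz₂ : ∃ z₂ : V, X.Adj v z₂ ∧ X.dist a z₂ + 1 = X.dist a v ∧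
      SameHyp X s(v, z₂) s(v, w) ∧ (z₂ = w ∨ X.Adj w z₂) := by
    have hdav : X.dist a v = X.dist a (σ a) + 1 := (hσ a).2 v hv2 (Ne.symm haσ)
    by_cases hσa : σ a = w
    · refine ⟨w, hvw, ?_, SameHyp.refl _, Or.inl rfl⟩
      rw [← hσa]; exact hdav.symm
    · have hdaw : X.dist a w = X.dist a (σ a) + 1 := (hσ a).2 w hw2 (fun h => hσa h.symm)
      obtain ⟨z₂, hwz₂, hvz₂, hdz₂⟩ := tc a w v hvw.symm (hdaw.trans hdav.symm)
      exact ⟨z₂, hvz₂, by omega, (sameHyp_tri hvw hwz₂ hvz₂).symm, Or.inr hwz₂⟩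
  obtain ⟨z₂, h2a, h2d, h2H, h2u⟩ := hz₂
  have hσz₁ : σ z₁ = v := by
    have := Lσ v z₁ h1a h1H; rw [hσv] at this; exact this.symm
  have hσz₂ : σ z₂ ≠ v := by
    have := Gσ v z₂ h2a h2H; rw [hσv] at this; exact Ne.symm this
  have hz12 : z₁ ≠ z₂ := fun h => hσz₂ (h ▸ hσz₁)
  obtain ⟨y, hz₁y, hz₂y, hyd⟩ := qc a z₁ z₂ v h1a.symm h2a.symm hz12 (by omega) h1d
  have hvy : v ≠ y := by
    intro h; rw [← h] at hyd; omega
  have hnz12 : ¬ X.Adj z₁ z₂ := fun h =>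
    hns (h1H.symm.trans ((sameHyp_tri h1a h h2a).trans h2H))
  have hnuz₂ : ¬ X.Adj u z₂ := fun h =>
    hns ((sameHyp_tri hvu h h2a).trans h2H)
  have huz₂ : u ≠ z₂ := by
    intro h
    have := Lσ v u hvu (SameHyp.refl _)
    rw [hσv] at this
    exact hσz₂ (by rw [← h]; exact this.symm)
  -- first prism : replace z₁ by u
  have hstep1 : ∃ z₃ : V, X.Adj z₂ z₃ ∧ X.Adj u z₃ ∧ z₃ ≠ v := by
    rcases h1u with rfl | huz₁
    · exact ⟨y, hz₂y, hz₁y, Ne.symm hvy⟩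
    · exact prism hc tc k4 h2a h1a hz₂y hz₁y (fun h => hnz12 h.symm) (Ne.symm hz12)
        hvy huz₁.symm hvu (fun h => hnuz₂ h.symm) (Ne.symm huz₂)
  obtain ⟨z₃, h3a, h3b, h3v⟩ := hstep1
  -- second prism : replace z₂ by w
  rcases h2u with rfl | hwz₂
  · exact ⟨z₃, h3b, h3a, h3v⟩
  · exact prism hc tc k4 hvu h2a h3b h3a hnuz₂ huz₂ (Ne.symm h3v) hwz₂.symm hvw hnuw huw

-- ============ walk surgery ============

lemma swap_aux {X : SimpleGraph V} (hqm : QuasiMedian X) {y : V} :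
    ∀ (i : ℕ) {x : V} (p : X.Walk x y), p.length = X.dist x y →
    ∀ (hi : i + 1 < p.edges.length),
    Transverse X (p.edges[i]'(Nat.lt_of_succ_lt hi)) (p.edges[i+1]'hi) →
    ∃ q : X.Walk x y, q.length = X.dist x y ∧
      q.edges.map (Quot.mk (EdgeRel X)) =
        ((p.edges.map (Quot.mk (EdgeRel X))).set i
            (Quot.mk (EdgeRel X) (p.edges[i+1]'hi))).set (i+1)
          (Quot.mk (EdgeRel X) (p.edges[i]'(Nat.lt_of_succ_lt hi))) := by
  intro i
  induction i with
  | zero =>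
      intro x p hgeo hi htrans
      cases p with
      | nil => simp at hi
      | cons h₁ p₁ =>
        cases p₁ with
        | nil => simp at hi
        | cons h₂ p₂ =>
          rename_i v w
          -- h₁ : X.Adj x v, h₂ : X.Adj v w, p₂ : X.Walk w y
          simp only [SimpleGraph.Walk.edges_cons, List.getElem_cons_zero,
            List.getElem_cons_succ] at htrans ⊢
          have hlen : p₂.length + 2 = X.dist x y := by
            simpa [SimpleGraph.Walk.length_cons] using hgeo
          by_cases hsh : SameHyp X s(x, v) s(v, w)
          · refine ⟨SimpleGraph.Walk.cons h₁ (SimpleGraph.Walk.cons h₂ p₂), hgeo, ?_⟩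
            have hq : Quot.mk (EdgeRel X) s(x, v) = Quot.mk (EdgeRel X) s(v, w) :=
              Quot.eqvGen_sound hsh
            simp only [SimpleGraph.Walk.edges_cons, List.map_cons, List.set_cons_zero,
              List.set_cons_succ, hq]
          · have hxw : x ≠ w := by
              intro h
              subst h
              have := SimpleGraph.dist_le p₂
              omega
            have hns : ¬ SameHyp X s(v, x) s(v, w) := by
              rw [Sym2.eq_swap (a := v) (b := x)]; exact hsh
            have htr' : Transverse X s(v, x) s(v, w) := by
              rw [Sym2.eq_swap (a := v) (b := x)]; exact htrans
            obtain ⟨z, hxz, hwz, hzv⟩ := key_square hqm h₁.symm h₂ hns htr'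
            refine ⟨SimpleGraph.Walk.cons hxz (SimpleGraph.Walk.cons hwz.symm p₂), ?_, ?_⟩
            · simpa [SimpleGraph.Walk.length_cons] using hlen
            · have e1 : EdgeRel X s(v, w) s(x, z) :=
                edgeRel_square h₂ hwz hxz.symm h₁ (Ne.symm hzv) (Ne.symm hxw)
              have e2 : EdgeRel X s(x, v) s(z, w) :=
                edgeRel_square h₁ h₂ hwz hxz.symm hxw (Ne.symm hzv)
              simp only [SimpleGraph.Walk.edges_cons, List.map_cons, List.set_cons_zero,
                List.set_cons_succ]
              rw [← Quot.sound e1, ← Quot.sound e2]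
  | succ i ih =>
      intro x p hgeo hi htrans
      cases p with
      | nil => simp at hi
      | cons h p₁ =>
        rename_i x'
        have hc := hqm.1
        have hp₁ : p₁.length = X.dist x' y := by
          have hle := SimpleGraph.dist_le p₁
          have htri : X.dist x y ≤ X.dist x x' + X.dist x' y := hc.dist_triangle
          have h1 : X.dist x x' = 1 := adj_dist_eq_one h
          have h2 : p₁.length + 1 = X.dist x y := by
            simpa [SimpleGraph.Walk.length_cons] using hgeo
          omega
        have hi' : i + 1 < p₁.edges.length := by
          simpa [SimpleGraph.Walk.edges_cons] using hi
        have htrans' : Transverse X (p₁.edges[i]'(Nat.lt_of_succ_lt hi'))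
            (p₁.edges[i+1]'hi') := by
          simpa [SimpleGraph.Walk.edges_cons] using htrans
        obtain ⟨q₁, hq₁len, hq₁map⟩ := ih p₁ hp₁ hi' htrans'
        refine ⟨SimpleGraph.Walk.cons h q₁, ?_, ?_⟩
        · have h2 : p₁.length + 1 = X.dist x y := by
            simpa [SimpleGraph.Walk.length_cons] using hgeo
          simp only [SimpleGraph.Walk.length_cons]
          omega
        · simp only [SimpleGraph.Walk.edges_cons, List.map_cons, List.getElem_cons_succ,
            List.set_cons_succ, hq₁map]


end QM

open QM

/-- In a quasi-median graph, if a geodesic crosses hyperplanes `J₁, …, Jₙ` in that order and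
`Jᵢ`, `Jᵢ₊₁` are transverse, then there is a geodesic with the same endpoints crossing the
same hyperplanes with `Jᵢ` and `Jᵢ₊₁` swapped. -/
theorem geodesic_swap_transverse_hyperplanes
    {V : Type*} (X : SimpleGraph V) (hqm : QuasiMedian X)
    (x y : V) (p : X.Walk x y) (hgeo : p.length = X.dist x y)
    (i : ℕ) (hi : i + 1 < p.edges.length)
    (htrans : Transverse X (p.edges[i]'(Nat.lt_of_succ_lt hi)) (p.edges[i+1]'hi)) :
    ∃ q : X.Walk x y, q.length = X.dist x y ∧
      q.edges.map (Quot.mk (EdgeRel X)) =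
        ((p.edges.map (Quot.mk (EdgeRel X))).set i
            (Quot.mk (EdgeRel X) (p.edges[i+1]'hi))).set (i+1)
          (Quot.mk (EdgeRel X) (p.edges[i]'(Nat.lt_of_succ_lt hi))) :=
  swap_aux hqm i p hgeo hi htrans
end

section
/- Let Γ be a simplicial graph and 𝒢 a collection of nontrivial groups indexed by V(Γ). In the graph product Γ𝒢, every element can be represented by a graphically reduced word, and any two graphically reduced words representing the same element have the same length. Consequently the length |g| of g ∈ Γ𝒢 (length of any graphically reduced word representing g) is well-defined. -/
set_option linter.unusedSectionVars false
set_option linter.unusedVariables false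
set_option linter.unnecessarySimpa false
set_option maxHeartbeats 1000000


namespace GP

variable {ι : Type*} (Γ : SimpleGraph ι) (G : ι → Type*) [∀ i, Group (G i)]

/-- The defining relations of the graph product: multiplication inside each vertex group,
and commutation between adjacent vertex groups. -/
def gpRels : Set (FreeGroup (Σ i : ι, G i)) :=
  {r | (∃ (i : ι) (g h : G i),
          r = FreeGroup.of (⟨i, g⟩ : Σ i : ι, G i) * FreeGroup.of (⟨i, h⟩ : Σ i : ι, G i) *
            (FreeGroup.of (⟨i, g * h⟩ : Σ i : ι, G i))⁻¹) ∨
       (∃ (i j : ι) (g : G i) (h : G j), Γ.Adj i j ∧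
          r = FreeGroup.of (⟨i, g⟩ : Σ i : ι, G i) * FreeGroup.of (⟨j, h⟩ : Σ i : ι, G i) *
            (FreeGroup.of (⟨i, g⟩ : Σ i : ι, G i))⁻¹ *
            (FreeGroup.of (⟨j, h⟩ : Σ i : ι, G i))⁻¹)}

/-- The graph product of the groups `G i` over the simplicial graph `Γ`. -/
abbrev GraphProduct := PresentedGroup (gpRels Γ G)

/-- The image in the graph product of an element of a vertex group. -/
def of (s : Σ i : ι, G i) : GraphProduct Γ G := PresentedGroup.of s

/-- The element of the graph product represented by a word (a list of syllables). -/
def evalWord (w : List (Σ i : ι, G i)) : GraphProduct Γ G :=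
  (w.map fun s => of Γ G s).prod

/-- The elementary moves on words: cancellation of a trivial syllable, amalgamation of two
consecutive syllables in the same vertex group, and shuffling of two consecutive syllables
in adjacent vertex groups. -/
inductive WordMove : List (Σ i : ι, G i) → List (Σ i : ι, G i) → Prop
  | cancel (w₁ w₂ : List (Σ i : ι, G i)) (i : ι) :
      WordMove (w₁ ++ ⟨i, (1 : G i)⟩ :: w₂) (w₁ ++ w₂)
  | amalg (w₁ w₂ : List (Σ i : ι, G i)) (i : ι) (g h : G i) :
      WordMove (w₁ ++ ⟨i, g⟩ :: ⟨i, h⟩ :: w₂) (w₁ ++ ⟨i, g * h⟩ :: w₂)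
  | shuffle (w₁ w₂ : List (Σ i : ι, G i)) (i j : ι) (g : G i) (h : G j) (hadj : Γ.Adj i j) :
      WordMove (w₁ ++ ⟨i, g⟩ :: ⟨j, h⟩ :: w₂) (w₁ ++ ⟨j, h⟩ :: ⟨i, g⟩ :: w₂)

/-- A word is graphically reduced if its length cannot be shortened by elementary moves. -/
def GraphReduced (w : List (Σ i : ι, G i)) : Prop :=
  ¬ ∃ w' : List (Σ i : ι, G i),
      Relation.ReflTransGen (WordMove Γ G) w w' ∧ w'.length < w.length


/-- single shuffle move -/
def Sh (w v : List (Σ i : ι, G i)) : Prop :=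
  ∃ (w₁ w₂ : List (Σ i : ι, G i)) (i j : ι) (g : G i) (h : G j), Γ.Adj i j ∧
    w = w₁ ++ ⟨i, g⟩ :: ⟨j, h⟩ :: w₂ ∧ v = w₁ ++ ⟨j, h⟩ :: ⟨i, g⟩ :: w₂

/-- shuffle equivalence -/
def SE : List (Σ i : ι, G i) → List (Σ i : ι, G i) → Prop :=
  Relation.ReflTransGen (Sh Γ G)

variable {Γ G}

theorem Sh.symm {w v} (h : Sh Γ G w v) : Sh Γ G v w := by
  obtain ⟨w₁, w₂, i, j, g, h', hadj, rfl, rfl⟩ := h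
  exact ⟨w₁, w₂, j, i, h', g, hadj.symm, rfl, rfl⟩

theorem SE.refl (w) : SE Γ G w w := Relation.ReflTransGen.refl
theorem SE.trans {u v w} (h : SE Γ G u v) (h' : SE Γ G v w) : SE Γ G u w :=
  Relation.ReflTransGen.trans h h'
theorem SE.symm {u v} (h : SE Γ G u v) : SE Γ G v u :=
  by induction h with
    | refl => exact SE.refl _
    | tail _ h ih => exact (Relation.ReflTransGen.single (Sh.symm h)).trans ih
theorem SE.single {u v} (h : Sh Γ G u v) : SE Γ G u v := Relation.ReflTransGen.single h

theorem Sh.length {w v} (h : Sh Γ G w v) : v.length = w.length := by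
  obtain ⟨w₁, w₂, i, j, g, h', hadj, rfl, rfl⟩ := h; simp

theorem SE.length {w v} (h : SE Γ G w v) : v.length = w.length := by
  induction h with
  | refl => rfl
  | tail _ h ih => rw [h.length, ih]

theorem Sh.perm {w v} (h : Sh Γ G w v) : w.Perm v := by
  obtain ⟨w₁, w₂, i, j, g, h', hadj, rfl, rfl⟩ := h
  exact (List.Perm.swap _ _ _).append_left w₁ |>.symm

theorem SE.perm {w v} (h : SE Γ G w v) : w.Perm v := by
  induction h with
  | refl => exact List.Perm.refl _
  | tail _ h ih => exact ih.trans h.perm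

theorem Sh.cons {w v} (a : Σ i : ι, G i) (h : Sh Γ G w v) : Sh Γ G (a :: w) (a :: v) := by
  obtain ⟨w₁, w₂, i, j, g, h', hadj, rfl, rfl⟩ := h
  exact ⟨a :: w₁, w₂, i, j, g, h', hadj, rfl, rfl⟩

theorem SE.cons {w v} (a : Σ i : ι, G i) (h : SE Γ G w v) : SE Γ G (a :: w) (a :: v) :=
  Relation.ReflTransGen.lift (fun x => a :: x) (fun _ _ => Sh.cons a) _ _ h

/-- move a letter commuting with a prefix to the front -/
theorem se_front {v₁ : List (Σ i : ι, G i)} (a : Σ i : ι, G i) (v₂ : List (Σ i : ι, G i))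
    (h : ∀ t ∈ v₁, Γ.Adj t.1 a.1) : SE Γ G (v₁ ++ a :: v₂) (a :: v₁ ++ v₂) := by
  induction v₁ with
  | nil => exact SE.refl _
  | cons t v₁ ih =>
    refine ((ih (fun s hs => h s (List.mem_cons_of_mem _ hs))).cons t).trans (SE.single ?_)
    exact ⟨[], v₁ ++ v₂, t.1, a.1, t.2, a.2, h t List.mem_cons_self, by simp, by simp⟩

section Proj
variable [DecidableEq ι]

/-- projection to the letters with vertex `b` or `c` -/
def pf (b c : ι) (w : List (Σ i : ι, G i)) : List (Σ i : ι, G i) :=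
  w.filter (fun s => s.1 = b ∨ s.1 = c)

theorem pf_cons (b c : ι) (x : Σ i : ι, G i) (l : List (Σ i : ι, G i)) :
    pf b c (x :: l) = if x.1 = b ∨ x.1 = c then x :: pf b c l else pf b c l := by
  simp only [pf, List.filter_cons]
  by_cases h : x.1 = b ∨ x.1 = c <;> simp [h]

theorem pf_append (b c : ι) (u v : List (Σ i : ι, G i)) :
    pf b c (u ++ v) = pf b c u ++ pf b c v := List.filter_append _ _

theorem Sh.pf {b c : ι} (hbc : ¬ Γ.Adj b c) {w v} (h : Sh Γ G w v) :
    pf b c w = pf b c v := by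
  obtain ⟨w₁, w₂, i, j, g, h', hadj, rfl, rfl⟩ := h
  rw [pf_append, pf_append]
  congr 1
  have : ¬((i = b ∨ i = c) ∧ (j = b ∨ j = c)) := by
    rintro ⟨hi | hi, hj | hj⟩ <;> subst hi <;> subst hj
    · exact Γ.irrefl hadj
    · exact hbc hadj
    · exact hbc hadj.symm
    · exact Γ.irrefl hadj
  by_cases hi : (i = b ∨ i = c)
  · have hj : ¬(j = b ∨ j = c) := fun hj => this ⟨hi, hj⟩
    rw [pf_cons, pf_cons, pf_cons, pf_cons, if_pos hi, if_neg hj, if_neg hj, if_pos hi]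
  · by_cases hj : (j = b ∨ j = c)
    · rw [pf_cons, pf_cons, pf_cons, pf_cons, if_neg hi, if_pos hj, if_pos hj, if_neg hi]
    · rw [pf_cons, pf_cons, pf_cons, pf_cons, if_neg hi, if_neg hj, if_neg hj, if_neg hi]

theorem SE.pf {b c : ι} (hbc : ¬ Γ.Adj b c) {w v} (h : SE Γ G w v) :
    pf b c w = pf b c v := by
  induction h with
  | refl => rfl
  | tail _ h ih => rw [ih, h.pf hbc]

end Proj

section Proj2
variable [DecidableEq ι]

theorem mem_pf {b c : ι} {y : Σ i : ι, G i} {l : List (Σ i : ι, G i)} :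
    y ∈ pf b c l ↔ y ∈ l ∧ (y.1 = b ∨ y.1 = c) := by
  simp [pf, List.mem_filter]

theorem first_split {α : Type*} (p : α → Prop) [DecidablePred p] {v : List α}
    (h : ∃ x ∈ v, p x) : ∃ v₁ s v₂, v = v₁ ++ s :: v₂ ∧ p s ∧ ∀ t ∈ v₁, ¬ p t := by
  induction v with
  | nil => simp at h
  | cons x v ih =>
    by_cases hx : p x
    · exact ⟨[], x, v, rfl, hx, by simp⟩
    · obtain ⟨y, hy, hpy⟩ := h
      rcases List.mem_cons.mp hy with rfl | hy
      · exact (hx hpy).elim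
      · obtain ⟨v₁, s, v₂, rfl, hs, hv₁⟩ := ih ⟨y, hy, hpy⟩
        exact ⟨x :: v₁, s, v₂, rfl, hs, by
          intro t ht
          rcases List.mem_cons.mp ht with rfl | ht
          · exact hx
          · exact hv₁ t ht⟩

theorem se_of_pf {u v : List (Σ i : ι, G i)}
    (h : ∀ b c, ¬ Γ.Adj b c → pf b c u = pf b c v) : SE Γ G u v := by
  induction u generalizing v with
  | nil =>
    have hv : v = [] := by
      rw [List.eq_nil_iff_forall_not_mem]
      intro s hs
      have h1 := h s.1 s.1 (Γ.loopless.irrefl s.1)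
      have h2 : s ∈ pf s.1 s.1 v := mem_pf.mpr ⟨hs, Or.inl rfl⟩
      rw [← h1] at h2
      simp [pf] at h2
    rw [hv]
    exact SE.refl _
  | cons a u₀ ih =>
    set b := a.1 with hb
    have hbb := h b b (Γ.loopless.irrefl b)
    rw [pf_cons, if_pos (Or.inl hb.symm)] at hbb
    -- v contains a letter with vertex b
    have hex : ∃ x ∈ v, x.1 = b := by
      by_contra hne
      push_neg at hne
      have : pf b b v = [] := by
        rw [List.eq_nil_iff_forall_not_mem]
        intro y hy
        obtain ⟨hy, hy2⟩ := mem_pf.mp hy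
        rcases hy2 with h' | h' <;> exact hne y hy h'
      rw [this] at hbb
      simp at hbb
    obtain ⟨v₁, s, v₂, rfl, hs, hv₁⟩ := first_split (fun t : Σ i : ι, G i => t.1 = b) hex
    have hpfv₁ : pf b b v₁ = [] := by
      rw [List.eq_nil_iff_forall_not_mem]
      intro y hy
      obtain ⟨hy, hy2⟩ := mem_pf.mp hy
      rcases hy2 with h' | h' <;> exact hv₁ y hy h'
    have hsa : s = a ∧ pf b b v₂ = pf b b u₀ := by
      rw [pf_append, hpfv₁, List.nil_append, pf_cons, if_pos (Or.inl hs)] at hbb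
      exact ⟨(List.cons.injEq _ _ _ _ ▸ hbb).1.symm, ((List.cons.injEq _ _ _ _ ▸ hbb).2).symm⟩
    obtain ⟨rfl, -⟩ := hsa
    -- all letters of v₁ are adjacent to b
    have hadj : ∀ t ∈ v₁, Γ.Adj t.1 b := by
      intro t ht
      by_contra hnadj
      set c := t.1 with hc
      have hcb : c ≠ b := hv₁ t ht
      have hnadj' : ¬ Γ.Adj b c := fun h' => hnadj h'.symm
      have key := h b c hnadj'
      rw [pf_cons, if_pos (Or.inl hb.symm)] at key
      rw [pf_append, pf_cons, if_pos (Or.inl hs)] at key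
      have hmem : t ∈ pf b c v₁ := mem_pf.mpr ⟨ht, Or.inr hc.symm⟩
      obtain ⟨y, ys, hys⟩ : ∃ y ys, pf b c v₁ = y :: ys := by
        cases hpf : pf b c v₁ with
        | nil => rw [hpf] at hmem; simp at hmem
        | cons y ys => exact ⟨y, ys, rfl⟩
      rw [hys] at key
      simp only [List.cons_append, List.cons.injEq] at key
      obtain ⟨hya, -⟩ := key
      have := mem_pf.mp (hys ▸ (List.mem_cons_self (a := y) (l := ys)))
      obtain ⟨hyv₁, hy2⟩ := this
      rcases hy2 with h' | h'
      · exact hv₁ y hyv₁ (hya ▸ h')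
      · have h'' : s.fst = c := by rw [hya]; exact h'
        exact hcb (h''.symm.trans hs)
    -- move s = a to the front of v
    have hmove : SE Γ G (v₁ ++ s :: v₂) (s :: (v₁ ++ v₂)) := by
      have := se_front (Γ := Γ) (G := G) (v₁ := v₁) s v₂
        (fun t ht => by rw [hs]; exact hadj t ht)
      simpa using this
    -- apply the induction hypothesis
    have hih : SE Γ G u₀ (v₁ ++ v₂) := by
      apply ih
      intro b' c' hbc'
      have h1 := h b' c' hbc'
      have h2 := hmove.pf hbc'
      rw [h2] at h1
      rw [pf_cons, pf_cons] at h1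
      by_cases hp : s.1 = b' ∨ s.1 = c'
      · rw [if_pos hp, if_pos hp] at h1
        exact (List.cons.injEq _ _ _ _ ▸ h1).2
      · rwa [if_neg hp, if_neg hp] at h1
    exact ((hih.cons s).trans hmove.symm)

theorem se_cancel {a : Σ i : ι, G i} {u v : List (Σ i : ι, G i)}
    (h : SE Γ G (a :: u) (a :: v)) : SE Γ G u v := by
  apply se_of_pf
  intro b c hbc
  have h1 := h.pf hbc
  rw [pf_cons, pf_cons] at h1
  by_cases hp : a.1 = b ∨ a.1 = c
  · rw [if_pos hp, if_pos hp] at h1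
    exact (List.cons.injEq _ _ _ _ ▸ h1).2
  · rwa [if_neg hp, if_neg hp] at h1

end Proj2

/-- no two consecutive letters with the same vertex -/
def NoBad (v : List (Σ i : ι, G i)) : Prop := (v.map Sigma.fst).Chain' (· ≠ ·)

variable (Γ G) in
/-- abstract reducedness: nontrivial entries and no shuffle-reachable bad pair -/
def Red (w : List (Σ i : ι, G i)) : Prop :=
  (∀ s ∈ w, s.2 ≠ 1) ∧ ∀ v, SE Γ G w v → NoBad v

theorem red_nil : Red Γ G [] :=
  ⟨by simp, fun v hv => by
    have : v = [] := by simpa using hv.perm.symm.length_eq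
    simp [this, NoBad]; exact List.isChain_nil⟩

theorem Red.se {w w'} (h : Red Γ G w) (hse : SE Γ G w w') : Red Γ G w' := by
  refine ⟨fun s hs => h.1 s (hse.perm.symm.subset hs), fun v hv => h.2 v (hse.trans hv)⟩

theorem Red.noBad {w} (h : Red Γ G w) : NoBad w := h.2 w (SE.refl w)

theorem Red.tail {a : Σ i : ι, G i} {t} (h : Red Γ G (a :: t)) : Red Γ G t := by
  refine ⟨fun s hs => h.1 s (List.mem_cons_of_mem a hs), fun v hv => ?_⟩
  have := h.2 (a :: v) (hv.cons a)
  exact List.IsChain.tail this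

section Extract
variable [DecidableEq ι] [DecidableRel Γ.Adj]

variable (Γ) in
/-- extract the first letter with vertex `i` that can be shuffled to the front -/
def extract (i : ι) : List (Σ i : ι, G i) → Option (G i × List (Σ i : ι, G i))
  | [] => none
  | x :: t =>
    if hj : x.1 = i then some (hj ▸ x.2, t)
    else if Γ.Adj i x.1 then (extract i t).map (fun p => (p.1, x :: p.2)) else none

@[simp] theorem extract_nil (i : ι) : extract Γ i ([] : List (Σ i : ι, G i)) = none := rfl

theorem extract_cons_self (i : ι) (h : G i) (t) :
    extract Γ i (⟨i, h⟩ :: t) = some (h, t) := by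
  simp [extract]

theorem extract_cons_ne_adj {i j : ι} (hne : j ≠ i) (hadj : Γ.Adj i j) (h : G j) (t) :
    extract Γ i (⟨j, h⟩ :: t) = (extract Γ i t).map (fun p => (p.1, ⟨j, h⟩ :: p.2)) := by
  simp [extract, hne, hadj]

theorem extract_cons_nadj {i j : ι} (hne : j ≠ i) (hnadj : ¬ Γ.Adj i j) (h : G j) (t) :
    extract Γ i (⟨j, h⟩ :: t) = none := by
  simp [extract, hne, hnadj]

theorem extract_se {i : ι} {u : List (Σ i : ι, G i)} {k : G i} {u'}
    (h : extract Γ i u = some (k, u')) : SE Γ G u (⟨i, k⟩ :: u') := by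
  induction u generalizing u' with
  | nil => simp at h
  | cons x t ih =>
    obtain ⟨j, g⟩ := x
    by_cases hj : j = i
    · subst hj
      rw [extract_cons_self] at h
      obtain ⟨rfl, rfl⟩ : k = g ∧ u' = t := by
        simpa [eq_comm] using h
      exact SE.refl _
    · by_cases hadj : Γ.Adj i j
      · rw [extract_cons_ne_adj hj hadj] at h
        obtain ⟨⟨k', t'⟩, hp, heq⟩ := Option.map_eq_some_iff.mp h
        obtain ⟨rfl, rfl⟩ : k = k' ∧ u' = ⟨j, g⟩ :: t' := by
          simpa [eq_comm] using heq
        refine ((ih hp).cons _).trans (SE.single ?_)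
        exact ⟨[], t', j, i, g, k, hadj.symm, rfl, rfl⟩
      · rw [extract_cons_nadj hj hadj] at h
        simp at h

theorem extract_none_spec {i : ι} {v : List (Σ i : ι, G i)} (h : extract Γ i v = none) :
    (∀ s ∈ v, s.1 ≠ i) ∨
      ∃ p b q, v = p ++ b :: q ∧ b.1 ≠ i ∧ ¬ Γ.Adj i b.1 ∧ ∀ s ∈ p, s.1 ≠ i := by
  induction v with
  | nil => left; simp
  | cons x t ih =>
    obtain ⟨j, g⟩ := x
    by_cases hj : j = i
    · subst hj; rw [extract_cons_self] at h; simp at h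
    · by_cases hadj : Γ.Adj i j
      · rw [extract_cons_ne_adj hj hadj] at h
        have ht : extract Γ i t = none := by
          rcases h0 : extract Γ i t with _ | p
          · rfl
          · rw [h0] at h; simp at h
        rcases ih ht with h' | ⟨p, b, q, rfl, hb, hnadj, hp⟩
        · left
          intro s hs
          rcases List.mem_cons.mp hs with rfl | hs
          · exact hj
          · exact h' s hs
        · right
          refine ⟨⟨j, g⟩ :: p, b, q, rfl, hb, hnadj, ?_⟩
          intro s hs
          rcases List.mem_cons.mp hs with rfl | hs
          · exact hj
          · exact hp s hs
      · right
        exact ⟨[], ⟨j, g⟩, t, rfl, hj, hadj, by simp⟩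

theorem no_head {i : ι} {v w : List (Σ i : ι, G i)} {k : G i}
    (h : extract Γ i v = none) (hse : SE Γ G v (⟨i, k⟩ :: w)) : False := by
  have h1 : pf i i v = pf i i (⟨i, k⟩ :: w) := hse.pf (Γ.loopless.irrefl i)
  rw [pf_cons, if_pos (Or.inl rfl)] at h1
  rcases extract_none_spec h with h' | ⟨p, b, q, rfl, hb, hnadj, hp⟩
  · have : pf i i v = [] := by
      rw [List.eq_nil_iff_forall_not_mem]
      intro y hy
      obtain ⟨hy1, hy2⟩ := mem_pf.mp hy
      rcases hy2 with h2 | h2 <;> exact h' y hy1 h2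
    rw [this] at h1; simp at h1
  · set c := b.1 with hc
    have key : pf i c (p ++ b :: q) = pf i c (⟨i, k⟩ :: w) := hse.pf hnadj
    rw [pf_cons, if_pos (Or.inl rfl), pf_append, pf_cons, if_pos (Or.inr hc.symm)] at key
    rcases hpf : pf i c p with _ | ⟨y, ys⟩
    · rw [hpf, List.nil_append] at key
      have : b.1 = i := congrArg Sigma.fst (List.cons.injEq _ _ _ _ ▸ key).1
      exact hb this
    · rw [hpf] at key
      simp only [List.cons_append, List.cons.injEq] at key
      obtain ⟨hy, -⟩ := key
      have hmem := mem_pf.mp (hpf ▸ (List.mem_cons_self (a := y) (l := ys)))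
      obtain ⟨hyp, hy2⟩ := hmem
      rcases hy2 with h2 | h2
      · exact hp y hyp h2
      · rw [hy] at h2
        exact hb (hc ▸ h2.symm) |>.elim

theorem se_extract_none {i : ι} {u v : List (Σ i : ι, G i)} (hse : SE Γ G u v)
    (h : extract Γ i u = none) : extract Γ i v = none := by
  rcases h0 : extract Γ i v with _ | ⟨k, v'⟩
  · rfl
  · exact (no_head h (hse.trans (extract_se h0))).elim

theorem nobad_two {i : ι} {k m : G i} {l : List (Σ i : ι, G i)}
    (h : NoBad ((⟨i, k⟩ : Σ i : ι, G i) :: ⟨i, m⟩ :: l)) : False := by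
  have : (i : ι) ≠ i := (List.isChain_cons_cons.mp h).1
  exact this rfl

theorem Red.extract_extract {i : ι} {u u'} {k : G i} (h : Red Γ G u)
    (he : extract Γ i u = some (k, u')) : extract Γ i u' = none := by
  rcases h0 : extract Γ i u' with _ | ⟨m, u''⟩
  · rfl
  · have hse : SE Γ G u (⟨i, k⟩ :: ⟨i, m⟩ :: u'') :=
      (extract_se he).trans ((extract_se h0).cons _)
    exact (nobad_two (h.2 _ hse)).elim

theorem Red.cons_extract {a : Σ i : ι, G i} {t} (h : Red Γ G (a :: t)) :
    extract Γ a.1 t = none := by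
  rcases h0 : extract Γ a.1 t with _ | ⟨m, t'⟩
  · rfl
  · have hse : SE Γ G (a :: t) (a :: ⟨a.1, m⟩ :: t') := (extract_se h0).cons a
    have := h.2 _ hse
    have : a.1 ≠ a.1 := (List.isChain_cons_cons.mp this).1
    exact (this rfl).elim

end Extract

theorem sh_split {x : Σ i : ι, G i} {v₁ v₂ v' : List (Σ i : ι, G i)}
    (hsh : Sh Γ G (v₁ ++ x :: v₂) v') (hadj : ∀ t ∈ v₁, Γ.Adj t.1 x.1) :
    ∃ w₁ w₂, v' = w₁ ++ x :: w₂ ∧ (∀ t ∈ w₁, Γ.Adj t.1 x.1) ∧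
      SE Γ G (v₁ ++ v₂) (w₁ ++ w₂) := by
  obtain ⟨p, q, i, j, g, h, hG, heq, rfl⟩ := hsh
  rcases List.append_eq_append_iff.mp heq with ⟨l, hp, hl⟩ | ⟨l, hv₁, hl⟩
  · -- p = v₁ ++ l,  x :: v₂ = l ++ ⟨i,g⟩ :: ⟨j,h⟩ :: q
    rcases List.cons_eq_append_iff.mp hl with ⟨rfl, hl2⟩ | ⟨l', rfl, hl2⟩
    · -- l = [], x = ⟨i,g⟩, v₂ = ⟨j,h⟩ :: q
      obtain ⟨rfl, rfl⟩ := List.cons.injEq _ _ _ _ ▸ hl2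
      rw [List.append_nil] at hp
      subst hp
      refine ⟨p ++ [⟨j, h⟩], q, by simp, ?_, ?_⟩
      · intro t ht
        rcases List.mem_append.mp ht with ht | ht
        · exact hadj t ht
        · simp at ht
          subst ht
          exact hG.symm
      · simp [SE.refl]
    · -- l = x :: l',  v₂ = l' ++ ⟨i,g⟩ :: ⟨j,h⟩ :: q,  p = v₁ ++ x :: l'
      subst hp hl2
      refine ⟨v₁, l' ++ ⟨j, h⟩ :: ⟨i, g⟩ :: q, by simp, hadj, ?_⟩
      refine SE.single ⟨v₁ ++ l', q, i, j, g, h, hG, by simp, by simp⟩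
  · -- v₁ = p ++ l,  l ++ x :: v₂ = ⟨i,g⟩ :: ⟨j,h⟩ :: q
    subst hv₁
    match l, hl with
    | [], hl =>
      obtain ⟨rfl, rfl⟩ := List.cons.injEq _ _ _ _ ▸ hl
      rw [List.append_nil] at hadj ⊢
      refine ⟨p ++ [⟨j, h⟩], q, by simp, ?_, ?_⟩
      · intro t ht
        rcases List.mem_append.mp ht with ht | ht
        · exact hadj t ht
        · simp at ht
          subst ht
          exact hG.symm
      · simp [SE.refl]
    | [a], hl =>
      obtain ⟨rfl, hl2⟩ := List.cons.injEq _ _ _ _ ▸ hl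
      obtain ⟨rfl, rfl⟩ := List.cons.injEq _ _ _ _ ▸ hl2
      refine ⟨p, ⟨i, g⟩ :: q, by simp, ?_, ?_⟩
      · intro t ht
        exact hadj t (List.mem_append.mpr (Or.inl ht))
      · simp [SE.refl]
    | a :: b :: l', hl =>
      obtain ⟨rfl, hl2⟩ := List.cons.injEq _ _ _ _ ▸ hl
      obtain ⟨rfl, hl3⟩ := List.cons.injEq _ _ _ _ ▸ hl2
      subst hl3
      refine ⟨p ++ ⟨j, h⟩ :: ⟨i, g⟩ :: l', v₂, by simp, ?_, ?_⟩
      · intro t ht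
        apply hadj t
        simp only [List.mem_append, List.mem_cons] at ht ⊢
        tauto
      · refine SE.single ⟨p, l' ++ v₂, i, j, g, h, hG, by simp, by simp⟩

theorem se_cons_split {x : Σ i : ι, G i} {u v : List (Σ i : ι, G i)}
    (h : SE Γ G (x :: u) v) :
    ∃ v₁ v₂, v = v₁ ++ x :: v₂ ∧ SE Γ G u (v₁ ++ v₂) ∧ ∀ t ∈ v₁, Γ.Adj t.1 x.1 := by
  induction h with
  | refl => exact ⟨[], u, rfl, SE.refl _, by simp⟩
  | tail hab hbc ih =>
    obtain ⟨v₁, v₂, rfl, hse, hadj⟩ := ih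
    obtain ⟨w₁, w₂, rfl, hadj', hse'⟩ := sh_split hbc hadj
    exact ⟨w₁, w₂, rfl, hse.trans hse', hadj'⟩

theorem nobad_insert {i : ι} {g : G i} {v₁ v₂ : List (Σ i : ι, G i)}
    (h0 : NoBad (v₁ ++ v₂)) (h1 : ∀ t ∈ v₁, t.1 ≠ i) (h2 : ∀ z ∈ v₂.head?, z.1 ≠ i) :
    NoBad (v₁ ++ (⟨i, g⟩ : Σ i : ι, G i) :: v₂) := by
  induction v₁ with
  | nil =>
    show List.IsChain _ (i :: v₂.map Sigma.fst)
    rw [List.isChain_cons]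
    refine ⟨?_, h0⟩
    intro y hy
    rw [List.head?_map, Option.mem_def] at hy
    obtain ⟨z, hz, rfl⟩ := Option.map_eq_some_iff.mp hy
    exact fun hiy => h2 z (Option.mem_def.mpr hz) hiy.symm
  | cons t v₁ ih =>
    show List.IsChain _ (t.1 :: (v₁ ++ _ :: v₂).map Sigma.fst)
    rw [List.isChain_cons]
    have h0' : List.IsChain (· ≠ ·) (t.1 :: (v₁ ++ v₂).map Sigma.fst) := h0
    rw [List.isChain_cons] at h0'
    refine ⟨?_, ih h0'.2 (fun s hs => h1 s (List.mem_cons_of_mem t hs))⟩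
    intro y hy
    rw [List.head?_map, Option.mem_def] at hy
    obtain ⟨z, hz, rfl⟩ := Option.map_eq_some_iff.mp hy
    cases v₁ with
    | nil =>
      simp at hz
      subst hz
      exact h1 t List.mem_cons_self
    | cons s v₁' =>
      simp only [List.cons_append, List.head?_cons, Option.some.injEq] at hz
      subst hz
      apply h0'.1
      rw [List.head?_map]
      simp

section NB
variable [DecidableEq ι] [DecidableRel Γ.Adj]

theorem red_cons_of_extract_none {i : ι} {u : List (Σ i : ι, G i)} {g : G i}
    (hu : Red Γ G u) (he : extract Γ i u = none) (hg : g ≠ 1) :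
    Red Γ G ((⟨i, g⟩ : Σ i : ι, G i) :: u) := by
  constructor
  · intro s hs
    rcases List.mem_cons.mp hs with rfl | hs
    · exact hg
    · exact hu.1 s hs
  · intro v hv
    obtain ⟨v₁, v₂, rfl, hse, hadj⟩ := se_cons_split hv
    have h1 : ∀ t ∈ v₁, t.1 ≠ i := fun t ht => Γ.ne_of_adj (hadj t ht)
    refine nobad_insert (hu.2 _ hse) h1 ?_
    intro z hz
    cases v₂ with
    | nil => simp at hz
    | cons z' v₂' =>
      simp only [List.head?_cons, Option.mem_def, Option.some.injEq] at hz
      subst hz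
      intro hzi
      obtain ⟨iz, gz⟩ := z'
      simp only at hzi
      subst hzi
      have hfront : SE Γ G (v₁ ++ ⟨iz, gz⟩ :: v₂') ((⟨iz, gz⟩ : Σ i : ι, G i) :: (v₁ ++ v₂')) := by
        refine se_front _ _ ?_
        intro t ht
        exact hadj t ht
      exact no_head he (hse.trans hfront)
end NB

section ConsS
variable [DecidableEq ι] [DecidableRel Γ.Adj] [∀ i, DecidableEq (G i)]

variable (Γ) in
/-- multiply the letter `⟨i,g⟩` onto the front of a word, reducing -/
def consS (i : ι) (g : G i) (u : List (Σ i : ι, G i)) : List (Σ i : ι, G i) :=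
  if g = 1 then u else
    match extract Γ i u with
    | some (k, u') => if g * k = 1 then u' else ⟨i, g * k⟩ :: u'
    | none => ⟨i, g⟩ :: u

theorem consS_one {i : ι} {g : G i} (hg : g = 1) (u) : consS Γ i g u = u := by
  simp [consS, hg]

theorem consS_none {i : ι} {g : G i} (hg : g ≠ 1) {u} (he : extract Γ i u = none) :
    consS Γ i g u = ⟨i, g⟩ :: u := by
  simp [consS, hg, he]

theorem consS_some {i : ι} {g k : G i} (hg : g ≠ 1) {u u'} (he : extract Γ i u = some (k, u')) :
    consS Γ i g u = if g * k = 1 then u' else ⟨i, g * k⟩ :: u' := by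
  simp [consS, hg, he]

theorem sig_inj {i : ι} {k m : G i} (h : (⟨i, k⟩ : Σ i : ι, G i) = ⟨i, m⟩) : k = m := by
  simpa using h

theorem head_unique {i : ι} {k m : G i} {u u' u'' : List (Σ i : ι, G i)}
    (h1 : SE Γ G u (⟨i, k⟩ :: u')) (h2 : SE Γ G u (⟨i, m⟩ :: u'')) : k = m := by
  have h3 := (h1.symm.trans h2).pf (Γ.loopless.irrefl i)
  rw [pf_cons, if_pos (Or.inl rfl), pf_cons, if_pos (Or.inl rfl)] at h3
  exact sig_inj (List.cons.injEq _ _ _ _ ▸ h3).1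

theorem Red.consS {i : ι} {g : G i} {u} (hu : Red Γ G u) : Red Γ G (consS Γ i g u) := by
  by_cases hg : g = 1
  · rwa [consS_one hg]
  rcases hx : extract Γ i u with _ | ⟨k, u'⟩
  · rw [consS_none hg hx]
    exact red_cons_of_extract_none hu hx hg
  · rw [consS_some hg hx]
    have hred : Red Γ G (⟨i, k⟩ :: u') := hu.se (extract_se hx)
    have hnone := hu.extract_extract hx
    by_cases hgk : g * k = 1
    · rw [if_pos hgk]
      exact hred.tail
    · rw [if_neg hgk]
      exact red_cons_of_extract_none hred.tail hnone hgk

theorem consS_congr {i : ι} {g : G i} {u v} (hu : Red Γ G u) (hse : SE Γ G u v) :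
    SE Γ G (consS Γ i g u) (consS Γ i g v) := by
  by_cases hg : g = 1
  · rwa [consS_one hg, consS_one hg]
  rcases hx : extract Γ i u with _ | ⟨k, u'⟩
  · rw [consS_none hg hx, consS_none hg (se_extract_none hse hx)]
    exact hse.cons _
  · rcases hy : extract Γ i v with _ | ⟨m, v'⟩
    · exact absurd (se_extract_none hse.symm hy) (by simp [hx])
    · have h1 := extract_se hx
      have h2 := extract_se hy
      have hkm : k = m := head_unique h1 (hse.trans h2)
      subst hkm
      have htails : SE Γ G u' v' := se_cancel ((h1.symm.trans hse).trans h2)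
      rw [consS_some hg hx, consS_some hg hy]
      by_cases hgk : g * k = 1
      · rwa [if_pos hgk, if_pos hgk]
      · rw [if_neg hgk, if_neg hgk]
        exact htails.cons _

theorem consS_consS {i : ι} {g h : G i} {u} (hu : Red Γ G u) :
    SE Γ G (consS Γ i g (consS Γ i h u)) (consS Γ i (g * h) u) := by
  by_cases hh : h = 1
  · rw [consS_one hh, hh, mul_one]
    exact SE.refl _
  by_cases hg : g = 1
  · rw [consS_one hg, hg, one_mul]
    exact SE.refl _
  rcases hx : extract Γ i u with _ | ⟨k, u'⟩
  · rw [consS_none hh hx]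
    rw [consS_some hg (extract_cons_self (Γ := Γ) i h u)]
    by_cases hgh : g * h = 1
    · rw [if_pos hgh, consS_one hgh]
      exact SE.refl _
    · rw [if_neg hgh, consS_none hgh hx]
      exact SE.refl _
  · have hk1 : k ≠ 1 := (hu.se (extract_se hx)).1 ⟨i, k⟩ List.mem_cons_self
    have hnone : extract Γ i u' = none := hu.extract_extract hx
    by_cases hhk : h * k = 1
    · rw [consS_some hh hx, if_pos hhk, consS_none hg hnone]
      by_cases hgh : g * h = 1
      · rw [consS_one hgh]
        have hgk : g = k := by
          rw [eq_inv_of_mul_eq_one_left hgh, eq_inv_of_mul_eq_one_right hhk]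
        rw [hgk]
        exact (extract_se hx).symm
      · rw [consS_some hgh hx]
        have hghk : g * h * k = g := by rw [mul_assoc, hhk, mul_one]
        rw [hghk, if_neg hg]
        exact SE.refl _
    · rw [consS_some hh hx, if_neg hhk]
      rw [consS_some hg (extract_cons_self (Γ := Γ) i (h * k) u')]
      by_cases hgh : g * h = 1
      · rw [consS_one hgh]
        have : g * (h * k) = k := by rw [← mul_assoc, hgh, one_mul]
        rw [this, if_neg hk1]
        exact (extract_se hx).symm
      · rw [consS_some hgh hx, ← mul_assoc]
        exact SE.refl _

theorem extract_cons_map {i j : ι} (hne : j ≠ i) (hadj : Γ.Adj i j) (h : G j)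
    {t : List (Σ i : ι, G i)} {k : G i} {t'}
    (he : extract Γ i t = some (k, t')) :
    extract Γ i (⟨j, h⟩ :: t) = some (k, ⟨j, h⟩ :: t') := by
  rw [extract_cons_ne_adj hne hadj, he]
  rfl

theorem extract_cons_map_none {i j : ι} (hne : j ≠ i) (hadj : Γ.Adj i j) (h : G j)
    {t : List (Σ i : ι, G i)} (he : extract Γ i t = none) :
    extract Γ i (⟨j, h⟩ :: t) = none := by
  rw [extract_cons_ne_adj hne hadj, he]
  rfl

theorem consS_comm_aux {i j : ι} {g : G i} {h : G j} {u} (hadj : Γ.Adj i j)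
    (hu : Red Γ G u) (hg : g ≠ 1) (hh : h ≠ 1) (hxj : extract Γ j u = none) :
    SE Γ G (consS Γ i g (consS Γ j h u)) (consS Γ j h (consS Γ i g u)) := by
  have hij : i ≠ j := Γ.ne_of_adj hadj
  have hji : j ≠ i := hij.symm
  rw [consS_none hh hxj]
  rcases hy : extract Γ i u with _ | ⟨k, u₁⟩
  · rw [consS_none hg (extract_cons_map_none hji hadj h hy), consS_none hg hy,
      consS_none hh (extract_cons_map_none hij hadj.symm g hxj)]
    exact SE.single ⟨[], u, i, j, g, h, hadj, rfl, rfl⟩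
  · have hju₁ : extract Γ j u₁ = none := by
      have h1 : extract Γ j (⟨i, k⟩ :: u₁) = none := se_extract_none (extract_se hy) hxj
      rw [extract_cons_ne_adj hij hadj.symm] at h1
      rcases h2 : extract Γ j u₁ with _ | p
      · rfl
      · rw [h2] at h1; simp at h1
    rw [consS_some hg (extract_cons_map hji hadj h hy), consS_some hg hy]
    by_cases hgk : g * k = 1
    · rw [if_pos hgk, if_pos hgk, consS_none hh hju₁]
      exact SE.refl _
    · rw [if_neg hgk, if_neg hgk, consS_none hh (extract_cons_map_none hij hadj.symm _ hju₁)]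
      exact SE.single ⟨[], u₁, i, j, g * k, h, hadj, rfl, rfl⟩

theorem consS_comm {i j : ι} {g : G i} {h : G j} {u} (hadj : Γ.Adj i j)
    (hu : Red Γ G u) :
    SE Γ G (consS Γ i g (consS Γ j h u)) (consS Γ j h (consS Γ i g u)) := by
  by_cases hg : g = 1
  · rw [consS_one hg, consS_one hg]
    exact SE.refl _
  by_cases hh : h = 1
  · rw [consS_one hh, consS_one hh]
    exact SE.refl _
  have hij : i ≠ j := Γ.ne_of_adj hadj
  have hji : j ≠ i := hij.symm
  rcases hxj : extract Γ j u with _ | ⟨m, uj⟩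
  · exact consS_comm_aux hadj hu hg hh hxj
  rcases hxi : extract Γ i u with _ | ⟨k, ui⟩
  · exact (consS_comm_aux hadj.symm hu hh hg hxi).symm
  -- both extractable: build the canonical representative r = ⟨i,k⟩ :: ⟨j,m⟩ :: z
  have h1 : SE Γ G u (⟨i, k⟩ :: ui) := extract_se hxi
  have h2 : SE Γ G u (⟨j, m⟩ :: uj) := extract_se hxj
  obtain ⟨m', z, hjui, hui⟩ : ∃ m' z, extract Γ j ui = some (m', z) ∧
      SE Γ G ui (⟨j, m'⟩ :: z) := by
    rcases h3 : extract Γ j ui with _ | ⟨m', z⟩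
    · have : extract Γ j (⟨i, k⟩ :: ui) = none := extract_cons_map_none hij hadj.symm k h3
      exact absurd (se_extract_none h1.symm this) (by simp [hxj])
    · exact ⟨m', z, rfl, extract_se h3⟩
  have hmm : m = m' := by
    refine head_unique (u'' := ⟨i, k⟩ :: z) h2 ?_
    refine (h1.trans (hui.cons _)).trans (SE.single ?_)
    exact ⟨[], z, i, j, k, m', hadj, rfl, rfl⟩
  subst hmm
  set r : List (Σ i : ι, G i) := ⟨i, k⟩ :: ⟨j, m⟩ :: z with hr
  have hur : SE Γ G u r := h1.trans (hui.cons _)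
  have hredr : Red Γ G r := hu.se hur
  have hk1 : k ≠ 1 := hredr.1 _ List.mem_cons_self
  have hm1 : m ≠ 1 := hredr.tail.1 _ List.mem_cons_self
  have hzi : extract Γ i z = none := by
    have := hredr.cons_extract
    rw [extract_cons_ne_adj hji hadj] at this
    rcases h3 : extract Γ i z with _ | p
    · rfl
    · rw [h3] at this; simp at this
  have hzj : extract Γ j z = none := hredr.tail.cons_extract
  -- transport both sides to r
  have t1 : SE Γ G (consS Γ i g (consS Γ j h u)) (consS Γ i g (consS Γ j h r)) :=
    consS_congr hu.consS (consS_congr hu hur)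
  have t2 : SE Γ G (consS Γ j h (consS Γ i g u)) (consS Γ j h (consS Γ i g r)) :=
    consS_congr hu.consS (consS_congr hu hur)
  refine t1.trans (SE.trans ?_ t2.symm)
  -- compute everything at r
  have eri : extract Γ i r = some (k, ⟨j, m⟩ :: z) := by
    rw [hr, extract_cons_self]
  have erj : extract Γ j r = some (m, ⟨i, k⟩ :: z) :=
    extract_cons_map hij hadj.symm k (extract_cons_self (Γ := Γ) j m z)
  rw [consS_some hh erj, consS_some hg eri]
  by_cases hhm : h * m = 1 <;> by_cases hgk : g * k = 1
  · rw [if_pos hhm, if_pos hgk,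
      consS_some hg (extract_cons_self (Γ := Γ) i k z), if_pos hgk,
      consS_some hh (extract_cons_self (Γ := Γ) j m z), if_pos hhm]
    exact SE.refl _
  · rw [if_pos hhm, if_neg hgk,
      consS_some hg (extract_cons_self (Γ := Γ) i k z), if_neg hgk,
      consS_some hh (extract_cons_map hij hadj.symm (g * k) (extract_cons_self (Γ := Γ) j m z)),
      if_pos hhm]
    exact SE.refl _
  · rw [if_neg hhm, if_pos hgk,
      consS_some hg (extract_cons_map hji hadj (h * m) (extract_cons_self (Γ := Γ) i k z)),
      if_pos hgk,
      consS_some hh (extract_cons_self (Γ := Γ) j m z), if_neg hhm]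
    exact SE.refl _
  · rw [if_neg hhm, if_neg hgk,
      consS_some hg (extract_cons_map hji hadj (h * m) (extract_cons_self (Γ := Γ) i k z)),
      if_neg hgk,
      consS_some hh (extract_cons_map hij hadj.symm (g * k) (extract_cons_self (Γ := Γ) j m z)),
      if_neg hhm]
    exact SE.single ⟨[], z, i, j, g * k, h * m, hadj, rfl, rfl⟩

end ConsS

section Eval

theorem gp_rel_one {r : FreeGroup (Σ i : ι, G i)} (hr : r ∈ gpRels Γ G) :
    PresentedGroup.mk (gpRels Γ G) r = 1 := by
  rw [PresentedGroup.mk]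
  exact (QuotientGroup.eq_one_iff r).mpr (Subgroup.subset_normalClosure hr)

theorem of_mul {i : ι} (g h : G i) :
    of Γ G ⟨i, g⟩ * of Γ G ⟨i, h⟩ = of Γ G ⟨i, g * h⟩ := by
  have := gp_rel_one (Γ := Γ) (G := G) (Or.inl ⟨i, g, h, rfl⟩)
  rw [map_mul, map_mul, map_inv] at this
  rw [← mul_inv_eq_one]
  exact this

theorem of_one (i : ι) : of Γ G ⟨i, (1 : G i)⟩ = 1 := by
  have := of_mul (Γ := Γ) (G := G) (1 : G i) 1
  rw [mul_one] at this
  exact mul_eq_right.mp this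

theorem of_inv {i : ι} (g : G i) : (of Γ G ⟨i, g⟩)⁻¹ = of Γ G ⟨i, g⁻¹⟩ := by
  rw [inv_eq_iff_mul_eq_one, of_mul, mul_inv_cancel, of_one]

theorem of_comm {i j : ι} (hadj : Γ.Adj i j) (g : G i) (h : G j) :
    of Γ G ⟨i, g⟩ * of Γ G ⟨j, h⟩ = of Γ G ⟨j, h⟩ * of Γ G ⟨i, g⟩ := by
  have := gp_rel_one (Γ := Γ) (G := G) (Or.inr ⟨i, j, g, h, hadj, rfl⟩)
  rw [map_mul, map_mul, map_mul, map_inv, map_inv, mul_inv_eq_one,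
    mul_inv_eq_iff_eq_mul] at this
  exact this

theorem evalWord_nil : evalWord Γ G [] = 1 := rfl

theorem evalWord_cons (s : Σ i : ι, G i) (w) :
    evalWord Γ G (s :: w) = of Γ G s * evalWord Γ G w := by
  simp [evalWord]

theorem evalWord_append (u v : List (Σ i : ι, G i)) :
    evalWord Γ G (u ++ v) = evalWord Γ G u * evalWord Γ G v := by
  simp [evalWord]

theorem WordMove.eval {w v} (h : WordMove Γ G w v) : evalWord Γ G w = evalWord Γ G v := by
  cases h with
  | cancel w₁ w₂ i =>
    rw [evalWord_append, evalWord_append, evalWord_cons, of_one, one_mul]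
  | amalg w₁ w₂ i g h =>
    rw [evalWord_append, evalWord_append, evalWord_cons, evalWord_cons, evalWord_cons,
      ← of_mul, mul_assoc]
  | shuffle w₁ w₂ i j g h hadj =>
    rw [evalWord_append, evalWord_append, evalWord_cons, evalWord_cons, evalWord_cons,
      evalWord_cons]
    simp only [← mul_assoc]
    rw [mul_assoc (evalWord Γ G w₁), of_comm hadj, ← mul_assoc]

theorem reaches_eval {w v} (h : Relation.ReflTransGen (WordMove Γ G) w v) :
    evalWord Γ G w = evalWord Γ G v := by
  induction h with
  | refl => rfl
  | tail _ h ih => rw [ih, h.eval]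

theorem Sh.wordMove {w v} (h : Sh Γ G w v) : WordMove Γ G w v := by
  obtain ⟨w₁, w₂, i, j, g, h', hadj, rfl, rfl⟩ := h
  exact WordMove.shuffle w₁ w₂ i j g h' hadj

theorem not_noBad {v : List (Σ i : ι, G i)} (h : ¬ NoBad v) :
    ∃ (v₁ : List (Σ r : ι, G r)) (i : ι) (a : G i) (b : G i) (v₂ : List (Σ r : ι, G r)),
      v = v₁ ++ ⟨i, a⟩ :: ⟨i, b⟩ :: v₂ := by
  induction v with
  | nil => exact absurd List.isChain_nil h
  | cons x t ih =>
    by_cases ht : NoBad t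
    · cases t with
      | nil => exact absurd (show NoBad [x] from List.isChain_singleton _) h
      | cons y t' =>
        have hxy : x.1 = y.1 := by
          by_contra hne
          apply h
          show List.IsChain _ (x.1 :: y.1 :: t'.map Sigma.fst)
          rw [List.isChain_cons_cons]
          exact ⟨hne, ht⟩
        obtain ⟨i, a⟩ := x
        obtain ⟨iy, b⟩ := y
        simp only at hxy
        subst hxy
        exact ⟨[], i, a, b, t', rfl⟩
    · obtain ⟨v₁, i, a, b, v₂, rfl⟩ := ih ht
      exact ⟨x :: v₁, i, a, b, v₂, rfl⟩

theorem nobad_no_pair {w₁ w₂ : List (Σ i : ι, G i)} {i : ι} {g h : G i}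
    (hn : NoBad (w₁ ++ (⟨i, g⟩ : Σ i : ι, G i) :: ⟨i, h⟩ :: w₂)) : False := by
  have : List.Chain' (· ≠ ·) (w₁.map Sigma.fst ++ i :: i :: w₂.map Sigma.fst) := by
    simpa [NoBad] using hn
  have := (List.isChain_append.mp this).2.1
  exact (List.isChain_cons_cons.mp this).1 rfl

theorem graphReduced_iff_red {w : List (Σ i : ι, G i)} :
    GraphReduced Γ G w ↔ Red Γ G w := by
  constructor
  · intro hw
    constructor
    · rintro ⟨i, gs⟩ hs hgs
      simp only at hgs
      rw [hgs] at hs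
      obtain ⟨w₁, w₂, rfl⟩ := List.append_of_mem hs
      exact hw ⟨w₁ ++ w₂, Relation.ReflTransGen.single (WordMove.cancel w₁ w₂ i), by simp⟩
    · intro v hse
      by_contra hbad
      obtain ⟨v₁, i, a, b, v₂, rfl⟩ := not_noBad hbad
      have hchain : Relation.ReflTransGen (WordMove Γ G) w (v₁ ++ ⟨i, a⟩ :: ⟨i, b⟩ :: v₂) :=
        Relation.ReflTransGen.mono (fun _ _ hs => Sh.wordMove hs) _ _ hse
      refine hw ⟨v₁ ++ ⟨i, a * b⟩ :: v₂, hchain.tail (WordMove.amalg v₁ v₂ i a b), ?_⟩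
      have hlen := hse.length
      simp only [List.length_append, List.length_cons] at hlen ⊢
      omega
  · intro hred
    rintro ⟨w', hchain, hlt⟩
    have hse : SE Γ G w w' := by
      clear hlt
      induction hchain with
      | refl => exact SE.refl _
      | tail hab hbc ih =>
        cases hbc with
        | cancel w₁ w₂ i =>
          have := (hred.se ih).1 ⟨i, (1 : G i)⟩ (by simp)
          exact absurd rfl this
        | amalg w₁ w₂ i g h =>
          exact absurd ((hred.se ih).noBad) (fun hn => nobad_no_pair hn)
        | shuffle w₁ w₂ i j g h hadj =>
          exact ih.trans (SE.single ⟨w₁, w₂, i, j, g, h, hadj, rfl, rfl⟩)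
    rw [hse.length] at hlt
    omega

theorem eval_inv (w : List (Σ i : ι, G i)) :
    evalWord Γ G (w.reverse.map fun s => ⟨s.1, s.2⁻¹⟩) = (evalWord Γ G w)⁻¹ := by
  induction w with
  | nil => simp [evalWord]
  | cons s w ih =>
    obtain ⟨i, g⟩ := s
    rw [List.reverse_cons, List.map_append, evalWord_append, ih, evalWord_cons, mul_inv_rev]
    simp only [List.map_cons, List.map_nil]
    rw [evalWord_cons, evalWord_nil, mul_one, of_inv]

theorem eval_surjective (x : GraphProduct Γ G) : ∃ w, evalWord Γ G w = x := by
  let H : Subgroup (GraphProduct Γ G) :=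
    { carrier := {x | ∃ w, evalWord Γ G w = x}
      mul_mem' := by
        rintro a b ⟨wa, rfl⟩ ⟨wb, rfl⟩
        exact ⟨wa ++ wb, evalWord_append wa wb⟩
      one_mem' := ⟨[], rfl⟩
      inv_mem' := by
        rintro a ⟨w, rfl⟩
        exact ⟨w.reverse.map fun s => ⟨s.1, s.2⁻¹⟩, eval_inv w⟩ }
  have : x ∈ H := by
    apply PresentedGroup.generated_by
    intro j
    exact ⟨[j], by rw [evalWord_cons, evalWord_nil, mul_one]; rfl⟩
  exact this

theorem exists_reduced_word (x : GraphProduct Γ G) :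
    ∃ w, GraphReduced Γ G w ∧ evalWord Γ G w = x := by
  classical
  have hex : ∃ n : ℕ, ∃ w, w.length = n ∧ evalWord Γ G w = x := by
    obtain ⟨w, hw⟩ := eval_surjective x
    exact ⟨w.length, w, rfl, hw⟩
  obtain ⟨w₀, hlen, heval⟩ := Nat.find_spec hex
  refine ⟨w₀, ?_, heval⟩
  rintro ⟨w', hchain, hlt⟩
  have hev' : evalWord Γ G w' = x := by rw [← reaches_eval hchain]; exact heval
  exact Nat.find_min hex (m := w'.length) (by omega) ⟨w', rfl, hev'⟩

end Eval


section Final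

variable (Γ G) in
/-- setoid of reduced words up to shuffle equivalence -/
def RWSetoid : Setoid {w : List (Σ i : ι, G i) // Red Γ G w} where
  r u v := SE Γ G u.1 v.1
  iseqv := ⟨fun u => SE.refl _, SE.symm, SE.trans⟩

variable (Γ G) in
/-- the set of reduced words up to shuffle equivalence -/
def RWQ := Quotient (RWSetoid Γ G)

section Act
variable [DecidableEq ι] [DecidableRel Γ.Adj] [∀ i, DecidableEq (G i)]

/-- the action of a letter on reduced words -/
def actFun (i : ι) (g : G i) : RWQ Γ G → RWQ Γ G :=
  Quotient.map (fun u => ⟨consS Γ i g u.1, u.2.consS⟩) (fun u _ huv => consS_congr u.2 huv)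

theorem actFun_mul (i : ι) (g h : G i) (s : RWQ Γ G) :
    actFun i g (actFun i h s) = actFun i (g * h) s := by
  induction s using Quotient.inductionOn with
  | _ u => exact Quotient.sound (consS_consS u.2)

theorem actFun_one (i : ι) (s : RWQ Γ G) : actFun i (1 : G i) s = s := by
  induction s using Quotient.inductionOn with
  | _ u =>
    refine Quotient.sound ?_
    show SE Γ G (consS Γ i 1 u.1) u.1
    rw [consS_one rfl]
    exact SE.refl _

/-- the action of a letter as a permutation -/
def actPerm (a : Σ i : ι, G i) : Equiv.Perm (RWQ Γ G) where
  toFun := actFun a.1 a.2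
  invFun := actFun a.1 a.2⁻¹
  left_inv s := by rw [actFun_mul, inv_mul_cancel, actFun_one]
  right_inv s := by rw [actFun_mul, mul_inv_cancel, actFun_one]

theorem actPerm_rels : ∀ r ∈ gpRels Γ G, FreeGroup.lift (actPerm (Γ := Γ)) r = 1 := by
  rintro r (⟨i, g, h, rfl⟩ | ⟨i, j, g, h, hadj, rfl⟩)
  · rw [map_mul, map_mul, map_inv, FreeGroup.lift_apply_of, FreeGroup.lift_apply_of, FreeGroup.lift_apply_of,
      mul_inv_eq_one]
    ext s
    show actFun i g (actFun i h s) = actFun i (g * h) s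
    rw [actFun_mul]
  · rw [map_mul, map_mul, map_mul, map_inv, map_inv, FreeGroup.lift_apply_of, FreeGroup.lift_apply_of,
      mul_inv_eq_one, mul_inv_eq_iff_eq_mul]
    ext s
    show actFun i g (actFun j h s) = actFun j h (actFun i g s)
    induction s using Quotient.inductionOn with
    | _ u => exact Quotient.sound (consS_comm hadj u.2)

/-- the homomorphism from the graph product to permutations of reduced words -/
def phi : GraphProduct Γ G →* Equiv.Perm (RWQ Γ G) := PresentedGroup.toGroup actPerm_rels

theorem phi_of (a : Σ i : ι, G i) : phi (of Γ G a) = actPerm a :=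
  PresentedGroup.toGroup.of actPerm_rels

theorem phi_eval {w : List (Σ i : ι, G i)} (hw : Red Γ G w) :
    phi (evalWord Γ G w) (Quotient.mk (RWSetoid Γ G) ⟨[], red_nil⟩) =
      Quotient.mk (RWSetoid Γ G) ⟨w, hw⟩ := by
  induction w with
  | nil => rw [evalWord_nil, map_one]; rfl
  | cons a t ih =>
    rw [evalWord_cons, map_mul]
    show phi (of Γ G a) (phi (evalWord Γ G t) (Quotient.mk (RWSetoid Γ G) ⟨[], red_nil⟩)) = _
    rw [ih hw.tail, phi_of]
    refine Quotient.sound ?_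
    show SE Γ G (consS Γ a.1 a.2 t) (a :: t)
    obtain ⟨i, g⟩ := a
    rw [consS_none (hw.1 ⟨i, g⟩ List.mem_cons_self) hw.cons_extract]
    exact SE.refl _

end Act

end Final

end GP

open GP

/-- In a graph product of nontrivial groups, every element is represented by a graphically
reduced word, and any two graphically reduced words representing the same element have the
same length; hence the length of an element is well-defined. -/
theorem graphically_reduced_words_exist_and_length_well_defined
    {ι : Type*} (Γ : SimpleGraph ι) (G : ι → Type*) [∀ i, Group (G i)]
    [∀ i, Nontrivial (G i)] :
    (∀ x : GraphProduct Γ G, ∃ w : List (Σ i : ι, G i),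
      GraphReduced Γ G w ∧ evalWord Γ G w = x) ∧
    (∀ w w' : List (Σ i : ι, G i), GraphReduced Γ G w → GraphReduced Γ G w' →
      evalWord Γ G w = evalWord Γ G w' → w.length = w'.length) := by
  classical
  constructor
  · exact fun x => exists_reduced_word x
  · intro w w' hw hw' heq
    letI : DecidableEq ι := Classical.decEq ι
    letI : DecidableRel Γ.Adj := fun a b => Classical.propDecidable _
    letI : ∀ i, DecidableEq (G i) := fun i => Classical.decEq _
    have hrw : Red Γ G w := graphReduced_iff_red.mp hw
    have hrw' : Red Γ G w' := graphReduced_iff_red.mp hw'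
    have h1 := phi_eval hrw
    have h2 := phi_eval hrw'
    rw [heq, h2] at h1
    have hse : SE Γ G w' w := Quotient.exact h1
    exact hse.length
end

section
/- Let Γ be a simplicial graph and 𝒢 a collection of nontrivial groups indexed by V(Γ). The Cayley graph of the graph product Γ𝒢 with respect to the generating set ⋃_{u∈V(Γ)} (G_u ∖ {1}) is a quasi-median graph: it is connected, contains no induced K₄⁻ and no induced K₃,₂, and satisfies the triangle and quadrangle conditions. -/
namespace GP

/-- The Cayley graph of the graph product with respect to the union of the vertex groups
minus the identity. -/
def CayleyGraph {ι : Type*} (Γ : SimpleGraph ι) (G : ι → Type*) [∀ i, Group (G i)] :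
    SimpleGraph (GraphProduct Γ G) :=
  SimpleGraph.fromRel (fun x y => ∃ (i : ι) (g : G i), g ≠ 1 ∧ y = x * of Γ G ⟨i, g⟩)

end GP
namespace GPAux
set_option linter.unusedSectionVars false

open GP

attribute [local instance] Classical.propDecidable

variable {ι : Type u_1} (Γ : SimpleGraph ι) (G : ι → Type u_2) [∀ i, Group (G i)]

local notation "S" => (Σ i : ι, G i)
local notation "W" => List (Σ i : ι, G i)

/-- The first syllable of `w` with vertex `i` that can be shuffled to the front. -/
noncomputable def pivot (i : ι) : W → Option (G i)
  | [] => none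
  | t :: w => if h : t.1 = i then some (h ▸ t.2) else
      if Γ.Adj i t.1 then pivot i w else none

/-- Merge `g` (at vertex `i`) into the pivot of `w`, if it exists. -/
noncomputable def tryMerge (i : ι) (g : G i) : W → Option W
  | [] => none
  | t :: w =>
      if h : t.1 = i then
        if g * (h ▸ t.2) = 1 then some w else some (⟨i, g * (h ▸ t.2)⟩ :: w)
      else if Γ.Adj i t.1 then (tryMerge i g w).map (t :: ·) else none

/-- Left multiplication by the syllable `(i, g)` on words. -/
noncomputable def smul (i : ι) (g : G i) (w : W) : W :=
  if g = 1 then w else (tryMerge Γ G i g w).getD (⟨i, g⟩ :: w)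

/-- Graphically reduced words. -/
def Red : W → Prop
  | [] => True
  | t :: w => t.2 ≠ 1 ∧ pivot Γ G t.1 w = none ∧ Red w

/-- Swapping two adjacent commuting syllables. -/
inductive Swap : W → W → Prop
  | mk (u v : W) (s t : S) (h : Γ.Adj s.1 t.1) : Swap (u ++ s :: t :: v) (u ++ t :: s :: v)

/-- Shuffle equivalence of words. -/
def Eqv : W → W → Prop := Relation.ReflTransGen (Swap Γ G)

variable {Γ G}

lemma Swap.symm' {w w' : W} (h : Swap Γ G w w') : Swap Γ G w' w := by
  rcases h with ⟨u, v, s, t, h⟩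
  exact Swap.mk u v t s h.symm

lemma Eqv.refl (w : W) : Eqv Γ G w w := Relation.ReflTransGen.refl

lemma Eqv.trans {a b c : W} (h : Eqv Γ G a b) (h' : Eqv Γ G b c) : Eqv Γ G a c :=
  Relation.ReflTransGen.trans h h'

lemma Eqv.symm {a b : W} (h : Eqv Γ G a b) : Eqv Γ G b a := by
  induction h with
  | refl => exact Eqv.refl _
  | tail h₁ h₂ ih =>
      exact Relation.ReflTransGen.trans (Relation.ReflTransGen.single h₂.symm') ih

lemma Swap.single {a b : W} (h : Swap Γ G a b) : Eqv Γ G a b :=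
  Relation.ReflTransGen.single h

lemma Swap.cons {a b : W} (s : S) (h : Swap Γ G a b) : Swap Γ G (s :: a) (s :: b) := by
  rcases h with ⟨u, v, x, y, h⟩
  exact Swap.mk (s :: u) v x y h

lemma Eqv.cons {a b : W} (s : S) (h : Eqv Γ G a b) : Eqv Γ G (s :: a) (s :: b) := by
  induction h with
  | refl => exact Eqv.refl _
  | tail h₁ h₂ ih => exact ih.trans (Relation.ReflTransGen.single (h₂.cons s))

lemma Swap.append {a b : W} (u : W) (h : Swap Γ G a b) : Swap Γ G (u ++ a) (u ++ b) := by
  rcases h with ⟨u', v, x, y, h⟩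
  simpa [List.append_assoc] using Swap.mk (u ++ u') v x y h

lemma Eqv.append {a b : W} (u : W) (h : Eqv Γ G a b) : Eqv Γ G (u ++ a) (u ++ b) := by
  induction h with
  | refl => exact Eqv.refl _
  | tail h₁ h₂ ih => exact ih.trans (Relation.ReflTransGen.single (h₂.append u))

/-- Moving a syllable from the front into a slot past a prefix of adjacent syllables. -/
lemma eqv_moveIn {i : ι} (g : G i) :
    ∀ (w₁ w₂ : W), (∀ s ∈ w₁, Γ.Adj i s.1) →
      Eqv Γ G (⟨i, g⟩ :: (w₁ ++ w₂)) (w₁ ++ ⟨i, g⟩ :: w₂)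
  | [], w₂, _ => Eqv.refl _
  | t :: w₁, w₂, h => by
      have h1 : Swap Γ G (⟨i, g⟩ :: t :: (w₁ ++ w₂)) (t :: ⟨i, g⟩ :: (w₁ ++ w₂)) :=
        Swap.mk [] (w₁ ++ w₂) ⟨i, g⟩ t (h t (by simp))
      exact (h1.single).trans ((eqv_moveIn g w₁ w₂ fun s hs => h s (by simp [hs])).cons t)

lemma eqv_length {a b : W} (h : Eqv Γ G a b) : a.length = b.length := by
  induction h with
  | refl => rfl
  | tail h₁ h₂ ih => rcases h₂ with ⟨u, v, s, t, _⟩; simp_all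

lemma eqv_perm {a b : W} (h : Eqv Γ G a b) : a.Perm b := by
  induction h with
  | refl => exact List.Perm.refl _
  | tail h₁ h₂ ih =>
      refine ih.trans ?_
      rcases h₂ with ⟨u, v, s, t, _⟩
      exact List.Perm.append_left u (List.Perm.swap _ _ _)

end GPAux
namespace GPAux
set_option linter.unusedSectionVars false
open GP
attribute [local instance] Classical.propDecidable

variable {ι : Type u_1} {Γ : SimpleGraph ι} {G : ι → Type u_2} [∀ i, Group (G i)]

local notation "S" => (Σ i : ι, G i)
local notation "W" => List (Σ i : ι, G i)

lemma pivot_cons (i : ι) (t : S) (w : W) :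
    pivot Γ G i (t :: w) = if h : t.1 = i then some (h ▸ t.2) else
      if Γ.Adj i t.1 then pivot Γ G i w else none := rfl

lemma pivot_cons_self (i : ι) (q : G i) (w : W) :
    pivot Γ G i (⟨i, q⟩ :: w) = some q := by
  rw [pivot_cons, dif_pos rfl]

lemma pivot_cons_adj {i : ι} {t : S} (h : Γ.Adj i t.1) (w : W) :
    pivot Γ G i (t :: w) = pivot Γ G i w := by
  rw [pivot_cons, dif_neg (by rintro rfl; exact Γ.irrefl h), if_pos h]

lemma pivot_cons_nadj {i : ι} {t : S} (h1 : ¬ t.1 = i) (h2 : ¬ Γ.Adj i t.1) (w : W) :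
    pivot Γ G i (t :: w) = none := by
  rw [pivot_cons, dif_neg h1, if_neg h2]

lemma tryMerge_cons (i : ι) (g : G i) (t : S) (w : W) :
    tryMerge Γ G i g (t :: w) = if h : t.1 = i then
        (if g * (h ▸ t.2) = 1 then some w else some (⟨i, g * (h ▸ t.2)⟩ :: w))
      else if Γ.Adj i t.1 then (tryMerge Γ G i g w).map (t :: ·) else none := rfl

lemma tryMerge_cons_self (i : ι) (g q : G i) (w : W) :
    tryMerge Γ G i g (⟨i, q⟩ :: w) =
      if g * q = 1 then some w else some (⟨i, g * q⟩ :: w) := by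
  rw [tryMerge_cons, dif_pos rfl]

lemma tryMerge_cons_adj {i : ι} (g : G i) {t : S} (h : Γ.Adj i t.1) (w : W) :
    tryMerge Γ G i g (t :: w) = (tryMerge Γ G i g w).map (t :: ·) := by
  rw [tryMerge_cons, dif_neg (by rintro rfl; exact Γ.irrefl h), if_pos h]

lemma tryMerge_cons_nadj {i : ι} (g : G i) {t : S} (h1 : ¬ t.1 = i) (h2 : ¬ Γ.Adj i t.1)
    (w : W) : tryMerge Γ G i g (t :: w) = none := by
  rw [tryMerge_cons, dif_neg h1, if_neg h2]

lemma pivot_append {i : ι} {w₁ : W} (h : ∀ s ∈ w₁, Γ.Adj i s.1) (v : W) :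
    pivot Γ G i (w₁ ++ v) = pivot Γ G i v := by
  induction w₁ with
  | nil => rfl
  | cons t w₁ ih =>
      rw [List.cons_append, pivot_cons_adj (h t (by simp))]
      exact ih fun s hs => h s (by simp [hs])

lemma tryMerge_append {i : ι} (g : G i) {w₁ : W} (h : ∀ s ∈ w₁, Γ.Adj i s.1) (v : W) :
    tryMerge Γ G i g (w₁ ++ v) = (tryMerge Γ G i g v).map (w₁ ++ ·) := by
  induction w₁ with
  | nil => simp
  | cons t w₁ ih =>
      rw [List.cons_append, tryMerge_cons_adj g (h t (by simp)),
        ih fun s hs => h s (by simp [hs])]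
      cases tryMerge Γ G i g v <;> simp

lemma pivot_decomp {i : ι} {w₁ : W} (h : ∀ s ∈ w₁, Γ.Adj i s.1) (q : G i) (w₂ : W) :
    pivot Γ G i (w₁ ++ ⟨i, q⟩ :: w₂) = some q := by
  rw [pivot_append h, pivot_cons_self]

lemma tryMerge_decomp {i : ι} (g : G i) {w₁ : W} (h : ∀ s ∈ w₁, Γ.Adj i s.1) (q : G i)
    (w₂ : W) : tryMerge Γ G i g (w₁ ++ ⟨i, q⟩ :: w₂) =
      some (if g * q = 1 then w₁ ++ w₂ else w₁ ++ ⟨i, g * q⟩ :: w₂) := by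
  rw [tryMerge_append g h, tryMerge_cons_self]
  split <;> simp

lemma exists_decomp {i : ι} {q : G i} :
    ∀ {w : W}, pivot Γ G i w = some q →
      ∃ w₁ w₂, w = w₁ ++ ⟨i, q⟩ :: w₂ ∧ ∀ s ∈ w₁, Γ.Adj i s.1
  | [], h => by simp [pivot] at h
  | t :: w, h => by
      rw [pivot_cons] at h
      split at h
      · rename_i ht
        obtain ⟨j, x⟩ := t
        cases ht
        obtain rfl : x = q := by simpa using h
        exact ⟨[], w, rfl, by simp⟩
      · split at h
        · obtain ⟨w₁, w₂, rfl, hw₁⟩ := exists_decomp h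
          rename_i hadj
          exact ⟨t :: w₁, w₂, rfl, by
            simp only [List.forall_mem_cons]
            exact ⟨hadj, hw₁⟩⟩
        · simp at h

lemma tryMerge_none_of_pivot_none {i : ι} (g : G i) :
    ∀ {w : W}, pivot Γ G i w = none → tryMerge Γ G i g w = none
  | [], _ => rfl
  | t :: w, h => by
      rw [pivot_cons] at h
      rw [tryMerge_cons]
      split at h
      · simp at h
      · split at h
        · rename_i h1 h2
          rw [dif_neg h1, if_pos h2, tryMerge_none_of_pivot_none g h]
          rfl
        · rename_i h1 h2
          rw [dif_neg h1, if_neg h2]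

lemma smul_one (i : ι) (w : W) : smul Γ G i 1 w = w := if_pos rfl

lemma smul_pivot_none {i : ι} {g : G i} (hg : g ≠ 1) {w : W}
    (hp : pivot Γ G i w = none) : smul Γ G i g w = ⟨i, g⟩ :: w := by
  rw [smul, if_neg hg, tryMerge_none_of_pivot_none g hp]
  rfl

lemma smul_decomp {i : ι} {g : G i} (hg : g ≠ 1) {w₁ : W} (h : ∀ s ∈ w₁, Γ.Adj i s.1)
    (q : G i) (w₂ : W) : smul Γ G i g (w₁ ++ ⟨i, q⟩ :: w₂) =
      if g * q = 1 then w₁ ++ w₂ else w₁ ++ ⟨i, g * q⟩ :: w₂ := by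
  rw [smul, if_neg hg, tryMerge_decomp g h]
  rfl

/-- Red surgery: the pivot of a vertex adjacent to `i` ignores an `i`-syllable. -/
lemma pivot_stab {p i : ι} (h : Γ.Adj p i) (q : G i) :
    ∀ (u v : W), pivot Γ G p (u ++ ⟨i, q⟩ :: v) = pivot Γ G p (u ++ v)
  | [], v => by
      rw [List.nil_append, List.nil_append,
        pivot_cons_adj (by simpa using h)]
  | t :: u, v => by
      rw [List.cons_append, List.cons_append, pivot_cons, pivot_cons]
      split
      · rfl
      · split
        · exact pivot_stab h q u v
        · rfl

lemma pivot_repl {p i : ι} (hp : p ≠ i) (q q' : G i) :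
    ∀ (u v : W), pivot Γ G p (u ++ ⟨i, q⟩ :: v) = pivot Γ G p (u ++ ⟨i, q'⟩ :: v)
  | [], v => by
      rw [List.nil_append, List.nil_append, pivot_cons, pivot_cons]
      rw [dif_neg (by simpa using Ne.symm hp), dif_neg (by simpa using Ne.symm hp)]
  | t :: u, v => by
      rw [List.cons_append, List.cons_append, pivot_cons, pivot_cons]
      split
      · rfl
      · split
        · exact pivot_repl hp q q' u v
        · rfl

lemma red_cons_iff {t : S} {w : W} :
    Red Γ G (t :: w) ↔ t.2 ≠ 1 ∧ pivot Γ G t.1 w = none ∧ Red Γ G w := Iff.rfl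

lemma red_tail {t : S} {w : W} (h : Red Γ G (t :: w)) : Red Γ G w := h.2.2

lemma red_all {w : W} (h : Red Γ G w) : ∀ t ∈ w, t.2 ≠ (1 : G t.1) := by
  induction w with
  | nil => simp
  | cons t w ih =>
      simp only [List.forall_mem_cons]
      exact ⟨h.1, ih h.2.2⟩

lemma red_erase {i : ι} (q : G i) :
    ∀ {w₁ : W}, (∀ s ∈ w₁, Γ.Adj i s.1) → ∀ {w₂ : W},
      Red Γ G (w₁ ++ ⟨i, q⟩ :: w₂) → Red Γ G (w₁ ++ w₂)
  | [], _, w₂, h => h.2.2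
  | t :: w₁, hadj, w₂, h => by
      rw [List.cons_append, red_cons_iff] at h
      rw [List.cons_append, red_cons_iff]
      refine ⟨h.1, ?_, red_erase q (fun s hs => hadj s (by simp [hs])) h.2.2⟩
      have := h.2.1
      rwa [pivot_stab ((hadj t (by simp)).symm) q] at this

lemma red_repl {i : ι} {q q' : G i} (hq' : q' ≠ 1) :
    ∀ {w₁ : W}, (∀ s ∈ w₁, Γ.Adj i s.1) → ∀ {w₂ : W},
      Red Γ G (w₁ ++ ⟨i, q⟩ :: w₂) → Red Γ G (w₁ ++ ⟨i, q'⟩ :: w₂)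
  | [], _, w₂, h => ⟨hq', h.2.1, h.2.2⟩
  | t :: w₁, hadj, w₂, h => by
      rw [List.cons_append, red_cons_iff] at h
      rw [List.cons_append, red_cons_iff]
      refine ⟨h.1, ?_, red_repl hq' (fun s hs => hadj s (by simp [hs])) h.2.2⟩
      have := h.2.1
      rwa [pivot_repl (Γ.ne_of_adj (hadj t (by simp))).symm q q'] at this

lemma pivot_uniq {i : ι} {q : G i} :
    ∀ {w₁ : W}, (∀ s ∈ w₁, Γ.Adj i s.1) → ∀ {w₂ : W},
      Red Γ G (w₁ ++ ⟨i, q⟩ :: w₂) → pivot Γ G i (w₁ ++ w₂) = none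
  | [], _, w₂, h => h.2.1
  | t :: w₁, hadj, w₂, h => by
      rw [List.cons_append] at h
      rw [List.cons_append, pivot_cons_adj (hadj t (by simp))]
      exact pivot_uniq (fun s hs => hadj s (by simp [hs])) (red_cons_iff.mp h).2.2

lemma red_smul {i : ι} (g : G i) {w : W} (hw : Red Γ G w) : Red Γ G (smul Γ G i g w) := by
  by_cases hg : g = 1
  · rwa [hg, smul_one]
  cases hp : pivot Γ G i w with
  | none =>
      rw [smul_pivot_none hg hp]
      exact ⟨hg, hp, hw⟩
  | some q =>
      obtain ⟨w₁, w₂, rfl, hadj⟩ := exists_decomp hp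
      rw [smul_decomp hg hadj]
      split
      · exact red_erase q hadj hw
      · exact red_repl (by assumption) hadj hw

end GPAux
namespace GPAux
set_option linter.unusedSectionVars false
set_option maxHeartbeats 1000000
open GP
attribute [local instance] Classical.propDecidable

variable {ι : Type u_1} {Γ : SimpleGraph ι} {G : ι → Type u_2} [∀ i, Group (G i)]

local notation "S" => (Σ i : ι, G i)
local notation "W" => List (Σ i : ι, G i)

lemma pivot_swap_base {p : ι} {s t : S} (hadj : Γ.Adj s.1 t.1) (v : W) :
    pivot Γ G p (s :: t :: v) = pivot Γ G p (t :: s :: v) := by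
  by_cases hs : s.1 = p
  · have ht : ¬ t.1 = p := fun h => Γ.irrefl (hs ▸ h ▸ hadj)
    have hat : Γ.Adj p t.1 := hs ▸ hadj
    rw [pivot_cons p s, dif_pos hs, pivot_cons p t, dif_neg ht, if_pos hat,
      pivot_cons p s, dif_pos hs]
  · by_cases ht : t.1 = p
    · have hat : Γ.Adj p s.1 := ht ▸ hadj.symm
      rw [pivot_cons p t (s :: v), dif_pos ht, pivot_cons p s, dif_neg hs, if_pos hat,
        pivot_cons p t, dif_pos ht]
    · by_cases has : Γ.Adj p s.1
      · by_cases hat : Γ.Adj p t.1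
        · rw [pivot_cons p s, dif_neg hs, if_pos has, pivot_cons p t, dif_neg ht,
            if_pos hat, pivot_cons p t, dif_neg ht, if_pos hat,
            pivot_cons p s, dif_neg hs, if_pos has]
        · rw [pivot_cons p s, dif_neg hs, if_pos has, pivot_cons p t, dif_neg ht,
            if_neg hat, pivot_cons p t, dif_neg ht, if_neg hat]
      · by_cases hat : Γ.Adj p t.1
        · rw [pivot_cons p s, dif_neg hs, if_neg has, pivot_cons p t, dif_neg ht,
            if_pos hat, pivot_cons p s, dif_neg hs, if_neg has]
        · rw [pivot_cons p s, dif_neg hs, if_neg has, pivot_cons p t, dif_neg ht,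
            if_neg hat]

lemma pivot_swap {p : ι} {w w' : W} (h : Swap Γ G w w') :
    pivot Γ G p w = pivot Γ G p w' := by
  rcases h with ⟨u, v, s, t, hadj⟩
  induction u with
  | nil => exact pivot_swap_base hadj v
  | cons x u ih =>
      rw [List.cons_append, List.cons_append, pivot_cons, pivot_cons]
      split
      · rfl
      · split
        · exact ih
        · rfl

lemma pivot_eqv {p : ι} {w w' : W} (h : Eqv Γ G w w') :
    pivot Γ G p w = pivot Γ G p w' := by
  induction h with
  | refl => rfl
  | tail h₁ h₂ ih => exact ih.trans (pivot_swap h₂)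

/-- Lifted shuffle equivalence on `Option`. -/
def OEqv : Option W → Option W → Prop
  | some a, some b => Eqv Γ G a b
  | none, none => True
  | _, _ => False

lemma OEqv.map_cons {o o' : Option W} (x : S) (h : OEqv (Γ := Γ) (G := G) o o') :
    OEqv (Γ := Γ) (G := G) (o.map (x :: ·)) (o'.map (x :: ·)) := by
  match o, o', h with
  | some a, some b, h => exact Eqv.cons x h
  | none, none, _ => trivial

lemma tryMerge_cons_eq {i : ι} (g : G i) {t : S} (h : t.1 = i) {w : W} :
    tryMerge Γ G i g (t :: w) =
      if g * (h ▸ t.2) = 1 then some w else some (⟨i, g * (h ▸ t.2)⟩ :: w) := by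
  rw [tryMerge_cons, dif_pos h]

lemma tryMerge_swap_base {i : ι} (g : G i) {s t : S} (hadj : Γ.Adj s.1 t.1) (v : W) :
    OEqv (Γ := Γ) (G := G) (tryMerge Γ G i g (s :: t :: v)) (tryMerge Γ G i g (t :: s :: v)) := by
  obtain ⟨a, x⟩ := s
  obtain ⟨b, y⟩ := t
  simp only at hadj
  by_cases ha : a = i
  · have hib : Γ.Adj i b := ha ▸ hadj
    rw [tryMerge_cons_eq g ha, tryMerge_cons_adj g (t := ⟨b, y⟩) hib,
      tryMerge_cons_eq g ha]
    by_cases hgx : g * (ha ▸ x) = 1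
    · rw [if_pos hgx, if_pos hgx]
      exact Eqv.refl _
    · rw [if_neg hgx, if_neg hgx]
      simp only [Option.map_some]
      exact (Swap.mk [] v ⟨i, g * (ha ▸ x)⟩ ⟨b, y⟩ hib).single
  · by_cases hb : b = i
    · have hai : Γ.Adj a i := hb ▸ hadj
      have hia : Γ.Adj i a := hai.symm
      rw [tryMerge_cons_adj g (t := ⟨a, x⟩) hia, tryMerge_cons_eq g hb,
        tryMerge_cons_eq g hb]
      by_cases hgy : g * (hb ▸ y) = 1
      · rw [if_pos hgy, if_pos hgy]
        exact Eqv.refl _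
      · rw [if_neg hgy, if_neg hgy]
        simp only [Option.map_some]
        exact (Swap.mk [] v ⟨a, x⟩ ⟨i, g * (hb ▸ y)⟩ hai).single
    · by_cases hia : Γ.Adj i a
      · by_cases hib : Γ.Adj i b
        · rw [tryMerge_cons_adj g (t := ⟨a, x⟩) hia, tryMerge_cons_adj g (t := ⟨b, y⟩) hib,
            tryMerge_cons_adj g (t := ⟨b, y⟩) hib, tryMerge_cons_adj g (t := ⟨a, x⟩) hia]
          cases hv : tryMerge Γ G i g v with
          | none => trivial
          | some z =>
              simp only [Option.map_some]
              exact (Swap.mk [] z ⟨a, x⟩ ⟨b, y⟩ hadj).single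
        · rw [tryMerge_cons_adj g (t := ⟨a, x⟩) hia,
            tryMerge_cons_nadj g (t := ⟨b, y⟩) hb hib,
            tryMerge_cons_nadj g (t := ⟨b, y⟩) hb hib]
          trivial
      · rw [tryMerge_cons_nadj g (t := ⟨a, x⟩) ha hia]
        by_cases hib : Γ.Adj i b
        · rw [tryMerge_cons_adj g (t := ⟨b, y⟩) hib,
            tryMerge_cons_nadj g (t := ⟨a, x⟩) ha hia]
          trivial
        · rw [tryMerge_cons_nadj g (t := ⟨b, y⟩) hb hib]
          trivial

lemma tryMerge_swap {i : ι} (g : G i) {w w' : W} (h : Swap Γ G w w') :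
    OEqv (Γ := Γ) (G := G) (tryMerge Γ G i g w) (tryMerge Γ G i g w') := by
  rcases h with ⟨u, v, s, t, hadj⟩
  induction u with
  | nil => exact tryMerge_swap_base g hadj v
  | cons x u ih =>
      rw [List.cons_append, List.cons_append, tryMerge_cons i g x, tryMerge_cons i g x]
      by_cases hx : x.1 = i
      · rw [dif_pos hx, dif_pos hx]
        by_cases hm : g * (hx ▸ x.2) = 1
        · rw [if_pos hm, if_pos hm]
          exact (Swap.mk u v s t hadj).single
        · rw [if_neg hm, if_neg hm]
          exact Eqv.cons _ (Swap.mk u v s t hadj).single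
      · rw [dif_neg hx, dif_neg hx]
        by_cases hax : Γ.Adj i x.1
        · rw [if_pos hax, if_pos hax]
          exact OEqv.map_cons x ih
        · rw [if_neg hax, if_neg hax]
          trivial

lemma smul_swap {i : ι} (g : G i) {w w' : W} (h : Swap Γ G w w') :
    Eqv Γ G (smul Γ G i g w) (smul Γ G i g w') := by
  by_cases hg : g = 1
  · subst hg
    rw [smul_one, smul_one]
    exact h.single
  · have := tryMerge_swap (Γ := Γ) (G := G) g h
    rw [smul, smul, if_neg hg, if_neg hg]
    rcases ho : tryMerge Γ G i g w with _ | a <;>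
      rcases ho' : tryMerge Γ G i g w' with _ | b <;>
      rw [ho, ho'] at this <;>
      simp only [Option.getD_none, Option.getD_some]
    · exact Eqv.cons _ h.single
    · exact this.elim
    · exact this.elim
    · exact this

lemma smul_eqv {i : ι} (g : G i) {w w' : W} (h : Eqv Γ G w w') :
    Eqv Γ G (smul Γ G i g w) (smul Γ G i g w') := by
  induction h with
  | refl => exact Eqv.refl _
  | tail h₁ h₂ ih => exact ih.trans (smul_swap g h₂)

end GPAux
namespace GPAux
set_option linter.unusedSectionVars false
set_option maxHeartbeats 1000000
open GP
attribute [local instance] Classical.propDecidable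

variable {ι : Type u_1} {Γ : SimpleGraph ι} {G : ι → Type u_2} [∀ i, Group (G i)]

local notation "S" => (Σ i : ι, G i)
local notation "W" => List (Σ i : ι, G i)

lemma smul_smul_same (i : ι) (g h : G i) {w : W} (hw : Red Γ G w) :
    Eqv Γ G (smul Γ G i g (smul Γ G i h w)) (smul Γ G i (g * h) w) := by
  by_cases hh : h = 1
  · rw [hh, smul_one, mul_one]; exact Eqv.refl _
  by_cases hg : g = 1
  · rw [hg, smul_one, one_mul]; exact Eqv.refl _
  cases hp : pivot Γ G i w with
  | none =>
      rw [smul_pivot_none hh hp, smul, if_neg hg, tryMerge_cons_self]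
      by_cases hgh : g * h = 1
      · rw [if_pos hgh, hgh, smul_one]
        simp only [Option.getD_some]
        exact Eqv.refl _
      · rw [if_neg hgh, smul_pivot_none hgh hp]
        simp only [Option.getD_some]
        exact Eqv.refl _
  | some q =>
      obtain ⟨w₁, w₂, rfl, hadj⟩ := exists_decomp hp
      have hq : q ≠ 1 := red_all hw ⟨i, q⟩ (by simp)
      rw [smul_decomp hh hadj]
      by_cases hhq : h * q = 1
      · rw [if_pos hhq]
        have hpu : pivot Γ G i (w₁ ++ w₂) = none := pivot_uniq hadj hw
        rw [smul_pivot_none hg hpu]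
        by_cases hgh : g * h = 1
        · rw [hgh, smul_one]
          have hgq : g = q :=
            (eq_inv_of_mul_eq_one_left hgh).trans (eq_inv_of_mul_eq_one_right hhq).symm
          rw [hgq]
          exact eqv_moveIn q w₁ w₂ hadj
        · rw [smul_decomp hgh hadj]
          have hx : g * h * q = g := by rw [mul_assoc, hhq, mul_one]
          rw [hx, if_neg hg]
          exact eqv_moveIn g w₁ w₂ hadj
      · rw [if_neg hhq]
        by_cases hgh : g * h = 1
        · rw [hgh, smul_one, smul_decomp hg hadj]
          have hx : g * (h * q) = q := by rw [← mul_assoc, hgh, one_mul]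
          rw [hx, if_neg hq]
          exact Eqv.refl _
        · rw [smul_decomp hg hadj, smul_decomp hgh hadj, ← mul_assoc]
          exact Eqv.refl _

lemma smul_comm_of_pivot_none {i j : ι} (hadj : Γ.Adj i j) {g : G i} {h : G j}
    (hg : g ≠ 1) (hh : h ≠ 1) {w : W} (hpj : pivot Γ G j w = none) :
    Eqv Γ G (smul Γ G i g (smul Γ G j h w)) (smul Γ G j h (smul Γ G i g w)) := by
  have hji : j ≠ i := (Γ.ne_of_adj hadj).symm
  cases hpi : pivot Γ G i w with
  | none =>
      rw [smul_pivot_none hh hpj, smul_pivot_none hg hpi]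
      have h1 : pivot Γ G i ((⟨j, h⟩ : S) :: w) = pivot Γ G i w :=
        pivot_cons_adj hadj _
      have h2 : pivot Γ G j ((⟨i, g⟩ : S) :: w) = pivot Γ G j w :=
        pivot_cons_adj hadj.symm _
      rw [smul_pivot_none hg (h1.trans hpi), smul_pivot_none hh (h2.trans hpj)]
      exact (Swap.mk [] w ⟨i, g⟩ ⟨j, h⟩ hadj).single
  | some q =>
      obtain ⟨w₁, w₂, rfl, hW₁⟩ := exists_decomp hpi
      rw [smul_pivot_none hh hpj]
      have hW₁' : ∀ s ∈ (⟨j, h⟩ : S) :: w₁, Γ.Adj i s.1 := by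
        simp only [List.forall_mem_cons]
        exact ⟨hadj, hW₁⟩
      have e1 : (⟨j, h⟩ : S) :: (w₁ ++ ⟨i, q⟩ :: w₂) = ((⟨j, h⟩ : S) :: w₁) ++ ⟨i, q⟩ :: w₂ :=
        rfl
      rw [e1, smul_decomp hg hW₁', smul_decomp hg hW₁]
      by_cases hgq : g * q = 1
      · rw [if_pos hgq, if_pos hgq]
        have hpj' : pivot Γ G j (w₁ ++ w₂) = none := by
          rw [← pivot_stab hadj.symm q w₁ w₂]
          exact hpj
        rw [smul_pivot_none hh hpj']
        exact Eqv.refl _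
      · rw [if_neg hgq, if_neg hgq]
        have hpj' : pivot Γ G j (w₁ ++ ⟨i, g * q⟩ :: w₂) = none := by
          rw [← pivot_repl hji q (g * q) w₁ w₂]
          exact hpj
        rw [smul_pivot_none hh hpj']
        exact Eqv.refl _

lemma exists_decomp₂ {i j : ι} (hij : i ≠ j) {q : G i} {r : G j} :
    ∀ {w : W}, pivot Γ G i w = some q → pivot Γ G j w = some r →
      (∃ v₁ v₂ v₃, w = v₁ ++ ⟨i, q⟩ :: v₂ ++ ⟨j, r⟩ :: v₃ ∧ (∀ s ∈ v₁, Γ.Adj i s.1) ∧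
        (∀ s ∈ v₁ ++ ⟨i, q⟩ :: v₂, Γ.Adj j s.1)) ∨
      (∃ v₁ v₂ v₃, w = v₁ ++ ⟨j, r⟩ :: v₂ ++ ⟨i, q⟩ :: v₃ ∧ (∀ s ∈ v₁, Γ.Adj j s.1) ∧
        (∀ s ∈ v₁ ++ ⟨j, r⟩ :: v₂, Γ.Adj i s.1))
  | [], hpi, _ => by simp [pivot] at hpi
  | t :: w, hpi, hpj => by
      by_cases ht : t.1 = i
      · obtain ⟨a, x⟩ := t
        cases ht
        obtain rfl : x = q := by
          rw [pivot_cons, dif_pos rfl] at hpi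
          simpa using hpi
        rw [pivot_cons] at hpj
        rw [dif_neg (by simpa using hij)] at hpj
        split at hpj
        · obtain ⟨u₁, u₂, rfl, hu₁⟩ := exists_decomp hpj
          refine Or.inl ⟨[], u₁, u₂, rfl, by simp, ?_⟩
          simp only [List.nil_append, List.forall_mem_cons]
          exact ⟨by simpa using ‹Γ.Adj j a›, hu₁⟩
        · simp at hpj
      · by_cases ht' : t.1 = j
        · obtain ⟨a, x⟩ := t
          cases ht'
          obtain rfl : x = r := by
            rw [pivot_cons, dif_pos rfl] at hpj
            simpa using hpj
          rw [pivot_cons] at hpi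
          rw [dif_neg (by simpa using hij.symm)] at hpi
          split at hpi
          · obtain ⟨u₁, u₂, rfl, hu₁⟩ := exists_decomp hpi
            refine Or.inr ⟨[], u₁, u₂, rfl, by simp, ?_⟩
            simp only [List.nil_append, List.forall_mem_cons]
            exact ⟨by simpa using ‹Γ.Adj i a›, hu₁⟩
          · simp at hpi
        · rw [pivot_cons, dif_neg ht] at hpi
          rw [pivot_cons, dif_neg ht'] at hpj
          split at hpi
          · split at hpj
            · rcases exists_decomp₂ hij hpi hpj with
                ⟨v₁, v₂, v₃, rfl, h1, h2⟩ | ⟨v₁, v₂, v₃, rfl, h1, h2⟩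
              · refine Or.inl ⟨t :: v₁, v₂, v₃, rfl, ?_, ?_⟩
                · simp only [List.forall_mem_cons]
                  exact ⟨by assumption, h1⟩
                · simp only [List.cons_append, List.forall_mem_cons]
                  exact ⟨by assumption, h2⟩
              · refine Or.inr ⟨t :: v₁, v₂, v₃, rfl, ?_, ?_⟩
                · simp only [List.forall_mem_cons]
                  exact ⟨by assumption, h1⟩
                · simp only [List.cons_append, List.forall_mem_cons]
                  exact ⟨by assumption, h2⟩
            · simp at hpj
          · simp at hpi

lemma smul_comm_decomp {i j : ι} (hadj : Γ.Adj i j) {g q : G i} {h r : G j}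
    (hg : g ≠ 1) (hh : h ≠ 1) (v₁ v₂ v₃ : W)
    (hA : ∀ s ∈ v₁, Γ.Adj i s.1) (hB : ∀ s ∈ v₁ ++ ⟨i, q⟩ :: v₂, Γ.Adj j s.1) :
    Eqv Γ G (smul Γ G i g (smul Γ G j h (v₁ ++ ⟨i, q⟩ :: (v₂ ++ ⟨j, r⟩ :: v₃))))
      (smul Γ G j h (smul Γ G i g (v₁ ++ ⟨i, q⟩ :: (v₂ ++ ⟨j, r⟩ :: v₃)))) := by
  have hBij : Γ.Adj j i := hB ⟨i, q⟩ (by simp)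
  have hB1 : ∀ s ∈ v₁, Γ.Adj j s.1 := fun s hs => hB s (by simp [hs])
  have hB2 : ∀ s ∈ v₂, Γ.Adj j s.1 := fun s hs => hB s (by simp [hs])
  have hBe : ∀ s ∈ v₁ ++ v₂, Γ.Adj j s.1 := by
    intro s hs
    rcases List.mem_append.mp hs with hs | hs
    · exact hB1 s hs
    · exact hB2 s hs
  have hBgq : ∀ s ∈ v₁ ++ ⟨i, g * q⟩ :: v₂, Γ.Adj j s.1 := by
    intro s hs
    rcases List.mem_append.mp hs with hs | hs
    · exact hB1 s hs
    · rcases List.mem_cons.mp hs with rfl | hs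
      · exact hBij
      · exact hB2 s hs
  have ew : v₁ ++ ⟨i, q⟩ :: (v₂ ++ ⟨j, r⟩ :: v₃) = (v₁ ++ ⟨i, q⟩ :: v₂) ++ ⟨j, r⟩ :: v₃ := by
    simp
  have shape1 : ∀ T : W, (v₁ ++ ⟨i, q⟩ :: v₂) ++ T = v₁ ++ ⟨i, q⟩ :: (v₂ ++ T) := by
    intro T; simp
  have ew2 : v₁ ++ (v₂ ++ ⟨j, r⟩ :: v₃) = (v₁ ++ v₂) ++ ⟨j, r⟩ :: v₃ := by simp
  have ew3 : v₁ ++ ⟨i, g * q⟩ :: (v₂ ++ ⟨j, r⟩ :: v₃) =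
      (v₁ ++ ⟨i, g * q⟩ :: v₂) ++ ⟨j, r⟩ :: v₃ := by simp
  by_cases hgq : g * q = 1 <;> by_cases hhr : h * r = 1
  · conv_lhs => rw [ew, smul_decomp hh hB, if_pos hhr, shape1 v₃,
      smul_decomp hg hA, if_pos hgq]
    conv_rhs => rw [smul_decomp hg hA, if_pos hgq, ew2, smul_decomp hh hBe, if_pos hhr]
    simp only [List.append_assoc]
    exact Eqv.refl _
  · conv_lhs => rw [ew, smul_decomp hh hB, if_neg hhr, shape1 (⟨j, h * r⟩ :: v₃),
      smul_decomp hg hA, if_pos hgq]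
    conv_rhs => rw [smul_decomp hg hA, if_pos hgq, ew2, smul_decomp hh hBe, if_neg hhr]
    simp only [List.append_assoc]
    exact Eqv.refl _
  · conv_lhs => rw [ew, smul_decomp hh hB, if_pos hhr, shape1 v₃,
      smul_decomp hg hA, if_neg hgq]
    conv_rhs => rw [smul_decomp hg hA, if_neg hgq, ew3, smul_decomp hh hBgq, if_pos hhr]
    simp only [List.append_assoc]
    exact Eqv.refl _
  · conv_lhs => rw [ew, smul_decomp hh hB, if_neg hhr, shape1 (⟨j, h * r⟩ :: v₃),
      smul_decomp hg hA, if_neg hgq]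
    conv_rhs => rw [smul_decomp hg hA, if_neg hgq, ew3, smul_decomp hh hBgq, if_neg hhr]
    simp only [List.append_assoc]
    exact Eqv.refl _

lemma smul_smul_comm {i j : ι} (hadj : Γ.Adj i j) (g : G i) (h : G j) {w : W} :
    Eqv Γ G (smul Γ G i g (smul Γ G j h w)) (smul Γ G j h (smul Γ G i g w)) := by
  by_cases hg : g = 1
  · rw [hg, smul_one, smul_one]; exact Eqv.refl _
  by_cases hh : h = 1
  · rw [hh, smul_one, smul_one]; exact Eqv.refl _
  cases hpj : pivot Γ G j w with
  | none => exact smul_comm_of_pivot_none hadj hg hh hpj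
  | some r =>
      cases hpi : pivot Γ G i w with
      | none => exact (smul_comm_of_pivot_none hadj.symm hh hg hpi).symm
      | some q =>
          rcases exists_decomp₂ (Γ.ne_of_adj hadj) hpi hpj with
            ⟨v₁, v₂, v₃, heq, h1, h2⟩ | ⟨v₁, v₂, v₃, heq, h1, h2⟩
          · rw [heq]
            simp only [List.append_assoc, List.cons_append]
            exact smul_comm_decomp (r := r) hadj hg hh v₁ v₂ v₃ h1 h2
          · rw [heq]
            simp only [List.append_assoc, List.cons_append]
            exact (smul_comm_decomp (r := q) hadj.symm hh hg v₁ v₂ v₃ h1 h2).symm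

end GPAux
namespace GPAux
set_option linter.unusedSectionVars false
set_option maxHeartbeats 1000000
open GP
attribute [local instance] Classical.propDecidable

variable {ι : Type u_1} {Γ : SimpleGraph ι} {G : ι → Type u_2} [∀ i, Group (G i)]

local notation "S" => (Σ i : ι, G i)
local notation "W" => List (Σ i : ι, G i)

lemma mk_rel_one {r : FreeGroup (Σ i : ι, G i)} (hr : r ∈ gpRels Γ G) :
    PresentedGroup.mk (gpRels Γ G) r = 1 := by
  have : (QuotientGroup.mk r : PresentedGroup (gpRels Γ G)) = 1 :=
    (QuotientGroup.eq_one_iff r).mpr (Subgroup.subset_normalClosure hr)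
  exact this

lemma of_mul (i : ι) (g h : G i) :
    of Γ G ⟨i, g⟩ * of Γ G ⟨i, h⟩ = of Γ G ⟨i, g * h⟩ := by
  have hr := mk_rel_one (Γ := Γ) (G := G)
    (Or.inl ⟨i, g, h, rfl⟩ : _ ∈ gpRels Γ G)
  rw [map_mul, map_mul, map_inv] at hr
  exact mul_inv_eq_one.mp hr

lemma of_one (i : ι) : of Γ G ⟨i, (1 : G i)⟩ = 1 := by
  have := of_mul (Γ := Γ) (G := G) i 1 1
  rw [one_mul] at this
  exact mul_eq_right.mp this

lemma of_inv (i : ι) (g : G i) : (of Γ G ⟨i, g⟩)⁻¹ = of Γ G ⟨i, g⁻¹⟩ :=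
  inv_eq_of_mul_eq_one_right (by rw [of_mul, mul_inv_cancel, of_one])

lemma of_comm {s t : (Σ i : ι, G i)} (hadj : Γ.Adj s.1 t.1) :
    of Γ G s * of Γ G t = of Γ G t * of Γ G s := by
  obtain ⟨i, g⟩ := s
  obtain ⟨j, h⟩ := t
  have hr := mk_rel_one (Γ := Γ) (G := G)
    (Or.inr ⟨i, j, g, h, hadj, rfl⟩ : _ ∈ gpRels Γ G)
  rw [map_mul, map_mul, map_mul, map_inv, map_inv] at hr
  exact mul_inv_eq_iff_eq_mul.mp (mul_inv_eq_one.mp hr)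

lemma evalWord_nil : evalWord Γ G [] = 1 := rfl

lemma evalWord_cons (s : S) (w : W) :
    evalWord Γ G (s :: w) = of Γ G s * evalWord Γ G w := by
  simp [evalWord]

lemma evalWord_append (u v : W) :
    evalWord Γ G (u ++ v) = evalWord Γ G u * evalWord Γ G v := by
  simp [evalWord]

lemma of_commList {i : ι} (g : G i) {u : W} (h : ∀ s ∈ u, Γ.Adj i s.1) :
    of Γ G ⟨i, g⟩ * evalWord Γ G u = evalWord Γ G u * of Γ G ⟨i, g⟩ := by
  induction u with
  | nil => rw [evalWord_nil, one_mul, mul_one]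
  | cons t u ih =>
      rw [evalWord_cons, ← mul_assoc, of_comm (s := ⟨i, g⟩) (h t (by simp)),
        mul_assoc, ih (fun s hs => h s (by simp [hs])), mul_assoc]

lemma eval_smul (i : ι) (g : G i) (w : W) :
    evalWord Γ G (smul Γ G i g w) = of Γ G ⟨i, g⟩ * evalWord Γ G w := by
  by_cases hg : g = 1
  · rw [hg, smul_one, of_one, one_mul]
  cases hp : pivot Γ G i w with
  | none => rw [smul_pivot_none hg hp, evalWord_cons]
  | some q =>
      obtain ⟨w₁, w₂, rfl, hadj⟩ := exists_decomp hp
      have key : of Γ G ⟨i, g⟩ * evalWord Γ G (w₁ ++ ⟨i, q⟩ :: w₂) =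
          evalWord Γ G w₁ * (of Γ G ⟨i, g * q⟩ * evalWord Γ G w₂) := by
        rw [evalWord_append, evalWord_cons, ← mul_assoc, of_commList g hadj,
          mul_assoc, ← mul_assoc (of Γ G ⟨i, g⟩), of_mul]
      rw [smul_decomp hg hadj, key]
      by_cases hgq : g * q = 1
      · rw [if_pos hgq, hgq, of_one, one_mul, evalWord_append]
      · rw [if_neg hgq, evalWord_append, evalWord_cons]

lemma eval_eqv {w w' : W} (h : Eqv Γ G w w') : evalWord Γ G w = evalWord Γ G w' := by
  induction h with
  | refl => rfl
  | tail h₁ h₂ ih =>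
      rw [ih]
      rcases h₂ with ⟨u, v, s, t, hadj⟩
      simp only [evalWord_append, evalWord_cons]
      have hcomm : of Γ G s * (of Γ G t * evalWord Γ G v) =
          of Γ G t * (of Γ G s * evalWord Γ G v) := by
        rw [← mul_assoc, of_comm hadj, mul_assoc]
      rw [hcomm]

variable (Γ G) in
/-- Reduced words. -/
def RW := {w : W // Red Γ G w}

variable (Γ G) in
/-- Setoid of reduced words up to shuffle. -/
def rwSetoid : Setoid (RW Γ G) :=
  ⟨fun a b => Eqv Γ G a.1 b.1, fun _ => Eqv.refl _, Eqv.symm, Eqv.trans⟩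

variable (Γ G) in
/-- Reduced words modulo shuffles. -/
def Q := Quotient (rwSetoid Γ G)

variable (Γ G) in
noncomputable def actQ (i : ι) (g : G i) : Q Γ G → Q Γ G :=
  Quotient.map (fun a => ⟨smul Γ G i g a.1, red_smul g a.2⟩) (fun _ _ hab => smul_eqv g hab)

lemma actQ_mul (i : ι) (g h : G i) (q : Q Γ G) :
    actQ Γ G i g (actQ Γ G i h q) = actQ Γ G i (g * h) q := by
  induction q using Quotient.inductionOn with
  | h a => exact Quotient.sound (smul_smul_same i g h a.2)

lemma actQ_one (i : ι) (q : Q Γ G) : actQ Γ G i 1 q = q := by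
  induction q using Quotient.inductionOn with
  | h a =>
      refine Quotient.sound ?_
      show Eqv Γ G (smul Γ G i 1 a.1) a.1
      rw [smul_one]
      exact Eqv.refl _

lemma actQ_comm {i j : ι} (hadj : Γ.Adj i j) (g : G i) (h : G j) (q : Q Γ G) :
    actQ Γ G i g (actQ Γ G j h q) = actQ Γ G j h (actQ Γ G i g q) := by
  induction q using Quotient.inductionOn with
  | h a => exact Quotient.sound (smul_smul_comm hadj g h)

variable (Γ G) in
noncomputable def permQ (σ : S) : Equiv.Perm (Q Γ G) where
  toFun := actQ Γ G σ.1 σ.2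
  invFun := actQ Γ G σ.1 σ.2⁻¹
  left_inv q := by rw [actQ_mul, inv_mul_cancel, actQ_one]
  right_inv q := by rw [actQ_mul, mul_inv_cancel, actQ_one]

lemma permQ_apply (σ : S) (q : Q Γ G) : permQ Γ G σ q = actQ Γ G σ.1 σ.2 q := rfl

variable (Γ G) in
noncomputable def φ : GraphProduct Γ G →* Equiv.Perm (Q Γ G) :=
  PresentedGroup.toGroup (f := permQ Γ G) (by
    rintro r (⟨i, g, h, rfl⟩ | ⟨i, j, g, h, hadj, rfl⟩)
    · rw [map_mul, map_mul, map_inv, FreeGroup.lift_apply_of, FreeGroup.lift_apply_of,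
        FreeGroup.lift_apply_of, mul_inv_eq_one]
      ext q
      rw [Equiv.Perm.mul_apply, permQ_apply, permQ_apply, permQ_apply, actQ_mul]
    · rw [map_mul, map_mul, map_mul, map_inv, map_inv, FreeGroup.lift_apply_of,
        FreeGroup.lift_apply_of]
      have : permQ Γ G ⟨i, g⟩ * permQ Γ G ⟨j, h⟩ = permQ Γ G ⟨j, h⟩ * permQ Γ G ⟨i, g⟩ := by
        ext q
        rw [Equiv.Perm.mul_apply, Equiv.Perm.mul_apply, permQ_apply, permQ_apply,
          permQ_apply, permQ_apply, actQ_comm hadj]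
      rw [this]
      group)

variable (Γ G) in
noncomputable def nf (x : GraphProduct Γ G) : RW Γ G :=
  (φ Γ G x ⟦(⟨[], trivial⟩ : RW Γ G)⟧).out

lemma nf_spec (x : GraphProduct Γ G) :
    ⟦nf Γ G x⟧ = φ Γ G x ⟦(⟨[], trivial⟩ : RW Γ G)⟧ := Quotient.out_eq _

lemma nf_one : Eqv Γ G (nf Γ G 1).1 [] := by
  have h := nf_spec (Γ := Γ) (G := G) 1
  rw [map_one] at h
  exact Quotient.exact h

lemma nf_of_mul (σ : S) (x : GraphProduct Γ G) :
    Eqv Γ G (nf Γ G (of Γ G σ * x)).1 (smul Γ G σ.1 σ.2 (nf Γ G x).1) := by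
  have h1 : φ Γ G (of Γ G σ) = permQ Γ G σ := PresentedGroup.toGroup.of _
  have h := nf_spec (Γ := Γ) (G := G) (of Γ G σ * x)
  erw [map_mul, h1, Equiv.Perm.mul_apply, ← nf_spec, permQ_apply] at h
  exact Quotient.exact h

lemma exists_word (x : GraphProduct Γ G) : ∃ w : W, evalWord Γ G w = x := by
  obtain ⟨z, rfl⟩ := QuotientGroup.mk_surjective (s := Subgroup.normalClosure (gpRels Γ G)) x
  induction z using FreeGroup.induction_on with
  | C1 => exact ⟨[], by rw [evalWord_nil]; rfl⟩
  | of σ => exact ⟨[σ], by rw [evalWord_cons, evalWord_nil, mul_one]; rfl⟩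
  | inv_of σ _ =>
      refine ⟨[⟨σ.1, σ.2⁻¹⟩], ?_⟩
      rw [evalWord_cons, evalWord_nil, mul_one, ← of_inv]
      rfl
  | mul y z hy hz =>
      obtain ⟨wy, hwy⟩ := hy
      obtain ⟨wz, hwz⟩ := hz
      exact ⟨wy ++ wz, by rw [evalWord_append, hwy, hwz]; rfl⟩

lemma eval_nf (x : GraphProduct Γ G) : evalWord Γ G (nf Γ G x).1 = x := by
  obtain ⟨w, rfl⟩ := exists_word x
  induction w with
  | nil => rw [evalWord_nil, eval_eqv nf_one, evalWord_nil]
  | cons σ w ih =>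
      rw [evalWord_cons, eval_eqv (nf_of_mul σ (evalWord Γ G w)), eval_smul, ih]

end GPAux
namespace GPAux
set_option linter.unusedSectionVars false
set_option maxHeartbeats 1000000
open GP
attribute [local instance] Classical.propDecidable

variable {ι : Type u_1} {Γ : SimpleGraph ι} {G : ι → Type u_2} [∀ i, Group (G i)]

local notation "S" => (Σ i : ι, G i)
local notation "W" => List (Σ i : ι, G i)

variable (Γ G) in
/-- Syllable length of an element of the graph product. -/
noncomputable def lenP (x : GraphProduct Γ G) : ℕ := (nf Γ G x).1.length

variable (Γ G) in
/-- The pivot of an element at a vertex. -/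
noncomputable def pivP (i : ι) (x : GraphProduct Γ G) : Option (G i) :=
  pivot Γ G i (nf Γ G x).1

variable (Γ G) in
/-- The support multiset of an element. -/
noncomputable def suppP (x : GraphProduct Γ G) : Multiset ι :=
  ((nf Γ G x).1.map (·.1) : List ι)

lemma nf_of_mul' (i : ι) (g : G i) (x : GraphProduct Γ G) :
    Eqv Γ G (nf Γ G (of Γ G ⟨i, g⟩ * x)).1 (smul Γ G i g (nf Γ G x).1) :=
  nf_of_mul ⟨i, g⟩ x

lemma lenP_of_mul (i : ι) (g : G i) (x : GraphProduct Γ G) :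
    lenP Γ G (of Γ G ⟨i, g⟩ * x) = (smul Γ G i g (nf Γ G x).1).length :=
  eqv_length (nf_of_mul' i g x)

lemma pivP_of_mul (p i : ι) (g : G i) (x : GraphProduct Γ G) :
    pivP Γ G p (of Γ G ⟨i, g⟩ * x) = pivot Γ G p (smul Γ G i g (nf Γ G x).1) :=
  pivot_eqv (nf_of_mul' i g x)

lemma lenP_one : lenP Γ G 1 = 0 := by
  have := eqv_length (nf_one (Γ := Γ) (G := G))
  simpa [lenP] using this

lemma pivP_one (i : ι) : pivP Γ G i 1 = none := by
  have := pivot_eqv (p := i) (nf_one (Γ := Γ) (G := G))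
  simpa [pivP, pivot] using this

lemma lenP_eq_zero {x : GraphProduct Γ G} (h : lenP Γ G x = 0) : x = 1 := by
  have hnil : (nf Γ G x).1 = [] := List.length_eq_zero_iff.mp h
  have := eval_nf (Γ := Γ) (G := G) x
  rw [hnil, evalWord_nil] at this
  exact this.symm

lemma mulP_none {i : ι} {g : G i} (hg : g ≠ 1) {x : GraphProduct Γ G}
    (hp : pivP Γ G i x = none) :
    lenP Γ G (of Γ G ⟨i, g⟩ * x) = lenP Γ G x + 1 ∧
      pivP Γ G i (of Γ G ⟨i, g⟩ * x) = some g := by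
  have hs : smul Γ G i g (nf Γ G x).1 = ⟨i, g⟩ :: (nf Γ G x).1 := smul_pivot_none hg hp
  constructor
  · rw [lenP_of_mul, hs]
    rfl
  · rw [pivP_of_mul, hs, pivot_cons_self]

lemma mulP_merge {i : ι} {g : G i} (hg : g ≠ 1) {x : GraphProduct Γ G} {q : G i}
    (hp : pivP Γ G i x = some q) (hq : g * q ≠ 1) :
    lenP Γ G (of Γ G ⟨i, g⟩ * x) = lenP Γ G x ∧
      pivP Γ G i (of Γ G ⟨i, g⟩ * x) = some (g * q) := by
  obtain ⟨w₁, w₂, heq, hadj⟩ := exists_decomp hp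
  have hs : smul Γ G i g (nf Γ G x).1 = w₁ ++ ⟨i, g * q⟩ :: w₂ := by
    rw [heq, smul_decomp hg hadj, if_neg hq]
  constructor
  · rw [lenP_of_mul, hs, lenP, heq]
    simp
  · rw [pivP_of_mul, hs, pivot_decomp hadj]

lemma mulP_cancel {i : ι} {g : G i} (hg : g ≠ 1) {x : GraphProduct Γ G} {q : G i}
    (hp : pivP Γ G i x = some q) (hq : g * q = 1) :
    lenP Γ G (of Γ G ⟨i, g⟩ * x) + 1 = lenP Γ G x ∧
      pivP Γ G i (of Γ G ⟨i, g⟩ * x) = none := by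
  obtain ⟨w₁, w₂, heq, hadj⟩ := exists_decomp hp
  have hs : smul Γ G i g (nf Γ G x).1 = w₁ ++ w₂ := by
    rw [heq, smul_decomp hg hadj, if_pos hq]
  have hred : Red Γ G (w₁ ++ ⟨i, q⟩ :: w₂) := heq ▸ (nf Γ G x).2
  constructor
  · rw [lenP_of_mul, hs, lenP, heq]
    simp
    omega
  · rw [pivP_of_mul, hs, pivot_uniq hadj hred]

lemma pivP_nontriv {i : ι} {x : GraphProduct Γ G} {q : G i}
    (hp : pivP Γ G i x = some q) : q ≠ 1 := by
  obtain ⟨w₁, w₂, heq, hadj⟩ := exists_decomp hp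
  have : (⟨i, q⟩ : S) ∈ (nf Γ G x).1 := by rw [heq]; simp
  exact red_all (nf Γ G x).2 _ this

lemma nf_single {i : ι} {g : G i} (hg : g ≠ 1) :
    Eqv Γ G (nf Γ G (of Γ G ⟨i, g⟩)).1 [⟨i, g⟩] := by
  have h1 : Eqv Γ G (nf Γ G (of Γ G ⟨i, g⟩ * 1)).1 (smul Γ G i g (nf Γ G 1).1) :=
    nf_of_mul' i g 1
  rw [mul_one] at h1
  refine h1.trans ((smul_eqv g nf_one).trans ?_)
  rw [smul_pivot_none hg (by rfl : pivot Γ G i [] = none)]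
  exact Eqv.refl _

lemma lenP_single {i : ι} {g : G i} (hg : g ≠ 1) : lenP Γ G (of Γ G ⟨i, g⟩) = 1 := by
  have := eqv_length (nf_single (Γ := Γ) (G := G) hg)
  simpa [lenP] using this

lemma pivot_single_ne {i j : ι} (g : G i) (hij : ¬ i = j) :
    pivot Γ G j [⟨i, g⟩] = none := by
  rw [pivot_cons, dif_neg (by simpa using hij)]
  split <;> rfl

lemma pivP_single_eq {i : ι} {g : G i} (hg : g ≠ 1) :
    pivP Γ G i (of Γ G ⟨i, g⟩) = some g := by
  rw [pivP, pivot_eqv (nf_single hg), pivot_cons_self]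

lemma pivP_single_ne {i j : ι} {g : G i} (hg : g ≠ 1) (hij : ¬ i = j) :
    pivP Γ G j (of Γ G ⟨i, g⟩) = none := by
  rw [pivP, pivot_eqv (nf_single hg), pivot_single_ne g hij]

lemma of_ne_one {i : ι} {g : G i} (hg : g ≠ 1) : of Γ G ⟨i, g⟩ ≠ 1 := by
  intro h
  have h1 := lenP_single (Γ := Γ) (G := G) hg
  rw [h, lenP_one] at h1
  exact one_ne_zero h1.symm

lemma of_inj {i : ι} {g h : G i} (hgh : of Γ G ⟨i, g⟩ = of Γ G ⟨i, h⟩) : g = h := by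
  by_contra hne
  have h1 : of Γ G ⟨i, g⁻¹⟩ * of Γ G ⟨i, g⟩ = of Γ G ⟨i, g⁻¹⟩ * of Γ G ⟨i, h⟩ := by
    rw [hgh]
  rw [of_mul, of_mul, inv_mul_cancel, of_one] at h1
  exact of_ne_one (fun hh => hne (by
    have := congrArg (fun z => g * z) hh
    simpa using this.symm)) h1.symm

lemma lenP_eq_one {x : GraphProduct Γ G} (h : lenP Γ G x = 1) :
    ∃ (i : ι) (g : G i), g ≠ 1 ∧ x = of Γ G ⟨i, g⟩ := by
  obtain ⟨t, ht⟩ := List.length_eq_one_iff.mp h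
  refine ⟨t.1, t.2, red_all (nf Γ G x).2 t (by rw [ht]; simp), ?_⟩
  have := eval_nf (Γ := Γ) (G := G) x
  rw [ht, evalWord_cons, evalWord_nil, mul_one] at this
  exact this.symm

lemma lenP_mul_le (i : ι) (g : G i) (x : GraphProduct Γ G) :
    lenP Γ G (of Γ G ⟨i, g⟩ * x) ≤ lenP Γ G x + 1 := by
  by_cases hg : g = 1
  · rw [hg, of_one, one_mul]
    omega
  cases hp : pivP Γ G i x with
  | none => rw [(mulP_none hg hp).1]
  | some q =>
      by_cases hq : g * q = 1
      · have := (mulP_cancel hg hp hq).1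
        omega
      · rw [(mulP_merge hg hp hq).1]
        omega

lemma pivot_adj {i j : ι} (hij : i ≠ j) {q : G i} {r : G j} :
    ∀ {w : W}, pivot Γ G i w = some q → pivot Γ G j w = some r → Γ.Adj i j
  | [], hpi, _ => by simp [pivot] at hpi
  | t :: w, hpi, hpj => by
      rw [pivot_cons] at hpi hpj
      by_cases hti : t.1 = i
      · rw [dif_neg (hti ▸ (by simpa using hij) : ¬ t.1 = j)] at hpj
        split at hpj
        · exact (hti ▸ ‹Γ.Adj j t.1›).symm
        · simp at hpj
      · by_cases htj : t.1 = j
        · rw [dif_neg (htj ▸ (by simpa using hij.symm) : ¬ t.1 = i)] at hpi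
          split at hpi
          · exact htj ▸ ‹Γ.Adj i t.1›
          · simp at hpi
        · rw [dif_neg hti] at hpi
          rw [dif_neg htj] at hpj
          split at hpi
          · split at hpj
            · exact pivot_adj hij hpi hpj
            · simp at hpj
          · simp at hpi

lemma pivP_adj {i j : ι} (hij : i ≠ j) {x : GraphProduct Γ G} {q : G i} {r : G j}
    (hq : pivP Γ G i x = some q) (hr : pivP Γ G j x = some r) : Γ.Adj i j :=
  pivot_adj hij hq hr

lemma pivP_stab {p i : ι} (hadj : Γ.Adj p i) {x : GraphProduct Γ G} {q : G i}
    (hq : pivP Γ G i x = some q) :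
    pivP Γ G p (of Γ G ⟨i, q⁻¹⟩ * x) = pivP Γ G p x := by
  have hq1 : q⁻¹ ≠ 1 := fun h => pivP_nontriv hq (by simpa using congrArg Inv.inv h)
  obtain ⟨w₁, w₂, heq, hadjw⟩ := exists_decomp hq
  have hs : smul Γ G i q⁻¹ (nf Γ G x).1 = w₁ ++ w₂ := by
    rw [heq, smul_decomp hq1 hadjw, if_pos (inv_mul_cancel q)]
  rw [pivP_of_mul, hs, pivP, heq, pivot_stab hadj q w₁ w₂]

end GPAux
namespace GPAux
set_option linter.unusedSectionVars false
set_option maxHeartbeats 1000000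
open GP
attribute [local instance] Classical.propDecidable

variable {ι : Type u_1} {Γ : SimpleGraph ι} {G : ι → Type u_2} [∀ i, Group (G i)]

local notation "S" => (Σ i : ι, G i)
local notation "W" => List (Σ i : ι, G i)

lemma adj_iff {x y : GraphProduct Γ G} :
    (CayleyGraph Γ G).Adj x y ↔
      x ≠ y ∧ ∃ (i : ι) (g : G i), g ≠ 1 ∧ y = x * of Γ G ⟨i, g⟩ := by
  rw [CayleyGraph, SimpleGraph.fromRel_adj]
  constructor
  · rintro ⟨hne, (⟨i, g, hg, hy⟩ | ⟨i, g, hg, hx⟩)⟩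
    · exact ⟨hne, i, g, hg, hy⟩
    · refine ⟨hne, i, g⁻¹, fun h => hg (by simpa using congrArg Inv.inv h), ?_⟩
      rw [hx, mul_assoc, of_mul, mul_inv_cancel, of_one, mul_one]
  · rintro ⟨hne, i, g, hg, hy⟩
    exact ⟨hne, Or.inl ⟨i, g, hg, hy⟩⟩

lemma adj_mul_of {x : GraphProduct Γ G} {i : ι} {g : G i} (hg : g ≠ 1) :
    (CayleyGraph Γ G).Adj x (x * of Γ G ⟨i, g⟩) := by
  rw [adj_iff]
  constructor
  · intro h
    refine of_ne_one (Γ := Γ) hg ?_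
    have := congrArg (fun z => x⁻¹ * z) h
    simpa using this.symm
  · exact ⟨i, g, hg, rfl⟩

lemma exists_walk (a : GraphProduct Γ G) :
    ∀ (n : ℕ) (x : GraphProduct Γ G), lenP Γ G (x⁻¹ * a) = n →
      ∃ p : (CayleyGraph Γ G).Walk a x, p.length = n := by
  intro n
  induction n with
  | zero =>
      intro x hx
      have : x = a := inv_mul_eq_one.mp (lenP_eq_zero hx)
      subst this
      exact ⟨SimpleGraph.Walk.nil, rfl⟩
  | succ n ih =>
      intro x hx
      cases hw : (nf Γ G (x⁻¹ * a)).1 with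
      | nil =>
          rw [lenP, hw] at hx
          simp at hx
      | cons s w' =>
          have hred : Red Γ G (s :: w') := hw ▸ (nf Γ G (x⁻¹ * a)).2
          have hs2 : s.2 ≠ 1 := hred.1
          have hpiv : pivP Γ G s.1 (x⁻¹ * a) = some s.2 := by
            rw [pivP, hw, pivot_cons, dif_pos rfl]
          set x' := x * of Γ G ⟨s.1, s.2⟩ with hx'
          have hinv : x'⁻¹ * a = of Γ G ⟨s.1, s.2⁻¹⟩ * (x⁻¹ * a) := by
            rw [hx', mul_inv_rev, ← of_inv, mul_assoc]
          have hlen : lenP Γ G (x'⁻¹ * a) + 1 = lenP Γ G (x⁻¹ * a) := by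
            rw [hinv]
            exact (mulP_cancel (fun h => hs2 (by simpa using congrArg Inv.inv h))
              hpiv (inv_mul_cancel s.2)).1
          have hlen' : lenP Γ G (x'⁻¹ * a) = n := by omega
          obtain ⟨p, hp⟩ := ih x' hlen'
          have hadj : (CayleyGraph Γ G).Adj x' x := by
            have h1 : x' * of Γ G ⟨s.1, s.2⁻¹⟩ = x := by
              rw [hx', mul_assoc, of_mul, mul_inv_cancel, of_one, mul_one]
            have h2 := adj_mul_of (x := x') (i := s.1) (g := s.2⁻¹)
              (fun h => hs2 (by simpa using congrArg Inv.inv h))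
            rwa [h1] at h2
          exact ⟨p.concat hadj, by rw [SimpleGraph.Walk.length_concat, hp]⟩

lemma len_le_walk (a : GraphProduct Γ G) :
    ∀ {x : GraphProduct Γ G} (p : (CayleyGraph Γ G).Walk x a),
      lenP Γ G (x⁻¹ * a) ≤ p.length := by
  intro x p
  induction p with
  | nil => simp [lenP_one]
  | @cons x b a h p ih =>
      rw [adj_iff] at h
      obtain ⟨hne, i, g, hg, hb⟩ := h
      have : x⁻¹ * a = of Γ G ⟨i, g⟩ * (b⁻¹ * a) := by
        rw [hb, mul_inv_rev]
        group
      rw [this, SimpleGraph.Walk.length_cons]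
      calc lenP Γ G (of Γ G ⟨i, g⟩ * (b⁻¹ * a)) ≤ lenP Γ G (b⁻¹ * a) + 1 :=
            lenP_mul_le i g _
      _ ≤ p.length + 1 := by omega
  -- note: direction of inverse may need care

lemma dist_eq (a x : GraphProduct Γ G) :
    (CayleyGraph Γ G).dist a x = lenP Γ G (x⁻¹ * a) := by
  obtain ⟨p, hp⟩ := exists_walk a (lenP Γ G (x⁻¹ * a)) x rfl
  have hreach : (CayleyGraph Γ G).Reachable a x := ⟨p⟩
  refine le_antisymm (hp ▸ SimpleGraph.dist_le p) ?_
  obtain ⟨q, hq⟩ := hreach.exists_walk_length_eq_dist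
  have := len_le_walk a q.reverse
  rwa [SimpleGraph.Walk.length_reverse, hq] at this

lemma connected : (CayleyGraph Γ G).Connected := by
  have hpre : (CayleyGraph Γ G).Preconnected := by
    intro u v
    obtain ⟨p, _⟩ := exists_walk u (lenP Γ G (v⁻¹ * u)) v rfl
    exact ⟨p⟩
  haveI : Nonempty (GraphProduct Γ G) := ⟨1⟩
  exact ⟨hpre⟩

end GPAux
namespace GPAux
set_option linter.unusedSectionVars false
set_option maxHeartbeats 1000000
open GP QM
attribute [local instance] Classical.propDecidable

variable {ι : Type u_1} {Γ : SimpleGraph ι} {G : ι → Type u_2} [∀ i, Group (G i)]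

local notation "S" => (Σ i : ι, G i)
local notation "W" => List (Σ i : ι, G i)

theorem triangle : TriangleCondition (CayleyGraph Γ G) := by
  intro a x y hxy hdist
  obtain ⟨hne, i, g, hg, hy⟩ := adj_iff.mp hxy
  rw [dist_eq, dist_eq] at hdist
  have hu : y⁻¹ * a = of Γ G ⟨i, g⁻¹⟩ * (x⁻¹ * a) := by
    rw [hy, mul_inv_rev, ← of_inv]
    group
  have hg1 : g⁻¹ ≠ 1 := inv_ne_one.mpr hg
  cases hp : pivP Γ G i (x⁻¹ * a) with
  | none =>
      exfalso
      have h1 := (mulP_none hg1 hp).1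
      rw [← hu] at h1
      omega
  | some q =>
      have hqne : q ≠ 1 := pivP_nontriv hp
      by_cases hc : g⁻¹ * q = 1
      · exfalso
        have h1 := (mulP_cancel hg1 hp hc).1
        rw [← hu] at h1
        omega
      · refine ⟨x * of Γ G ⟨i, q⟩, adj_mul_of hqne, ?_, ?_⟩
        · have hz : x * of Γ G ⟨i, q⟩ = y * of Γ G ⟨i, g⁻¹ * q⟩ := by
            rw [hy, mul_assoc, of_mul, mul_inv_cancel_left]
          rw [hz]
          exact adj_mul_of hc
        · rw [dist_eq, dist_eq]
          have hzinv : (x * of Γ G ⟨i, q⟩)⁻¹ * a = of Γ G ⟨i, q⁻¹⟩ * (x⁻¹ * a) := by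
            rw [mul_inv_rev, ← of_inv]
            group
          rw [hzinv]
          exact (mulP_cancel (inv_ne_one.mpr hqne) hp (inv_mul_cancel q)).1

theorem quadrangle : QuadrangleCondition (CayleyGraph Γ G) := by
  intro a x y z hxz hyz hxy hdxy hdxz
  obtain ⟨hnexz, i, g, hg, hz1⟩ := adj_iff.mp hxz
  obtain ⟨hneyz, j, h, hh, hz2⟩ := adj_iff.mp hyz
  rw [dist_eq, dist_eq] at hdxy
  rw [dist_eq, dist_eq] at hdxz
  have hu : x⁻¹ * a = of Γ G ⟨i, g⟩ * (z⁻¹ * a) := by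
    rw [hz1, mul_inv_rev]
    group
  have hv : y⁻¹ * a = of Γ G ⟨j, h⟩ * (z⁻¹ * a) := by
    rw [hz2, mul_inv_rev]
    group
  have hpi : pivP Γ G i (z⁻¹ * a) = some g⁻¹ := by
    cases hp : pivP Γ G i (z⁻¹ * a) with
    | none =>
        exfalso
        have h1 := (mulP_none hg hp).1
        rw [← hu] at h1
        omega
    | some q =>
        by_cases hc : g * q = 1
        · exact congrArg some (eq_inv_of_mul_eq_one_right hc)
        · exfalso
          have h1 := (mulP_merge hg hp hc).1
          rw [← hu] at h1
          omega
  have hpj : pivP Γ G j (z⁻¹ * a) = some h⁻¹ := by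
    cases hp : pivP Γ G j (z⁻¹ * a) with
    | none =>
        exfalso
        have h1 := (mulP_none hh hp).1
        rw [← hv] at h1
        omega
    | some q =>
        by_cases hc : h * q = 1
        · exact congrArg some (eq_inv_of_mul_eq_one_right hc)
        · exfalso
          have h1 := (mulP_merge hh hp hc).1
          rw [← hv] at h1
          omega
  have hij : i ≠ j := by
    rintro rfl
    rw [hpi] at hpj
    have hgh : g = h := by
      have := Option.some.inj hpj
      simpa using congrArg Inv.inv this
    apply hxy
    have : x * of Γ G ⟨i, g⟩ = y * of Γ G ⟨i, g⟩ := by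
      rw [← hz1, hz2, hgh]
    exact mul_right_cancel this
  have hadj : Γ.Adj i j := pivP_adj hij hpi hpj
  refine ⟨x * of Γ G ⟨j, h⁻¹⟩, adj_mul_of (inv_ne_one.mpr hh), ?_, ?_⟩
  · have hx' : x = z * of Γ G ⟨i, g⁻¹⟩ := by
      rw [hz1, mul_assoc, of_mul, mul_inv_cancel, of_one, mul_one]
    have hy' : y = z * of Γ G ⟨j, h⁻¹⟩ := by
      rw [hz2, mul_assoc, of_mul, mul_inv_cancel, of_one, mul_one]
    have hw : x * of Γ G ⟨j, h⁻¹⟩ = y * of Γ G ⟨i, g⁻¹⟩ := by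
      rw [hx', hy', mul_assoc, mul_assoc,
        of_comm (s := (⟨i, g⁻¹⟩ : S)) (t := (⟨j, h⁻¹⟩ : S)) hadj]
    rw [hw]
    exact adj_mul_of (inv_ne_one.mpr hg)
  · rw [dist_eq, dist_eq]
    have hwinv : (x * of Γ G ⟨j, h⁻¹⟩)⁻¹ * a = of Γ G ⟨j, h⟩ * (x⁻¹ * a) := by
      rw [mul_inv_rev, ← of_inv, inv_inv]
      group
    have hpu : pivP Γ G j (x⁻¹ * a) = some h⁻¹ := by
      have hst := pivP_stab (hadj.symm) hpi
      rw [inv_inv] at hst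
      rw [hu, hst, hpj]
    have hcan := (mulP_cancel hh hpu (mul_inv_cancel h)).1
    rw [hwinv]
    omega

theorem noK4Minus : NoK4Minus (CayleyGraph Γ G) := by
  rintro ⟨a, b, c, d, hab, hac, had, hbc, hbd, hncd, hcd⟩
  obtain ⟨hne1, i, g, hg, hb⟩ := adj_iff.mp hab
  obtain ⟨hne2, k, p, hp, hc⟩ := adj_iff.mp hac
  obtain ⟨hne3, l, r, hr, hd⟩ := adj_iff.mp had
  obtain ⟨hne4, k', p', hp', hc'⟩ := adj_iff.mp hbc
  obtain ⟨hne5, l', r', hr', hd'⟩ := adj_iff.mp hbd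
  have key : ∀ (m : ι) (u : G m), u ≠ 1 → ∀ (m' : ι) (u' : G m'), u' ≠ 1 →
      of Γ G ⟨m, u⟩ = of Γ G ⟨i, g⟩ * of Γ G ⟨m', u'⟩ → i = m' := by
    intro m u hu m' u' hu' heq
    by_contra hik
    have hpiv : pivP Γ G i (of Γ G ⟨m', u'⟩) = none :=
      pivP_single_ne hu' (fun hh => hik hh.symm)
    have h2 : lenP Γ G (of Γ G ⟨i, g⟩ * of Γ G ⟨m', u'⟩) = 2 := by
      rw [(mulP_none hg hpiv).1, lenP_single hu']
    rw [← heq, lenP_single hu] at h2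
    omega
  have e1 : of Γ G ⟨k, p⟩ = of Γ G ⟨i, g⟩ * of Γ G ⟨k', p'⟩ := by
    have hx : a * of Γ G ⟨k, p⟩ = a * (of Γ G ⟨i, g⟩ * of Γ G ⟨k', p'⟩) := by
      rw [← mul_assoc, ← hb, ← hc', hc]
    exact mul_left_cancel hx
  have e2 : of Γ G ⟨l, r⟩ = of Γ G ⟨i, g⟩ * of Γ G ⟨l', r'⟩ := by
    have hx : a * of Γ G ⟨l, r⟩ = a * (of Γ G ⟨i, g⟩ * of Γ G ⟨l', r'⟩) := by
      rw [← mul_assoc, ← hb, ← hd', hd]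
    exact mul_left_cancel hx
  obtain rfl : i = k' := key _ _ hp _ _ hp' e1
  obtain rfl : i = l' := key _ _ hr _ _ hr' e2
  rw [of_mul] at e1 e2
  have hcα : c = a * of Γ G ⟨i, g * p'⟩ := by rw [hc, e1]
  have hdβ : d = a * of Γ G ⟨i, g * r'⟩ := by rw [hd, e2]
  apply hncd
  rw [adj_iff]
  refine ⟨hcd, i, (g * p')⁻¹ * (g * r'), ?_, ?_⟩
  · intro h1
    apply hcd
    have h2 : g * p' = g * r' := inv_mul_eq_one.mp h1
    rw [hcα, hdβ, h2]
  · rw [hcα, hdβ, mul_assoc, of_mul, mul_inv_cancel_left]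

lemma supp_two {i k : ι} (hik : i ≠ k) {g : G i} {p : G k} (hg : g ≠ 1) (hp : p ≠ 1) :
    suppP Γ G (of Γ G ⟨i, g⟩ * of Γ G ⟨k, p⟩) = ↑[i, k] := by
  have hnf : Eqv Γ G (nf Γ G (of Γ G ⟨i, g⟩ * of Γ G ⟨k, p⟩)).1 [⟨i, g⟩, ⟨k, p⟩] :=
    (nf_of_mul' i g _).trans ((smul_eqv g (nf_single hp)).trans (by
      rw [smul_pivot_none hg (pivot_single_ne p (fun hh => hik hh.symm))]
      exact Eqv.refl _))
  have hperm := (eqv_perm hnf).map (fun s : S => s.1)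
  rw [suppP]
  rw [Multiset.coe_eq_coe.mpr hperm]
  rfl

theorem noK32 : NoK32 (CayleyGraph Γ G) := by
  rintro ⟨a, b, c, d, e, hab, hbc, hac, hde, hnab, hnbc, hnac, hnde, had, hae, hbd,
    hbe, hcd, hce⟩
  obtain ⟨_, ia, ga, hga, ha'⟩ := adj_iff.mp had.symm
  obtain ⟨_, ib, gb, hgb, hb'⟩ := adj_iff.mp hbd.symm
  obtain ⟨_, ic, gc, hgc, hc'⟩ := adj_iff.mp hcd.symm
  obtain ⟨_, ja, ka, hka, he1⟩ := adj_iff.mp hae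
  obtain ⟨_, jb, kb, hkb, he2⟩ := adj_iff.mp hbe
  obtain ⟨_, jc, kc, hkc, he3⟩ := adj_iff.mp hce
  have hE1 : d⁻¹ * e = of Γ G ⟨ia, ga⟩ * of Γ G ⟨ja, ka⟩ := by
    rw [he1, ha']
    group
  have hE2 : d⁻¹ * e = of Γ G ⟨ib, gb⟩ * of Γ G ⟨jb, kb⟩ := by
    rw [he2, hb']
    group
  have hE3 : d⁻¹ * e = of Γ G ⟨ic, gc⟩ * of Γ G ⟨jc, kc⟩ := by
    rw [he3, hc']
    group
  have hEne : d⁻¹ * e ≠ 1 := fun h1 => hde (inv_mul_eq_one.mp h1)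
  have hlen1 : lenP Γ G (d⁻¹ * e) ≠ 1 := by
    intro h1
    obtain ⟨m, gm, hgm, hEm⟩ := lenP_eq_one h1
    apply hnde
    rw [adj_iff]
    refine ⟨hde, m, gm, hgm, ?_⟩
    rw [← hEm]
    group
  have hsep : ∀ (m : ι) (u : G m) (m' : ι) (u' : G m'), u ≠ 1 →
      d⁻¹ * e = of Γ G ⟨m, u⟩ * of Γ G ⟨m', u'⟩ → m ≠ m' := by
    rintro m u m' u' hu hE rfl
    rw [of_mul] at hE
    by_cases hz : u * u' = 1
    · rw [hz, of_one] at hE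
      exact hEne hE
    · exact hlen1 (by rw [hE, lenP_single hz])
  have hd1 : ia ≠ ja := hsep _ _ _ _ hga hE1
  have hd2 : ib ≠ jb := hsep _ _ _ _ hgb hE2
  have hd3 : ic ≠ jc := hsep _ _ _ _ hgc hE3
  have hs1 : suppP Γ G (d⁻¹ * e) = ↑[ia, ja] := by rw [hE1]; exact supp_two hd1 hga hka
  have hs2 : suppP Γ G (d⁻¹ * e) = ↑[ib, jb] := by rw [hE2]; exact supp_two hd2 hgb hkb
  have hs3 : suppP Γ G (d⁻¹ * e) = ↑[ic, jc] := by rw [hE3]; exact supp_two hd3 hgc hkc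
  have hne_ab : ia ≠ ib := by
    rintro rfl
    apply hnab
    rw [adj_iff]
    refine ⟨hab, ia, ga⁻¹ * gb, ?_, ?_⟩
    · intro h1
      apply hab
      rw [ha', hb', inv_mul_eq_one.mp h1]
    · rw [hb', ha', mul_assoc, of_mul, mul_inv_cancel_left]
  have hne_bc : ib ≠ ic := by
    rintro rfl
    apply hnbc
    rw [adj_iff]
    refine ⟨hbc, ib, gb⁻¹ * gc, ?_, ?_⟩
    · intro h1
      apply hbc
      rw [hb', hc', inv_mul_eq_one.mp h1]
    · rw [hc', hb', mul_assoc, of_mul, mul_inv_cancel_left]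
  have hne_ac : ia ≠ ic := by
    rintro rfl
    apply hnac
    rw [adj_iff]
    refine ⟨hac, ia, ga⁻¹ * gc, ?_, ?_⟩
    · intro h1
      apply hac
      rw [ha', hc', inv_mul_eq_one.mp h1]
    · rw [hc', ha', mul_assoc, of_mul, mul_inv_cancel_left]
  have hmema : ia ∈ ([ib, jb] : Multiset ι) := by
    rw [← hs2, hs1]
    simp
  have hmemc : ic ∈ ([ib, jb] : Multiset ι) := by
    rw [← hs2, hs3]
    simp
  have hmema' : ia = ib ∨ ia = jb := by simpa using hmema
  have hmemc' : ic = ib ∨ ic = jb := by simpa using hmemc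
  rcases hmema' with h1 | h1
  · exact hne_ab h1
  · rcases hmemc' with h2 | h2
    · exact hne_bc h2.symm
    · exact hne_ac (h1.trans h2.symm)

end GPAux


open QM GP

/-- The Cayley graph of a graph product of nontrivial groups, with respect to the union of
the vertex groups minus the identity, is a quasi-median graph. -/
theorem cayleyGraph_graphProduct_quasiMedian
    {ι : Type*} (Γ : SimpleGraph ι) (G : ι → Type*) [∀ i, Group (G i)]
    [∀ i, Nontrivial (G i)] :
    QuasiMedian (CayleyGraph Γ G) :=
  ⟨GPAux.connected, GPAux.noK4Minus, GPAux.noK32, GPAux.triangle, GPAux.quadrangle⟩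
end

section
/- In a quasi-median graph X, a connected induced subgraph Y is gated if and only if it is locally convex (any 4-cycle of X having two adjacent edges in Y lies entirely in Y) and contains its triangles (any 3-cycle of X sharing an edge with Y lies entirely in Y). -/
open QM

namespace QMAux

open SimpleGraph

variable {V : Type*} {X : SimpleGraph V}

lemma dist_le_adj (hc : X.Connected) {a b : V} (h : X.Adj a b) (u : V) :
    X.dist u a ≤ X.dist u b + 1 := by
  have h1 : X.dist b a = 1 := SimpleGraph.dist_eq_one_iff_adj.mpr h.symm
  calc X.dist u a ≤ X.dist u b + X.dist b a := hc.dist_triangle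
    _ = X.dist u b + 1 := by rw [h1]

lemma exists_toward (hc : X.Connected) {u z : V} {m : ℕ} (h : X.dist u z = m + 1) :
    ∃ t : V, X.Adj z t ∧ X.dist u t = m := by
  have h' : X.dist z u = m + 1 := by rwa [SimpleGraph.dist_comm]
  obtain ⟨p, hp⟩ := hc.exists_walk_length_eq_dist z u
  cases p with
  | nil => simp_all
  | @cons _ t _ hadj q =>
    refine ⟨t, hadj, ?_⟩
    have hq : q.length = m := by
      have := hp
      simp [SimpleGraph.Walk.length_cons] at this
      omega
    have h1 : X.dist t u ≤ m := hq ▸ SimpleGraph.dist_le q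
    have h2 : X.dist u t ≤ m := by rwa [SimpleGraph.dist_comm]
    have h3 : X.dist u z ≤ X.dist u t + 1 := dist_le_adj hc hadj u
    omega

section SSec

variable (hc : X.Connected)
  (htc : ∀ a x y : V, X.Adj x y → X.dist a x = X.dist a y →
    ∃ z : V, X.Adj x z ∧ X.Adj y z ∧ X.dist a z + 1 = X.dist a x)
  (hqc : ∀ a x y z : V, X.Adj x z → X.Adj y z → x ≠ y →
    X.dist a x = X.dist a y → X.dist a x + 1 = X.dist a z →
    ∃ w : V, X.Adj x w ∧ X.Adj y w ∧ X.dist a w + 2 = X.dist a z)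
  {S : Set V}
  (hloc : ∀ a b c d : V, X.Adj a b → X.Adj b c → X.Adj c d → X.Adj d a → a ≠ c → b ≠ d →
        a ∈ S → b ∈ S → c ∈ S → d ∈ S)
  (htri : ∀ a b c : V, X.Adj a b → X.Adj b c → X.Adj a c → a ∈ S → b ∈ S → c ∈ S)

include hc htc hqc hloc htri in
lemma lemN : ∀ n : ℕ, ∀ (U Z : ↥S) (t : V),
    (∃ w : (X.induce S).Walk Z U, w.length ≤ n) →
    X.Adj t Z.1 → X.dist U.1 t + 1 = X.dist U.1 Z.1 →
    ∃ ht : t ∈ S, ∃ w : (X.induce S).Walk ⟨t, ht⟩ U, w.length ≤ n := by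
  intro n
  induction n with
  | zero =>
    intro U Z t ⟨w, hw⟩ hadj hdist
    have hzu : Z = U := SimpleGraph.Walk.eq_of_length_eq_zero (Nat.le_zero.mp hw)
    subst hzu
    simp [SimpleGraph.dist_self] at hdist
  | succ n IH =>
    intro U Z t ⟨w, hw⟩ hadj hdist
    obtain ⟨u, hu⟩ := U
    obtain ⟨z, hz⟩ := Z
    cases w with
    | nil =>
      simp [SimpleGraph.dist_self] at hdist
    | @cons _ b _ hadjb p =>
      obtain ⟨w₀, hw₀⟩ := b
      have hplen : p.length ≤ n := by
        simp [SimpleGraph.Walk.length_cons] at hw; omega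
      have hzw₀ : X.Adj z w₀ := hadjb
      have hadj2 : X.Adj t z := hadj
      have hdist2 : X.dist u t + 1 = X.dist u z := hdist
      have hk1 : 1 ≤ X.dist u z := by omega
      by_cases hkone : X.dist u z = 1
      · have h0 : X.dist u t = 0 := by omega
        have htu : u = t := (hc.dist_eq_zero_iff).mp h0
        subst htu
        exact ⟨hu, SimpleGraph.Walk.nil, by simp⟩
      · have hk2 : 2 ≤ X.dist u z := by omega
        have hb1 : X.dist u w₀ ≤ X.dist u z + 1 := dist_le_adj hc hzw₀.symm u
        have hb2 : X.dist u z ≤ X.dist u w₀ + 1 := dist_le_adj hc hzw₀ u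
        have htcases : X.dist u w₀ + 1 = X.dist u z ∨ X.dist u w₀ = X.dist u z ∨
            X.dist u w₀ = X.dist u z + 1 := by omega
        rcases htcases with hcase | hcase | hcase
        · -- downhill neighbor w₀
          by_cases htw : t = w₀
          · subst htw
            exact ⟨hw₀, p, le_trans hplen (Nat.le_succ n)⟩
          · obtain ⟨q, hq1, hq2, hq3⟩ :=
              hqc u t w₀ z hadj2 hzw₀.symm htw (by omega) hdist2
            have hqd : X.dist u q + 1 = X.dist u w₀ := by omega
            obtain ⟨hqS, wq, hwq⟩ := IH ⟨u, hu⟩ ⟨w₀, hw₀⟩ q ⟨p, hplen⟩ hq2.symm hqd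
            have htS : t ∈ S := by
              refine hloc q w₀ z t hq2.symm hzw₀.symm hadj2.symm hq1 ?_ (Ne.symm htw) hqS hw₀ hz
              intro hqz; rw [hqz] at hq3; omega
            refine ⟨htS, SimpleGraph.Walk.cons (by exact hq1) wq, ?_⟩
            show wq.length + 1 ≤ n + 1; omega
        · -- level neighbor w₀ : triangle condition
          obtain ⟨r, hr1, hr2, hr3⟩ := htc u z w₀ hzw₀ (by omega)
          have hrS : r ∈ S := htri z w₀ r hzw₀ hr2 hr1 hz hw₀
          have hrd : X.dist u r + 1 = X.dist u w₀ := by omega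
          obtain ⟨hrS', wr, hwr⟩ := IH ⟨u, hu⟩ ⟨w₀, hw₀⟩ r ⟨p, hplen⟩ hr2.symm hrd
          by_cases htr : t = r
          · subst htr
            exact ⟨hrS', wr, le_trans hwr (Nat.le_succ n)⟩
          · obtain ⟨q, hq1, hq2, hq3⟩ :=
              hqc u t r z hadj2 hr1.symm htr (by omega) hdist2
            have hqd : X.dist u q + 1 = X.dist u r := by omega
            obtain ⟨hqS, wq, hwq⟩ := IH ⟨u, hu⟩ ⟨r, hrS'⟩ q ⟨wr, hwr⟩ hq2.symm hqd
            have htS : t ∈ S := by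
              refine hloc q r z t hq2.symm hr1.symm hadj2.symm hq1 ?_ (Ne.symm htr) hqS hrS' hz
              intro hqz; rw [hqz] at hq3; omega
            refine ⟨htS, SimpleGraph.Walk.cons (by exact hq1) wq, ?_⟩
            show wq.length + 1 ≤ n + 1; omega
        · -- uphill neighbor w₀ : shorten walk to z
          have hzd : X.dist u z + 1 = X.dist u w₀ := by omega
          obtain ⟨hzS', wz, hwz⟩ := IH ⟨u, hu⟩ ⟨w₀, hw₀⟩ z ⟨p, hplen⟩ hzw₀ hzd
          obtain ⟨htS, wt, hwt⟩ := IH ⟨u, hu⟩ ⟨z, hzS'⟩ t ⟨wz, hwz⟩ hadj2 hdist2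
          exact ⟨htS, wt, le_trans hwt (Nat.le_succ n)⟩

include hc htc hqc hloc htri in
lemma towardS (hconn : (X.induce S).Connected) {u z t : V} (hu : u ∈ S) (hz : z ∈ S)
    (hadj : X.Adj t z) (hdist : X.dist u t + 1 = X.dist u z) : t ∈ S := by
  obtain ⟨w⟩ := hconn.preconnected ⟨z, hz⟩ ⟨u, hu⟩
  obtain ⟨ht, -⟩ :=
    lemN hc htc hqc hloc htri w.length ⟨u, hu⟩ ⟨z, hz⟩ t ⟨w, le_refl _⟩ hadj hdist
  exact ht

include hc htc hqc hloc htri in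
lemma convexS (hconn : (X.induce S).Connected) {u z v : V} (hu : u ∈ S) (hz : z ∈ S)
    (hgeo : X.dist u v + X.dist v z = X.dist u z) : v ∈ S := by
  obtain ⟨n, hn⟩ : ∃ n, X.dist v z = n := ⟨_, rfl⟩
  induction n generalizing z with
  | zero =>
    have : v = z := (hc.dist_eq_zero_iff).mp hn
    exact this ▸ hz
  | succ n IH =>
    obtain ⟨t, htz, htd⟩ := exists_toward hc hn
    have h1 : X.dist u t ≤ X.dist u v + n := by
      calc X.dist u t ≤ X.dist u v + X.dist v t := hc.dist_triangle
        _ = X.dist u v + n := by rw [htd]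
    have h2 : X.dist u z ≤ X.dist u t + 1 := dist_le_adj hc htz u
    have h3 : X.dist u t + 1 = X.dist u z := by omega
    have htS : t ∈ S := towardS hc htc hqc hloc htri hconn hu hz htz.symm h3
    exact IH htS (by omega) htd

include hc htc hqc hloc htri in
lemma gateS (hconn : (X.induce S).Connected) (x : V) :
    ∃ y ∈ S, ∀ z ∈ S, X.dist x z = X.dist x y + X.dist y z := by
  have hne : Nonempty ↥S := hconn.nonempty
  obtain ⟨⟨y₀, hy₀⟩⟩ := hne
  have hD : ({n | ∃ s ∈ S, X.dist x s = n} : Set ℕ).Nonempty := ⟨_, y₀, hy₀, rfl⟩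
  set p := sInf {n | ∃ s ∈ S, X.dist x s = n} with hp
  obtain ⟨y, hyS, hyd⟩ := Nat.sInf_mem hD
  have hmin : ∀ s ∈ S, p ≤ X.dist x s := fun s hs => Nat.sInf_le ⟨s, hs, rfl⟩
  have main : ∀ M : ℕ, ∀ z ∈ S, X.dist y z = M → X.dist x z = p + M := by
    intro M
    induction M using Nat.strong_induction_on with
    | _ M ihM =>
      suffices H : ∀ k : ℕ, ∀ z ∈ S, X.dist y z = M → X.dist x z = k → k = p + M by
        intro z hz hM
        exact H _ z hz hM rfl
      intro k
      induction k using Nat.strong_induction_on with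
      | _ k ihk =>
        intro z hz hMz hkz
        rcases Nat.eq_zero_or_pos M with hM0 | hMpos
        · subst hM0
          have : y = z := (hc.dist_eq_zero_iff).mp hMz
          subst this
          omega
        · obtain ⟨M0, rfl⟩ : ∃ M0, M = M0 + 1 := ⟨M - 1, by omega⟩
          obtain ⟨z', hz'adj, hz'd⟩ := exists_toward hc hMz
          have hz'S : z' ∈ S := by
            refine convexS hc htc hqc hloc htri hconn hyS hz ?_
            have : X.dist z' z = 1 := SimpleGraph.dist_eq_one_iff_adj.mpr hz'adj.symm
            omega
          have hxz' : X.dist x z' = p + M0 := ihM M0 (by omega) z' hz'S hz'd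
          have hb1 : X.dist x z ≤ X.dist x z' + 1 := dist_le_adj hc hz'adj x
          have hb2 : X.dist x z' ≤ X.dist x z + 1 := dist_le_adj hc hz'adj.symm x
          have hkp : p ≤ k := hkz ▸ hmin z hz
          have hktri : k ≤ p + (M0 + 1) := by
            have := hc.dist_triangle (u := x) (v := z) (w := y)
            omega
          have hcases : k = p + M0 + 1 ∨ k = p + M0 ∨ k + 1 = p + M0 := by omega
          rcases hcases with hcase | hcase | hcase
          · omega
          · -- k = p + M0 : triangle condition from x on edge (z, z')
            exfalso
            obtain ⟨t, ht1, ht2, ht3⟩ := htc x z z' hz'adj (by omega)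
            have htS : t ∈ S := htri z z' t hz'adj ht2 ht1 hz hz'S
            have hyt1 : X.dist y t ≤ M0 + 1 := by
              have := dist_le_adj hc ht2.symm y; omega
            have hyt2 : M0 ≤ X.dist y t := by
              have := dist_le_adj hc ht1 y
              omega
            rcases Nat.eq_or_lt_of_le hyt2 with hyt | hyt
            · have := ihM M0 (by omega) t htS hyt.symm
              omega
            · have hytM : X.dist y t = M0 + 1 := by omega
              have := ihk (X.dist x t) (by omega) t htS hytM rfl
              omega
          · -- k + 1 = p + M0
            exfalso
            have hM0pos : 1 ≤ M0 := by omega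
            obtain ⟨M1, hM1⟩ : ∃ M1, M0 = M1 + 1 := ⟨M0 - 1, by omega⟩
            obtain ⟨z'', hz''adj, hz''d⟩ := exists_toward hc (hM1 ▸ hz'd)
            have hz''S : z'' ∈ S := by
              refine convexS hc htc hqc hloc htri hconn hyS hz'S ?_
              have : X.dist z'' z' = 1 := SimpleGraph.dist_eq_one_iff_adj.mpr hz''adj.symm
              omega
            have hxz'' : X.dist x z'' = p + M1 := ihM M1 (by omega) z'' hz''S hz''d
            have sub3a : ∀ w : V, X.Adj w z → X.dist x w + 1 = k → X.dist y w = M0 + 2 := by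
              intro w hwz hxw
              have hyw1 : X.dist y w ≤ M0 + 2 := by
                have := dist_le_adj hc hwz y; omega
              have hyw2 : M0 ≤ X.dist y w := by
                have := dist_le_adj hc hwz.symm y; omega
              rcases Nat.lt_or_ge (X.dist y w) (M0 + 1) with hyw | hyw
              · exfalso
                have hywM : X.dist y w = M0 := by omega
                have hwS : w ∈ S := by
                  refine convexS hc htc hqc hloc htri hconn hyS hz ?_
                  have : X.dist w z = 1 := SimpleGraph.dist_eq_one_iff_adj.mpr hwz
                  omega
                have := ihM M0 (by omega) w hwS hywM
                omega
              · rcases Nat.eq_or_lt_of_le hyw with hyw' | hyw'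
                · exfalso
                  obtain ⟨t, ht1, ht2, ht3⟩ := htc y z w hwz.symm (by omega)
                  have hytM0 : X.dist y t = M0 := by omega
                  have htS : t ∈ S := by
                    refine convexS hc htc hqc hloc htri hconn hyS hz ?_
                    have : X.dist t z = 1 := SimpleGraph.dist_eq_one_iff_adj.mpr ht1.symm
                    omega
                  have hxt : X.dist x t = p + M0 := ihM M0 (by omega) t htS hytM0
                  have : X.dist x t ≤ X.dist x w + 1 := dist_le_adj hc ht2.symm x
                  omega
                · omega
            have hzne : z ≠ z'' := by
              intro h; rw [h] at hMz; omega
            obtain ⟨r, hr1, hr2, hr3⟩ :=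
              hqc x z z'' z' hz'adj hz''adj.symm hzne (by omega) (by omega)
            have hyr : X.dist y r = M0 + 2 := sub3a r hr1.symm (by omega)
            have : X.dist y r ≤ X.dist y z'' + 1 := dist_le_adj hc hr2.symm y
            omega
  refine ⟨y, hyS, fun z hz => ?_⟩
  have := main (X.dist y z) z hz rfl
  omega

end SSec

end QMAux


/-- In a quasi-median graph `X`, a connected induced subgraph (with vertex set `S`) is gated
if and only if it is locally convex and contains its triangles. -/
theorem gated_iff_locallyConvex_and_contains_triangles
    {V : Type*} (X : SimpleGraph V) (hqm : QuasiMedian X)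
    (S : Set V) (hconn : (X.induce S).Connected) :
    (∀ x : V, ∃ y ∈ S, ∀ z ∈ S, X.dist x z = X.dist x y + X.dist y z) ↔
    ((∀ a b c d : V, X.Adj a b → X.Adj b c → X.Adj c d → X.Adj d a → a ≠ c → b ≠ d →
        a ∈ S → b ∈ S → c ∈ S → d ∈ S) ∧
     (∀ a b c : V, X.Adj a b → X.Adj b c → X.Adj a c → a ∈ S → b ∈ S → c ∈ S)) := by
  obtain ⟨hc, _hk4, _hk32, htc, hqc⟩ := hqm
  constructor
  · intro hgate
    constructor
    · intro a b c d hab hbc hcd hda hac hbd haS hbS hcS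
      obtain ⟨y, hyS, hgy⟩ := hgate d
      by_cases h0 : X.dist d y = 0
      · have hdy : d = y := hc.dist_eq_zero_iff.mp h0
        rw [hdy]; exact hyS
      · have h1 := hgy a haS
        have h2 := hgy c hcS
        have hda1 : X.dist d a = 1 := SimpleGraph.dist_eq_one_iff_adj.mpr hda
        have hdc1 : X.dist d c = 1 := SimpleGraph.dist_eq_one_iff_adj.mpr hcd.symm
        have e1 : y = a := hc.dist_eq_zero_iff.mp (by omega)
        have e2 : y = c := hc.dist_eq_zero_iff.mp (by omega)
        exact absurd (e1.symm.trans e2) hac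
    · intro a b c hab hbc hac haS hbS
      obtain ⟨y, hyS, hgy⟩ := hgate c
      by_cases h0 : X.dist c y = 0
      · have hcy : c = y := hc.dist_eq_zero_iff.mp h0
        rw [hcy]; exact hyS
      · have h1 := hgy a haS
        have h2 := hgy b hbS
        have hca : X.dist c a = 1 := SimpleGraph.dist_eq_one_iff_adj.mpr hac.symm
        have hcb : X.dist c b = 1 := SimpleGraph.dist_eq_one_iff_adj.mpr hbc.symm
        have e1 : y = a := hc.dist_eq_zero_iff.mp (by omega)
        have e2 : y = b := hc.dist_eq_zero_iff.mp (by omega)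
        exact absurd (e1.symm.trans e2) hab.ne
  · rintro ⟨hloc, htri⟩ x
    exact QMAux.gateS hc htc hqc hloc htri hconn x
end
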